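/- arXiv:1702.07342 — 11 statements merged into one kernel-verified Lean document; each statement's English description precedes it below -/
import Mathlib

section
/- For all integers n ≥ k ≥ 4, I_{C_k}(n) ≤ 2e · n^k/k^k. -/
/-- The number of vertex subsets `S` of `G` such that the induced subgraph `G[S]` is
isomorphic to `H`. -/
noncomputable def inducedCount {V W : Type*} [Fintype V] (G : SimpleGraph V) (H : SimpleGraph W) : ℕ :=
  Set.ncard {S : Finset V | Nonempty (G.induce (S : Set V) ≃g H)}

/-- `I_H(n)`: the maximum of `D_H(G)` over all graphs `G` on `n` vertices. -/
noncomputable def maxInducedCount {W : Type*} (H : SimpleGraph W) (n : ℕ) : ℕ :=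
  ⨆ G : SimpleGraph (Fin n), inducedCount G H

/-!
Read an induced `k`-cycle from any of its `k` vertices in either direction: this gives `2k`
distinct vertex lists `v₁ … v_k` in which `v_k` is a neighbour of `v₁` and `v₁ … v_{k-1}` is an
induced path, so every `v_{i+1}` with `i ≥ 2` lies outside the closed neighbourhoods of
`v₁, …, v_{i-1}`. Induced paths of length `j` that must avoid all but `s` vertices number at most
`(s / j) ^ j`: if the next vertex has `s₁` choices, at most `s - s₁` vertices remain, and
`s₁ ((s - s₁) / (j - 1)) ^ (j - 1) ≤ (s / j) ^ j` is AM-GM. For `v₁` of degree `d` this leaves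
`d² ((n - 1 - d) / (k - 3)) ^ (k - 3) ≤ 4 ((n - 1) / (k - 1)) ^ (k - 1)` lists, again by AM-GM,
hence `2k · D_k(G) ≤ 4 n ^ k / (k - 1) ^ (k - 1) ≤ 4e n ^ k / k ^ (k - 1)` since
`(1 + 1 / (k - 1)) ^ (k - 1) ≤ e`.
-/

open Finset
open scoped Fin.CommRing

theorem pow_mul_pow_le_add_div_pow (a b : ℕ) {p q : ℝ} (hp : 0 ≤ p) (hq : 0 ≤ q) :
    (p / a) ^ a * (q / b) ^ b ≤ ((p + q) / (a + b)) ^ (a + b) := by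
  rcases a.eq_zero_or_pos with rfl | ha
  · simpa using pow_le_pow_left₀ (by positivity) (by gcongr; linarith) b
  rcases b.eq_zero_or_pos with rfl | hb
  · simpa using pow_le_pow_left₀ (by positivity) (by gcongr; linarith) a
  have hab : (0 : ℝ) < a + b := by positivity
  have amgm := Real.geom_mean_le_arith_mean2_weighted (w₁ := a / (a + b)) (w₂ := b / (a + b))
    (p₁ := p / a) (p₂ := q / b) (by positivity) (by positivity) (by positivity) (by positivity)
    (by field_simp)
  have hmean : a / (a + b) * (p / a) + b / (a + b) * (q / b) = (p + q) / (a + b) := by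
    field_simp
  have hexp (c : ℕ) (x : ℝ) (hx : 0 ≤ x) : (x ^ ((c : ℝ) / (a + b))) ^ (a + b) = x ^ c := by
    rw [← Real.rpow_mul_natCast hx, Nat.cast_add, div_mul_cancel₀ _ hab.ne', Real.rpow_natCast]
  calc (p / a) ^ a * (q / b) ^ b
      = ((p / a) ^ ((a : ℝ) / (a + b)) * (q / b) ^ ((b : ℝ) / (a + b))) ^ (a + b) := by
        rw [mul_pow, hexp a _ (by positivity), hexp b _ (by positivity)]
    _ ≤ ((p + q) / (a + b)) ^ (a + b) :=
        pow_le_pow_left₀ (by positivity) (hmean ▸ amgm) _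

theorem add_one_pow_le_exp_mul_pow (n : ℕ) : ((n : ℝ) + 1) ^ n ≤ Real.exp 1 * n ^ n := by
  rcases n.eq_zero_or_pos with rfl | hn
  · simp
  calc ((n : ℝ) + 1) ^ n = (1 + (n : ℝ)⁻¹) ^ n * n ^ n := by
        rw [← mul_pow, add_mul, inv_mul_cancel₀ (by positivity), one_mul, add_comm]
    _ ≤ Real.exp 1 * n ^ n := by gcongr; exact Real.one_add_inv_pow_le_exp

namespace SimpleGraph

variable {V : Type*} [Fintype V] [DecidableEq V] (G : SimpleGraph V) [DecidableRel G.Adj]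

def closedNeighborFinset (v : V) : Finset V := insert v (G.neighborFinset v)

/-- The lists `w₁ … w_j` in which, with `w₀ = u`, each `w_{i+1}` is a neighbour of `w_i` outside
`F` and outside the closed neighbourhoods of `w₀, …, w_{i-1}`. -/
def inducedPathExtensions : ℕ → V → Finset V → Finset (List V)
  | 0, _, _ => {[]}
  | j + 1, u, F => (G.neighborFinset u \ F).biUnion fun w =>
      (inducedPathExtensions j w (F ∪ G.closedNeighborFinset u)).image (w :: ·)

theorem card_inducedPathExtensions_succ_le_of_le {j : ℕ}
    (ih : ∀ w F, (#(G.inducedPathExtensions j w F) : ℝ) ≤ (#Fᶜ / j) ^ j) (u : V) (F : Finset V) :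
    (#(G.inducedPathExtensions (j + 1) u F) : ℝ) ≤
      #(G.neighborFinset u \ F) * (#(F ∪ G.closedNeighborFinset u)ᶜ / j) ^ j := by
  rw [← nsmul_eq_mul, ← sum_const]
  calc (#(G.inducedPathExtensions (j + 1) u F) : ℝ)
      ≤ ∑ w ∈ G.neighborFinset u \ F,
          (#((G.inducedPathExtensions j w (F ∪ G.closedNeighborFinset u)).image (w :: ·)) : ℝ) := by
        exact_mod_cast card_biUnion_le
    _ ≤ _ := sum_le_sum fun w _ => (Nat.cast_le.mpr card_image_le).trans (ih _ _)

theorem card_inducedPathExtensions_le (j : ℕ) (u : V) (F : Finset V) :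
    (#(G.inducedPathExtensions j u F) : ℝ) ≤ (#Fᶜ / j) ^ j := by
  induction j generalizing u F with
  | zero => simp [inducedPathExtensions]
  | succ j ih =>
    set s := #(G.neighborFinset u \ F)
    have hsplit : #(F ∪ G.closedNeighborFinset u)ᶜ + s ≤ #Fᶜ := by
      rw [← card_union_of_disjoint]
      · refine card_le_card fun x hx => ?_
        simp only [closedNeighborFinset, mem_union, mem_compl, mem_sdiff, mem_insert] at hx ⊢
        tauto
      · refine Finset.disjoint_left.mpr fun x hx hx' => ?_
        simp only [closedNeighborFinset, mem_union, mem_compl, mem_sdiff, mem_insert] at hx hx'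
        tauto
    have hsplit' : (#(F ∪ G.closedNeighborFinset u)ᶜ : ℝ) ≤ #Fᶜ - s := by
      rw [le_sub_iff_add_le]; exact_mod_cast hsplit
    calc (#(G.inducedPathExtensions (j + 1) u F) : ℝ)
        ≤ s * (#(F ∪ G.closedNeighborFinset u)ᶜ / j) ^ j :=
          card_inducedPathExtensions_succ_le_of_le G ih u F
      _ ≤ s * ((#Fᶜ - s) / j) ^ j := by gcongr
      _ ≤ (#Fᶜ / (j + 1 : ℕ)) ^ (j + 1) := by
          have amgm := pow_mul_pow_le_add_div_pow 1 j (Nat.cast_nonneg s)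
            (hsplit'.trans' (Nat.cast_nonneg _))
          rw [add_sub_cancel, add_comm 1 j, Nat.cast_one, div_one, pow_one] at amgm
          rwa [Nat.cast_succ, add_comm (j : ℝ)]

theorem ofFn_mem_inducedPathExtensions {g : ℕ → V} {N : ℕ}
    (hadj : ∀ i < N, G.Adj (g i) (g (i + 1)))
    (hind : ∀ b c, b + 2 ≤ c → c ≤ N → g c ∉ G.closedNeighborFinset (g b)) (j a : ℕ)
    (F : Finset V) (hjN : a + j ≤ N) (hF : ∀ c, a < c → c ≤ N → g c ∉ F) :
    List.ofFn (fun i : Fin j => g (a + i + 1)) ∈ G.inducedPathExtensions j (g a) F := by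
  induction j generalizing a F with
  | zero => simp [inducedPathExtensions]
  | succ j ih =>
    rw [List.ofFn_succ]
    refine mem_biUnion.mpr ⟨g (a + 1), ?_, mem_image.mpr ⟨_, ih (a + 1) _ (by omega) ?_, ?_⟩⟩
    · simpa using ⟨hadj a (by omega), hF (a + 1) (by omega) (by omega)⟩
    · intro c hac hcN
      rw [mem_union, not_or]
      exact ⟨hF c (by omega) hcN, hind a c (by omega) hcN⟩
    · simp only [Fin.val_zero, add_zero, Fin.val_succ, add_assoc, add_comm 1]

/-- Every induced `(m + 3)`-cycle, read around from any vertex, is one of these lists. -/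
def cycleCandidates (m : ℕ) : Finset (List V) :=
  univ.biUnion fun v => (G.inducedPathExtensions (m + 1) v ∅).biUnion fun t =>
    (G.neighborFinset v).image fun w => v :: t ++ [w]

theorem card_cycleCandidates_le (m : ℕ) :
    (#(G.cycleCandidates m) : ℝ) ≤ 4 * Fintype.card V ^ (m + 3) / (m + 2) ^ (m + 2) := by
  set n := Fintype.card V
  have hvertex (v : V) : (#((G.inducedPathExtensions (m + 1) v ∅).biUnion fun t =>
      (G.neighborFinset v).image fun w => v :: t ++ [w]) : ℝ) ≤
        4 * ((n : ℝ) / (m + 2)) ^ (m + 2) := by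
    set d := #(G.neighborFinset v)
    have hcompl : #(∅ ∪ G.closedNeighborFinset v)ᶜ + (d + 1) = n := by
      rw [empty_union, closedNeighborFinset,
        ← card_insert_of_notMem (G.notMem_neighborFinset_self v), card_compl_add_card]
    have hcompl' : (#(∅ ∪ G.closedNeighborFinset v)ᶜ : ℝ) = n - 1 - d := by
      rw [← hcompl]; push_cast; ring
    have hpaths := G.card_inducedPathExtensions_succ_le_of_le
      (G.card_inducedPathExtensions_le m) v ∅
    rw [sdiff_empty, hcompl'] at hpaths
    have amgm := pow_mul_pow_le_add_div_pow 2 m (Nat.cast_nonneg d)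
      (hcompl' ▸ Nat.cast_nonneg _)
    rw [Nat.cast_ofNat, add_sub_cancel, add_comm 2 m, add_comm (2 : ℝ)] at amgm
    have hn : (1 : ℝ) ≤ n := by exact_mod_cast (by omega : 1 ≤ n)
    calc _ ≤ (#(G.inducedPathExtensions (m + 1) v ∅) : ℝ) * d := by
          exact_mod_cast card_biUnion_le_card_mul _ _ _ fun t _ => card_image_le
      _ ≤ d * ((n - 1 - d) / m) ^ m * d := by gcongr
      _ = 4 * ((d / 2) ^ 2 * ((n - 1 - d) / m) ^ m) := by ring
      _ ≤ 4 * ((n - 1) / (m + 2)) ^ (m + 2) := by gcongr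
      _ ≤ 4 * (n / (m + 2)) ^ (m + 2) := by gcongr; linarith
  calc (#(G.cycleCandidates m) : ℝ) ≤ ∑ v : V, 4 * ((n : ℝ) / (m + 2)) ^ (m + 2) := by
        refine (Nat.cast_le.mpr card_biUnion_le).trans ?_
        push_cast
        exact sum_le_sum fun v _ => hvertex v
    _ = 4 * n ^ (m + 3) / (m + 2) ^ (m + 2) := by
        rw [sum_const, card_univ, nsmul_eq_mul, div_pow]; ring

def cycleGraphDihedral {k : ℕ} [NeZero k] (c : Fin k) : Bool → cycleGraph k ≃g cycleGraph k
  | true => ⟨Equiv.addLeft c, by simp [cycleGraph_adj']⟩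
  | false => ⟨Equiv.subLeft c, by simp [cycleGraph_adj', or_comm]⟩

theorem cycleGraphDihedral_injective (m : ℕ) :
    Function.Injective fun p : Fin (m + 3) × Bool => cycleGraphDihedral p.1 p.2 := by
  rintro ⟨c, r⟩ ⟨c', r'⟩ h
  have hc : c = c' := by
    cases r <;> cases r' <;> simpa [cycleGraphDihedral] using congr($h 0)
  subst hc
  have hne : c + 1 ≠ c - 1 := fun h1 => by
    have h2 : (2 : Fin (m + 3)) = 0 := by linear_combination h1
    simp [Fin.ext_iff, Nat.mod_eq_of_lt (show 2 < m + 3 by omega)] at h2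
  cases r <;> cases r'
  · rfl
  · exact (hne.symm congr($h 1)).elim
  · exact (hne congr($h 1)).elim
  · rfl

theorem cycleGraph_adj_natCast_iff {m b c : ℕ} (hbc : b ≤ c) (hc : c < m + 3) :
    (cycleGraph (m + 3)).Adj b c ↔ c = b + 1 ∨ b = 0 ∧ c = m + 2 := by
  have hval {a : ℕ} (ha : a < m + 3) : ((a : Fin (m + 3)) : ℕ) = a := Fin.val_cast_of_lt ha
  have hle : (b : Fin (m + 3)) ≤ c := by rw [Fin.le_def, hval (by omega), hval hc]; exact hbc
  rw [cycleGraph_adj', Fin.sub_val_of_le hle, hval hc, hval (by omega)]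
  rcases hbc.lt_or_eq with hlt | rfl
  · have hlt' : (b : Fin (m + 3)) < c := by rw [Fin.lt_def, hval hc, hval (by omega)]; exact hlt
    rw [Fin.coe_sub_iff_lt.mpr hlt', hval hc, hval (by omega)]
    omega
  · simp only [sub_self, Fin.val_zero]; omega

variable {G} in
theorem ofFn_mem_cycleCandidates {m : ℕ} (f : cycleGraph (m + 3) ↪g G) :
    List.ofFn f ∈ G.cycleCandidates m := by
  set g : ℕ → V := fun i => f i
  have hofFn :
      List.ofFn f = g 0 :: List.ofFn (fun i : Fin (m + 1) => g (i + 1)) ++ [g (m + 2)] := by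
    rw [List.ofFn_succ, List.ofFn_succ', List.concat_eq_append, List.cons_append]
    congr 3 <;> try funext i
    · exact congrArg f (Fin.ext (by rw [Fin.val_cast_of_lt (by omega)]; simp))
    · exact congrArg f (Fin.ext (by rw [Fin.val_cast_of_lt (by omega)]; simp))
  have hval {a : ℕ} (ha : a < m + 3) : ((a : Fin (m + 3)) : ℕ) = a := Fin.val_cast_of_lt ha
  have hadj {b c : ℕ} (hbc : b ≤ c) (hc : c < m + 3) :
      G.Adj (g b) (g c) ↔ c = b + 1 ∨ b = 0 ∧ c = m + 2 :=
    f.map_adj_iff.trans (cycleGraph_adj_natCast_iff hbc hc)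
  have hinj {b c : ℕ} (hb : b < m + 3) (hc : c < m + 3) : g c = g b ↔ c = b := by
    rw [f.injective.eq_iff, Fin.ext_iff, hval hb, hval hc]
  have hpath := G.ofFn_mem_inducedPathExtensions (g := g) (N := m + 1)
    (fun i hi => (hadj (by omega) (by omega)).mpr (Or.inl rfl))
    (fun b c hbc hc => by
      simp only [closedNeighborFinset, mem_insert, mem_neighborFinset,
        hinj (by omega : b < m + 3) (by omega : c < m + 3), hadj (by omega : b ≤ c) (by omega)]
      omega)
    (m + 1) 0 ∅ (by omega) (by simp)
  simp only [zero_add] at hpath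
  rw [hofFn]
  exact mem_biUnion.mpr ⟨g 0, mem_univ _, mem_biUnion.mpr ⟨_, hpath,
    mem_image.mpr ⟨g (m + 2), (mem_neighborFinset ..).mpr ((hadj (by omega) (by omega)).mpr
      (Or.inr ⟨rfl, rfl⟩)), rfl⟩⟩⟩

theorem two_mul_le_card_cycleCandidates_toFinset_eq {m : ℕ} {S : Finset V}
    (φ : G.induce (S : Set V) ≃g cycleGraph (m + 3)) :
    2 * (m + 3) ≤ #{l ∈ G.cycleCandidates m | l.toFinset = S} := by
  let e (p : Fin (m + 3) × Bool) : cycleGraph (m + 3) ↪g G :=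
    (Embedding.induce (S : Set V)).comp ((cycleGraphDihedral p.1 p.2).trans φ.symm).toRelEmbedding
  have hmaps (p : Fin (m + 3) × Bool) :
      List.ofFn (e p) ∈ {l ∈ G.cycleCandidates m | l.toFinset = S} := by
    refine mem_filter.mpr ⟨ofFn_mem_cycleCandidates (e p), Finset.ext fun x => ?_⟩
    simp only [List.mem_toFinset, List.mem_ofFn]
    refine ⟨fun ⟨i, hi⟩ => hi ▸ (φ.symm _).2, fun hx => ?_⟩
    exact ⟨(cycleGraphDihedral p.1 p.2).symm (φ ⟨x, hx⟩), by simp [e]⟩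
  have hinj : Function.Injective fun p => List.ofFn (e p) := fun p q h => by
    have hfun := List.ofFn_injective h
    refine cycleGraphDihedral_injective m (RelIso.ext fun i => ?_)
    exact φ.symm.injective (Subtype.ext (congr_fun hfun i))
  calc 2 * (m + 3) = #(univ : Finset (Fin (m + 3) × Bool)) := by simp [mul_comm]
    _ ≤ _ := card_le_card_of_injOn _ (fun p _ => hmaps p) hinj.injOn

theorem two_mul_mul_inducedCount_cycleGraph_le (m : ℕ) :
    2 * (m + 3) * inducedCount G (cycleGraph (m + 3)) ≤ #(G.cycleCandidates m) := by
  classical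
  set A : Finset (Finset V) := {S | Nonempty (G.induce (S : Set V) ≃g cycleGraph (m + 3))}
  have hA : inducedCount G (cycleGraph (m + 3)) = #A := by
    rw [inducedCount, ← Set.ncard_coe_finset, coe_filter]
    simp
  have hdouble := card_mul_le_card_mul (fun S (l : List V) => l.toFinset = S)
    (s := A) (t := G.cycleCandidates m) (m := 2 * (m + 3)) (n := 1)
    (fun S hS => two_mul_le_card_cycleCandidates_toFinset_eq G (mem_filter.mp hS).2.some)
    (fun l _ => card_le_one.mpr fun S hS S' hS' =>
      (mem_filter.mp hS).2.symm.trans (mem_filter.mp hS').2)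
  rw [hA, mul_comm]
  simpa using hdouble

end SimpleGraph

theorem maxInducedCount_cycle_le_general (n k : ℕ) (hk : 4 ≤ k) :
    (maxInducedCount (SimpleGraph.cycleGraph k) n : ℝ) ≤
      2 * Real.exp 1 * (n : ℝ) ^ k / (k : ℝ) ^ k := by
  obtain ⟨m, rfl⟩ : ∃ m, k = m + 3 := ⟨k - 3, by omega⟩
  obtain ⟨G, hG⟩ := exists_eq_ciSup_of_finite
    (f := fun G : SimpleGraph (Fin n) => inducedCount G (SimpleGraph.cycleGraph (m + 3)))
  rw [maxInducedCount, ← hG]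
  classical
  have hcount : (2 * (m + 3) * inducedCount G (SimpleGraph.cycleGraph (m + 3)) : ℝ) ≤
      4 * n ^ (m + 3) / (m + 2) ^ (m + 2) := by
    simpa using (Nat.cast_le.mpr (G.two_mul_mul_inducedCount_cycleGraph_le m)).trans
      (G.card_cycleCandidates_le m)
  have he := add_one_pow_le_exp_mul_pow (m + 2)
  set D := (inducedCount G (SimpleGraph.cycleGraph (m + 3)) : ℝ)
  push_cast at he ⊢
  rw [le_div_iff₀ (by positivity)] at hcount ⊢
  calc D * (m + 3) ^ (m + 3) = D * (m + 3) * ((m + 2) + 1) ^ (m + 2) := by ring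
    _ ≤ D * (m + 3) * (Real.exp 1 * (m + 2) ^ (m + 2)) := by gcongr
    _ = Real.exp 1 * (2 * (m + 3) * D * (m + 2) ^ (m + 2)) / 2 := by ring
    _ ≤ Real.exp 1 * (4 * n ^ (m + 3)) / 2 := by gcongr
    _ = 2 * Real.exp 1 * n ^ (m + 3) := by ring

/-- For all integers `n ≥ k ≥ 4`, `I_{C_k}(n) ≤ 2e·n^k/k^k`. -/
theorem maxInducedCount_cycle_le (n k : ℕ) (hk : 4 ≤ k) (hkn : k ≤ n) :
    (maxInducedCount (SimpleGraph.cycleGraph k) n : ℝ) ≤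
      2 * Real.exp 1 * (n : ℝ) ^ k / (k : ℝ) ^ k :=
  maxInducedCount_cycle_le_general n k hk
end

section
/- Let n ≥ k ≥ 4 be integers, let G be a graph on n vertices and let v be a vertex of G of degree d_v. Then the number of induced k-cycles of G containing v satisfies D_k(G,v) ≤ (1/2) · d_v^2 · ((n − d_v − 1)/(k−3))^{k−3}. -/
/-- `D_k(G,v)`: the number of vertex subsets `S` of `G` containing `v` such that the induced
subgraph `G[S]` is isomorphic to the `k`-cycle `C_k`. -/
noncomputable def inducedCycleCountAt {V : Type*} [Fintype V] (G : SimpleGraph V) (k : ℕ)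
    (v : V) : ℕ :=
  Set.ncard {S : Finset V | v ∈ S ∧ Nonempty (G.induce (S : Set V) ≃g SimpleGraph.cycleGraph k)}

/-!
Each induced `k`-cycle through `v` can be traversed from `v` in two directions. A traversal
`v, a, p₁, …, p_ℓ, b` with `ℓ = k - 3` is determined by the neighbours `a, b` of `v` and the path
`p`, which is an induced path among the `n - d_v - 1` non-neighbours of `v` such that `a, p` is
still an induced path. At most `(m / ℓ) ^ ℓ` such paths lie in a set of `m` vertices: if `s` of
these vertices are adjacent to `a`, then `p₁` is one of them, the rest of `p` lies among the
`m - s` others and starts next to `p₁`, and `s ((m - s) / (ℓ - 1)) ^ (ℓ - 1) ≤ (m / ℓ) ^ ℓ`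
by AM-GM.
-/

open Finset SimpleGraph

theorem mul_div_pow_le_add_div_pow {x y : ℝ} (hx : 0 ≤ x) (hy : 0 ≤ y) (ℓ : ℕ) :
    x * (y / ℓ) ^ ℓ ≤ ((x + y) / (ℓ + 1)) ^ (ℓ + 1) := by
  rcases Nat.eq_zero_or_pos ℓ with rfl | hℓ
  · simpa using hy
  rcases hy.eq_or_lt with rfl | hy
  · simp [zero_pow hℓ.ne']
    positivity
  set u := y / ℓ
  set m := (x + y) / (ℓ + 1)
  have hu : 0 < u := by positivity
  -- Bernoulli's inequality for `(m / u) ^ (ℓ + 1)`, whose linear part is `x / u`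
  -- because `(ℓ + 1) m = x + ℓ u`.
  have hlin : 1 + ((ℓ + 1 : ℕ) : ℝ) * (m / u - 1) = x / u := by
    simp only [m, u]
    field_simp
    push_cast
    ring
  have bernoulli := one_add_mul_le_pow (a := m / u - 1)
    (by linarith [show 0 ≤ m / u by positivity]) (ℓ + 1)
  rw [hlin, add_sub_cancel, div_pow, div_le_div_iff₀ hu (by positivity), pow_succ] at bernoulli
  exact le_of_mul_le_mul_right (by linarith) hu

theorem Fin.add_one_ne_sub_one {n : ℕ} (r : Fin (n + 3)) : r + 1 ≠ r - 1 := by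
  rw [sub_eq_add_neg, Ne, add_right_inj, eq_neg_iff_add_eq_zero, Fin.ext_iff, Fin.val_add]
  simp [Nat.mod_eq_of_lt]

namespace SimpleGraph

theorem cycleGraph_adj_iff_val {n : ℕ} {i j : Fin (n + 2)} :
    (cycleGraph (n + 2)).Adj i j ↔ i.val + 1 = j.val ∨ j.val + 1 = i.val ∨
      (i.val = 0 ∧ j.val = n + 1) ∨ (j.val = 0 ∧ i.val = n + 1) := by
  rw [cycleGraph_adj']
  have := i.isLt
  have := j.isLt
  rcases lt_trichotomy i j with h | rfl | h
  · rw [Fin.coe_sub_iff_lt.mpr h, Fin.sub_val_of_le h.le]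
    rw [Fin.lt_def] at h
    omega
  · simp only [sub_self, Fin.val_zero]
    omega
  · rw [Fin.sub_val_of_le h.le, Fin.coe_sub_iff_lt.mpr h]
    rw [Fin.lt_def] at h
    omega

theorem comap_cycleGraph_castSucc_succ {n : ℕ} :
    (cycleGraph (n + 3)).comap (fun j : Fin (n + 1) => j.castSucc.succ) = pathGraph (n + 1) := by
  ext i j
  simp only [comap_adj, cycleGraph_adj_iff_val, pathGraph_adj, Fin.val_succ, Fin.val_castSucc]
  omega

def cycleGraph.addLeft {n : ℕ} (r : Fin (n + 2)) : cycleGraph (n + 2) ≃g cycleGraph (n + 2) where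
  toEquiv := Equiv.addLeft r
  map_rel_iff' := by simp [cycleGraph_adj]

def cycleGraph.subLeft {n : ℕ} (r : Fin (n + 2)) : cycleGraph (n + 2) ≃g cycleGraph (n + 2) where
  toEquiv := Equiv.subLeft r
  map_rel_iff' := by simp [cycleGraph_adj, or_comm]

variable {V : Type*} (G : SimpleGraph V)

theorem comap_cons_eq_pathGraph_iff {n : ℕ} {a : V} {p : Fin (n + 1) → V} :
    G.comap (Fin.cons a p : Fin (n + 2) → V) = pathGraph (n + 2) ↔
      G.Adj a (p 0) ∧ (∀ i : Fin n, ¬ G.Adj a (p i.succ)) ∧ G.comap p = pathGraph (n + 1) := by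
  simp only [SimpleGraph.ext_iff, funext_iff, eq_iff_iff, comap_adj, Fin.forall_fin_succ,
    Fin.cons_zero, Fin.cons_succ, pathGraph_adj, Fin.val_succ, Fin.val_zero, G.loopless.irrefl]
  grind [adj_comm]

variable [Fintype V]

open Classical in
noncomputable def inducedPathsFrom (a : V) (M : Finset V) (ℓ : ℕ) : Finset (Fin ℓ → V) :=
  {q | (∀ i, q i ∈ M) ∧ G.comap (Fin.cons a q : Fin (ℓ + 1) → V) = pathGraph (ℓ + 1)}

variable {G} in
theorem mem_inducedPathsFrom {a : V} {M : Finset V} {ℓ : ℕ} {q : Fin ℓ → V} :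
    q ∈ G.inducedPathsFrom a M ℓ ↔
      (∀ i, q i ∈ M) ∧ G.comap (Fin.cons a q : Fin (ℓ + 1) → V) = pathGraph (ℓ + 1) := by
  simp [inducedPathsFrom]

theorem card_inducedPathsFrom_succ_le [DecidableRel G.Adj] (a : V) (M : Finset V) (ℓ : ℕ) :
    #(G.inducedPathsFrom a M (ℓ + 1)) ≤
      ∑ x ∈ M.filter (G.Adj a), #(G.inducedPathsFrom x (M.filter (¬ G.Adj a ·)) ℓ) := by
  rw [← card_sigma]
  refine card_le_card_of_injOn (fun q => ⟨q 0, Fin.tail q⟩) (fun q hq => ?_) ?_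
  · obtain ⟨hM, hpath⟩ := mem_inducedPathsFrom.mp hq
    obtain ⟨hadj, hnadj, htail⟩ := G.comap_cons_eq_pathGraph_iff.mp hpath
    rw [mem_coe, mem_sigma, mem_filter, mem_inducedPathsFrom]
    exact ⟨⟨hM 0, hadj⟩, fun i => mem_filter.mpr ⟨hM _, hnadj i⟩, by rwa [Fin.cons_self_tail]⟩
  · intro q _ q' _ h
    simp only [Sigma.mk.inj_iff, heq_iff_eq] at h
    rw [← Fin.cons_self_tail q, ← Fin.cons_self_tail q', h.1, h.2]

theorem card_inducedPathsFrom_le [DecidableRel G.Adj] (a : V) (M : Finset V) (ℓ : ℕ) :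
    (#(G.inducedPathsFrom a M ℓ) : ℝ) ≤ (#M / ℓ) ^ ℓ := by
  induction ℓ generalizing a M with
  | zero => simpa using card_le_univ (G.inducedPathsFrom a M 0)
  | succ ℓ ih =>
    set A := M.filter (G.Adj a)
    set M' := M.filter (¬ G.Adj a ·)
    calc (#(G.inducedPathsFrom a M (ℓ + 1)) : ℝ)
        ≤ ∑ x ∈ A, (#(G.inducedPathsFrom x M' ℓ) : ℝ) := by
          exact_mod_cast G.card_inducedPathsFrom_succ_le a M ℓ
      _ ≤ ∑ _x ∈ A, ((#M' : ℝ) / ℓ) ^ ℓ := sum_le_sum fun x _ => ih x M'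
      _ = #A * ((#M' : ℝ) / ℓ) ^ ℓ := by rw [sum_const, nsmul_eq_mul]
      _ ≤ ((#A + #M' : ℝ) / (ℓ + 1)) ^ (ℓ + 1) :=
          mul_div_pow_le_add_div_pow (by positivity) (by positivity) ℓ
      _ = (#M / ↑(ℓ + 1)) ^ (ℓ + 1) := by
          rw [← Nat.cast_add, card_filter_add_card_filter_not]
          push_cast
          rfl

open Classical in
noncomputable def inducedCyclesThrough (k : ℕ) (v : V) : Finset (Finset V) :=
  {S | v ∈ S ∧ Nonempty (G.induce (S : Set V) ≃g cycleGraph k)}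

variable {G} in
theorem mem_inducedCyclesThrough {k : ℕ} {v : V} {S : Finset V} :
    S ∈ G.inducedCyclesThrough k v ↔ v ∈ S ∧ Nonempty (G.induce (S : Set V) ≃g cycleGraph k) := by
  simp [inducedCyclesThrough]

theorem inducedCycleCountAt_eq_card (k : ℕ) (v : V) :
    inducedCycleCountAt G k v = #(G.inducedCyclesThrough k v) := by
  rw [inducedCycleCountAt, inducedCyclesThrough, ← Set.ncard_coe_finset, coe_filter]
  simp

open Classical in
noncomputable def rootedInducedCycles (ℓ : ℕ) (v : V) : Finset (Fin (ℓ + 3) → V) :=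
  {c | c 0 = v ∧ ∃ f : cycleGraph (ℓ + 3) ↪g G, ⇑f = c}

variable {G} in
theorem mem_rootedInducedCycles {ℓ : ℕ} {v : V} {c : Fin (ℓ + 3) → V} :
    c ∈ G.rootedInducedCycles ℓ v ↔ c 0 = v ∧ ∃ f : cycleGraph (ℓ + 3) ↪g G, ⇑f = c := by
  simp [rootedInducedCycles]

variable [DecidableEq V]

theorem image_mem_inducedCyclesThrough {ℓ : ℕ} {v : V} {c : Fin (ℓ + 3) → V}
    (hc : c ∈ G.rootedInducedCycles ℓ v) : univ.image c ∈ G.inducedCyclesThrough (ℓ + 3) v := by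
  obtain ⟨hv, f, rfl⟩ := mem_rootedInducedCycles.mp hc
  rw [mem_inducedCyclesThrough]
  refine ⟨mem_image.mpr ⟨0, mem_univ _, hv⟩, ?_⟩
  rw [coe_image, coe_univ, Set.image_univ]
  exact ⟨f.isoInduceRange.symm⟩

theorem two_le_card_rootedInducedCycles_filter_image_eq {ℓ : ℕ} {v : V} {S : Finset V}
    (hvS : v ∈ S) (φ : G.induce (S : Set V) ≃g cycleGraph (ℓ + 3)) :
    2 ≤ #{c ∈ G.rootedInducedCycles ℓ v | univ.image c = S} := by
  set r := φ ⟨v, hvS⟩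
  let copy (σ : cycleGraph (ℓ + 3) ≃g cycleGraph (ℓ + 3)) : cycleGraph (ℓ + 3) ↪g G :=
    σ.toEmbedding.trans (φ.symm.toEmbedding.trans (Embedding.induce _))
  have copy_mem (σ) (hσ : σ 0 = r) :
      ⇑(copy σ) ∈ {c ∈ G.rootedInducedCycles ℓ v | univ.image c = S} := by
    refine mem_filter.mpr ⟨mem_rootedInducedCycles.mpr ⟨?_, _, rfl⟩, ?_⟩
    · simp [copy, hσ, r]
    · ext x
      simp only [mem_image, mem_univ, true_and]
      refine ⟨?_, fun hx => ⟨σ.symm (φ ⟨x, hx⟩), by simp [copy]⟩⟩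
      rintro ⟨j, rfl⟩
      exact (φ.symm (σ j)).2
  refine one_lt_card.mpr ⟨_, copy_mem (cycleGraph.addLeft r) (add_zero r),
    _, copy_mem (cycleGraph.subLeft r) (sub_zero r), fun h => ?_⟩
  have h1 : ((φ.symm (r + 1) : S) : V) = φ.symm (r - 1) := congrFun h 1
  exact Fin.add_one_ne_sub_one r (φ.symm.injective (Subtype.coe_injective h1))

theorem two_mul_card_inducedCyclesThrough_le (ℓ : ℕ) (v : V) :
    2 * #(G.inducedCyclesThrough (ℓ + 3) v) ≤ #(G.rootedInducedCycles ℓ v) := by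
  refine mul_card_image_le_card_of_maps_to (fun c hc => G.image_mem_inducedCyclesThrough hc) 2
    fun S hS => ?_
  obtain ⟨hvS, ⟨φ⟩⟩ := mem_inducedCyclesThrough.mp hS
  exact G.two_le_card_rootedInducedCycles_filter_image_eq hvS φ

theorem card_rootedInducedCycles_le [DecidableRel G.Adj] (ℓ : ℕ) (v : V) :
    (#(G.rootedInducedCycles ℓ v) : ℝ) ≤ G.degree v ^ 2 * (Gᶜ.degree v / ℓ) ^ ℓ := by
  set N := G.neighborFinset v
  set M := Gᶜ.neighborFinset v
  -- `c` is recorded by `c 1`, `c (ℓ + 2)` and the path `c 2, …, c (ℓ + 1)`; here `e j = j + 1`.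
  let e : Fin (ℓ + 1) → Fin (ℓ + 3) := fun j => j.castSucc.succ
  let encode (c : Fin (ℓ + 3) → V) : Σ _ : V × V, Fin ℓ → V :=
    ⟨(c (e 0), c (Fin.last _)), Fin.tail (c ∘ e)⟩
  have maps (c) (hc : c ∈ G.rootedInducedCycles ℓ v) :
      encode c ∈ (N ×ˢ N).sigma fun ab => G.inducedPathsFrom ab.1 M ℓ := by
    obtain ⟨hv, f, rfl⟩ := mem_rootedInducedCycles.mp hc
    have adj_iff (i j) : G.Adj (f i) (f j) ↔ _ := f.map_adj_iff.trans cycleGraph_adj_iff_val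
    simp only [mem_sigma, mem_product, mem_neighborFinset, N, mem_inducedPathsFrom, M, compl_adj,
      ne_eq, ← hv, adj_iff, f.injective.eq_iff, Fin.ext_iff, encode, Fin.tail, Function.comp_apply]
    refine ⟨⟨by simp [e], by simp⟩, fun i => ⟨by simp [e], by simp [e]; omega⟩, ?_⟩
    show G.comap (Fin.cons ((f ∘ e) 0) (Fin.tail (f ∘ e))) = _
    rw [Fin.cons_self_tail, ← comap_comap, f.comap_eq, comap_cycleGraph_castSucc_succ]
  have inj : Set.InjOn encode (G.rootedInducedCycles ℓ v) := by
    intro c hc c' hc' h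
    simp only [encode, Sigma.mk.inj_iff, Prod.mk.injEq, heq_iff_eq] at h
    obtain ⟨⟨h1, hlast⟩, htail⟩ := h
    have hmid (i) : c (e i) = c' (e i) := by
      cases i using Fin.cases with
      | zero => exact h1
      | succ i => exact congrFun htail i
    funext j
    cases j using Fin.cases with
    | zero => rw [(mem_rootedInducedCycles.mp hc).1, (mem_rootedInducedCycles.mp hc').1]
    | succ j =>
      cases j using Fin.lastCases with
      | last => exact hlast
      | cast i => exact hmid i
  calc (#(G.rootedInducedCycles ℓ v) : ℝ)
      ≤ #((N ×ˢ N).sigma fun ab => G.inducedPathsFrom ab.1 M ℓ) := by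
        exact_mod_cast card_le_card_of_injOn encode maps inj
    _ = ∑ ab ∈ N ×ˢ N, (#(G.inducedPathsFrom ab.1 M ℓ) : ℝ) := by
        rw [card_sigma]
        push_cast
        rfl
    _ ≤ ∑ _ab ∈ N ×ˢ N, ((#M : ℝ) / ℓ) ^ ℓ :=
        sum_le_sum fun ab _ => G.card_inducedPathsFrom_le _ _ _
    _ = G.degree v ^ 2 * (Gᶜ.degree v / ℓ) ^ ℓ := by
        rw [sum_const, card_product, card_neighborFinset_eq_degree, card_neighborFinset_eq_degree,
          nsmul_eq_mul]
        push_cast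
        ring

end SimpleGraph

theorem cycleCountAt_le_degree_general (n k : ℕ) (hk : 4 ≤ k)
    (G : SimpleGraph (Fin n)) [DecidableRel G.Adj] (v : Fin n) :
    (inducedCycleCountAt G k v : ℝ) ≤
      1 / 2 * (G.degree v : ℝ) ^ 2 *
        (((n : ℝ) - (G.degree v : ℝ) - 1) / ((k : ℝ) - 3)) ^ (k - 3) := by
  obtain ⟨ℓ, rfl⟩ : ∃ ℓ, k = ℓ + 3 := ⟨k - 3, by omega⟩
  have hdeg : (Gᶜ.degree v : ℝ) = n - G.degree v - 1 := by
    have := G.degree_lt_card_verts v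
    rw [degree_compl, Fintype.card_fin] at *
    rw [Nat.cast_sub (by omega), Nat.cast_sub (by omega)]
    push_cast
    ring
  have hcount : (2 * #(G.inducedCyclesThrough (ℓ + 3) v) : ℝ) ≤ #(G.rootedInducedCycles ℓ v) := by
    exact_mod_cast G.two_mul_card_inducedCyclesThrough_le ℓ v
  have hrooted := G.card_rootedInducedCycles_le ℓ v
  rw [inducedCycleCountAt_eq_card, Nat.add_sub_cancel]
  push_cast
  rw [add_sub_cancel_right, ← hdeg]
  linarith

/-- For `n ≥ k ≥ 4`, a graph `G` on `n` vertices and a vertex `v` of degree `d_v`,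
`D_k(G,v) ≤ (1/2)·d_v²·((n − d_v − 1)/(k−3))^(k−3)`. -/
theorem cycleCountAt_le_degree (n k : ℕ) (hk : 4 ≤ k) (hkn : k ≤ n)
    (G : SimpleGraph (Fin n)) [DecidableRel G.Adj] (v : Fin n) :
    (inducedCycleCountAt G k v : ℝ) ≤
      1 / 2 * (G.degree v : ℝ) ^ 2 *
        (((n : ℝ) - (G.degree v : ℝ) - 1) / ((k : ℝ) - 3)) ^ (k - 3) :=
  cycleCountAt_le_degree_general n k hk G v
end

section
/- For positive integers k and n, let P be a family of injective functions from [k] = {1,…,k} to [n] = {1,…,n}. For 0 ≤ i < k and every tuple ā = (a_1,…,a_i) of pairwise distinct elements of [n], let P_ā = {p ∈ P : p(1) = a_1, …, p(i) = a_i}, let X_ā = {m ∈ [n] : m ≠ p(j+1) for every 0 ≤ j ≤ i−1 and every p ∈ P_{(a_1,…,a_j)}}, and let Q_ā = {p : [k] → [n] : p(j) ∈ X_ā for every i < j ≤ k}. Suppose P satisfies the exclusion property: for every 1 ≤ i < k and every such tuple ā of length i, P_ā ⊆ Q_ā. Then |P| ≤ (n/k)^k. -/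
/-!
A prefix `ā = (a₁, …, aᵢ)` is represented by any `p : Fin k → α` whose first `i` values are
`ā`: then `P_ā = prefixCylinder P i p` and `X_ā = allowedValues P i p`. Induct on the number
`d` of free coordinates. Split `P_ā` by the value `b` at coordinate `i`, and let `A` be the set
of values that occur. The exclusion property gives `A ⊆ X_ā`, and `X_{āb} = X_ā \ A` for every
`b ∈ A`, so `|P_ā| ≤ |A| ((|X_ā| - |A|) / d) ^ d ≤ (|X_ā| / (d + 1)) ^ (d + 1)` by AM-GM, which
in this shape is Bernoulli's inequality.
-/

open Finset

theorem pow_mul_sub_le_pow (s : ℕ) {y m : ℝ} (hy : 0 ≤ y) (hm : 0 ≤ m) :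
    y ^ s * ((s + 1) * m - s * y) ≤ m ^ (s + 1) := by
  rcases hy.eq_or_lt with rfl | hy
  · rcases s.eq_zero_or_pos with rfl | hs
    · simp
    · simp [zero_pow hs.ne', pow_nonneg hm]
  have key := one_add_mul_le_pow (a := m / y - 1) (by linarith [div_nonneg hm hy.le]) (s + 1)
  rw [add_sub_cancel, div_pow, le_div_iff₀ (by positivity)] at key
  calc y ^ s * ((s + 1) * m - s * y) = (1 + (s + 1 : ℕ) * (m / y - 1)) * y ^ (s + 1) := by
        field_simp; push_cast; ring
    _ ≤ m ^ (s + 1) := key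

theorem mul_sub_div_pow_le (s : ℕ) {t x : ℝ} (ht : 0 ≤ t) (htx : t ≤ x) :
    t * ((x - t) / s) ^ s ≤ (x / (s + 1)) ^ (s + 1) := by
  rcases s.eq_zero_or_pos with rfl | hs
  · simpa using htx
  have hs₀ : (s : ℝ) ≠ 0 := by positivity
  convert pow_mul_sub_le_pow s (div_nonneg (sub_nonneg.2 htx) (Nat.cast_nonneg s))
    (div_nonneg (ht.trans htx) (by positivity : (0 : ℝ) ≤ s + 1)) using 1
  field_simp
  ring

section
variable {k : ℕ} {α : Type*}

def AgreeBelow (i : ℕ) (p q : Fin k → α) : Prop :=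
  ∀ l : Fin k, (l : ℕ) < i → q l = p l

namespace AgreeBelow

variable {i j : ℕ} {p q r : Fin k → α}

theorem zero (p q : Fin k → α) : AgreeBelow 0 p q := fun _ hl => absurd hl (Nat.not_lt_zero _)

theorem mono (h : AgreeBelow i p q) (hji : j ≤ i) : AgreeBelow j p q :=
  fun l hl => h l (hl.trans_le hji)

theorem trans (hpq : AgreeBelow i p q) (hqr : AgreeBelow i q r) : AgreeBelow i p r :=
  fun l hl => (hqr l hl).trans (hpq l hl)

theorem symm (h : AgreeBelow i p q) : AgreeBelow i q p := fun l hl => (h l hl).symm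

theorem congr_left (h : AgreeBelow i p q) (hji : j ≤ i) :
    AgreeBelow j p r ↔ AgreeBelow j q r :=
  ⟨(h.mono hji).symm.trans, (h.mono hji).trans⟩

theorem eq_of_le (h : AgreeBelow i p q) (hki : k ≤ i) : q = p :=
  funext fun l => h l (l.isLt.trans_le hki)

theorem succ_iff (hi : i < k) :
    AgreeBelow (i + 1) p q ↔ AgreeBelow i p q ∧ q ⟨i, hi⟩ = p ⟨i, hi⟩ := by
  refine ⟨fun h => ⟨h.mono i.le_succ, h _ i.lt_succ_self⟩, fun ⟨h, hi'⟩ l hl => ?_⟩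
  rcases (Nat.lt_succ_iff.1 hl).lt_or_eq with hl | hl
  · exact h l hl
  · exact (Fin.ext hl : l = ⟨i, hi⟩) ▸ hi'

end AgreeBelow

instance [DecidableEq α] (i : ℕ) (p : Fin k → α) : DecidablePred (AgreeBelow i p) :=
  fun q => inferInstanceAs (Decidable (∀ l : Fin k, (l : ℕ) < i → q l = p l))

/-- The exclusion property `P_ā ⊆ Q_ā` for the prefix `ā` of `p` of length `i`, tested only at
coordinate `i`. -/
def HasExclusion (P : Finset (Fin k → α)) : Prop :=
  ∀ p ∈ P, ∀ q ∈ P, ∀ i j : Fin k, j < i → AgreeBelow j p q → p i ≠ q j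

variable [DecidableEq α]

def prefixCylinder (P : Finset (Fin k → α)) (i : ℕ) (p : Fin k → α) :
    Finset (Fin k → α) :=
  P.filter (AgreeBelow i p)

def allowedValues [Fintype α] (P : Finset (Fin k → α)) (i : ℕ) (p : Fin k → α) :
    Finset α :=
  univ.filter fun m => ∀ q ∈ P, ∀ j : Fin k, (j : ℕ) < i → AgreeBelow j p q → q j ≠ m

variable {P : Finset (Fin k → α)} {i : ℕ} {p q : Fin k → α}

theorem mem_prefixCylinder : q ∈ prefixCylinder P i p ↔ q ∈ P ∧ AgreeBelow i p q :=
  mem_filter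

@[simp]
theorem prefixCylinder_zero : prefixCylinder P 0 p = P :=
  filter_true_of_mem fun q _ => AgreeBelow.zero p q

@[simp]
theorem allowedValues_zero [Fintype α] : allowedValues P 0 p = univ :=
  filter_true_of_mem fun _ _ _ _ _ hj => absurd hj (Nat.not_lt_zero _)

theorem card_prefixCylinder_le_one (hki : k ≤ i) : #(prefixCylinder P i p) ≤ 1 :=
  card_le_one.2 fun _ hq _ hr =>
    ((mem_prefixCylinder.1 hq).2.eq_of_le hki).trans ((mem_prefixCylinder.1 hr).2.eq_of_le hki).symm

theorem filter_prefixCylinder_eq (hi : i < k) (hq : q ∈ prefixCylinder P i p) :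
    (prefixCylinder P i p).filter (fun r => r ⟨i, hi⟩ = q ⟨i, hi⟩) =
      prefixCylinder P (i + 1) q := by
  have hpq := (mem_prefixCylinder.1 hq).2
  ext r
  simp only [mem_filter, prefixCylinder, AgreeBelow.succ_iff hi, hpq.congr_left le_rfl, and_assoc]

theorem image_subset_allowedValues [Fintype α] (hP : HasExclusion P) (hi : i < k) :
    (prefixCylinder P i p).image (· ⟨i, hi⟩) ⊆ allowedValues P i p := by
  simp only [subset_iff, mem_image, mem_prefixCylinder, allowedValues, mem_filter, mem_univ,
    true_and]
  rintro _ ⟨q, ⟨hq, hpq⟩, rfl⟩ r hr j hj hpr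
  exact (hP q hq r hr ⟨i, hi⟩ j hj ((hpq.congr_left hj.le).1 hpr)).symm

theorem allowedValues_succ [Fintype α] (hi : i < k) (hq : q ∈ prefixCylinder P i p) :
    allowedValues P (i + 1) q =
      allowedValues P i p \ (prefixCylinder P i p).image (· ⟨i, hi⟩) := by
  have hpq := (mem_prefixCylinder.1 hq).2
  ext m
  simp only [allowedValues, mem_sdiff, mem_filter, mem_univ, true_and, mem_image,
    mem_prefixCylinder, not_exists, not_and]
  constructor
  · intro h
    refine ⟨fun r hr j hj hpr => h r hr j (by omega) ((hpq.congr_left hj.le).1 hpr),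
      fun r ⟨hr, hpr⟩ => h r hr ⟨i, hi⟩ i.lt_succ_self ((hpq.congr_left le_rfl).1 hpr)⟩
  · rintro ⟨hX, hA⟩ r hr j hj hqr
    rcases (Nat.lt_succ_iff.1 hj).lt_or_eq with hj | hj
    · exact hX r hr j hj ((hpq.congr_left hj.le).2 hqr)
    · obtain rfl : j = ⟨i, hi⟩ := Fin.ext hj
      exact hA r ⟨hr, (hpq.congr_left le_rfl).2 hqr⟩

theorem card_prefixCylinder_le [Fintype α] (hP : HasExclusion P) {d : ℕ} (p : Fin k → α)
    (hik : i + d = k) :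
    (#(prefixCylinder P i p) : ℝ) ≤ ((#(allowedValues P i p) : ℝ) / d) ^ d := by
  induction d generalizing i p with
  | zero => simpa using card_prefixCylinder_le_one (P := P) (p := p) hik.ge
  | succ d ih =>
    have hi : i < k := by omega
    set S := prefixCylinder P i p
    set A := S.image (· ⟨i, hi⟩)
    set X := allowedValues P i p
    have hAX : A ⊆ X := image_subset_allowedValues hP hi
    have hfiber : ∀ b ∈ A,
        (#(S.filter (· ⟨i, hi⟩ = b)) : ℝ) ≤ ((#X - #A : ℝ) / d) ^ d := by
      intro b hb
      obtain ⟨q, hq, rfl⟩ := mem_image.1 hb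
      rw [filter_prefixCylinder_eq hi hq, ← cast_card_sdiff hAX, ← allowedValues_succ hi hq]
      exact ih q (by omega)
    calc (#S : ℝ) = ∑ b ∈ A, (#(S.filter (· ⟨i, hi⟩ = b)) : ℝ) := by
          exact_mod_cast card_eq_sum_card_fiberwise fun q hq => mem_image_of_mem _ hq
      _ ≤ ∑ _b ∈ A, ((#X - #A : ℝ) / d) ^ d := sum_le_sum hfiber
      _ = #A * ((#X - #A : ℝ) / d) ^ d := by rw [sum_const, nsmul_eq_mul]
      _ ≤ (#X / (d + 1 : ℕ) : ℝ) ^ (d + 1) := by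
          push_cast
          exact mul_sub_div_pow_le d (Nat.cast_nonneg _) (by exact_mod_cast card_le_card hAX)
end

theorem exclusion_lemma_general (k n : ℕ)
    (P : Finset (Fin k → Fin n))
    (hinj : ∀ p ∈ P, Function.Injective p)
    (hexcl : ∀ (i : ℕ), 1 ≤ i → ∀ (hik : i < k) (a : Fin i → Fin n),
      Function.Injective a →
      ∀ p ∈ P, (∀ j : Fin i, p (Fin.castLE hik.le j) = a j) →
      ∀ r : Fin k, i ≤ (r : ℕ) →
      ∀ (j : ℕ) (hj : j < i), ∀ q ∈ P,
        (∀ (l : Fin k) (hl : (l : ℕ) < j), q l = a ⟨(l : ℕ), hl.trans hj⟩) →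
        p r ≠ q ⟨j, hj.trans hik⟩) :
    (P.card : ℝ) ≤ ((n : ℝ) / (k : ℝ)) ^ k := by
  have hP : HasExclusion P := fun p hp q hq i j hji hpq =>
    hexcl i (by omega) i.isLt _ ((hinj p hp).comp (Fin.castLE_injective _)) p hp (fun _ => rfl)
      i le_rfl j hji q hq hpq
  rcases P.eq_empty_or_nonempty with rfl | ⟨p, -⟩
  · simp only [card_empty, Nat.cast_zero]
    positivity
  · simpa using card_prefixCylinder_le hP p (zero_add k)

/-- Pippenger–Golumbic exclusion lemma. Let `P` be a family of injective functions
`[k] → [n]` (here realised as `Fin k → Fin n`, zero-indexed). Suppose `P` satisfies the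
exclusion property: for every `1 ≤ i < k` and every tuple `a` of `i` pairwise distinct
elements of `[n]`, every `p ∈ P` agreeing with `a` on its first `i` coordinates takes,
at every coordinate `r ≥ i`, a value different from `q(j)` for every `j < i` and every
`q ∈ P` agreeing with `a` on its first `j` coordinates. Then `|P| ≤ (n/k)^k`. -/
theorem exclusion_lemma (k n : ℕ) (hk : 0 < k) (hn : 0 < n)
    (P : Finset (Fin k → Fin n))
    (hinj : ∀ p ∈ P, Function.Injective p)
    (hexcl : ∀ (i : ℕ), 1 ≤ i → ∀ (hik : i < k) (a : Fin i → Fin n),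
      Function.Injective a →
      ∀ p ∈ P, (∀ j : Fin i, p (Fin.castLE hik.le j) = a j) →
      ∀ r : Fin k, i ≤ (r : ℕ) →
      ∀ (j : ℕ) (hj : j < i), ∀ q ∈ P,
        (∀ (l : Fin k) (hl : (l : ℕ) < j), q l = a ⟨(l : ℕ), hl.trans hj⟩) →
        p r ≠ q ⟨j, hj.trans hik⟩) :
    (P.card : ℝ) ≤ ((n : ℝ) / (k : ℝ)) ^ k :=
  exclusion_lemma_general k n P hinj hexcl
end

section
/- Let n ≥ k ≥ 5 be integers, let G be a graph on n vertices and let v be a vertex of minimum degree d_v = δ(G). If c_v = k·d_v/n ≥ 2, then the number of induced k-cycles of G containing v satisfies D_k(G,v) ≤ (128e/81) · (n/k)^{k−1}. -/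
/-!
Write `k = j + 4`, `d = δ(G) = d_v` and `N = n - d`. An induced cycle `v x₁ x₂ p₁ … pⱼ y` through
`v` is recovered from the code `(x₁, x₂, [p₁, …, pⱼ], y)`, and each cycle has two codes, one per
orientation. Fix `x₁ ∈ N(v)` and put `m = |N(x₁) \ N[v]|`. Then `x₂` has at most `m` choices, and
since `d(x₁) ≥ d` the last vertex `y ∈ N(v) \ N(x₁)` has at most `m + 1`. Each `pᵢ₊₁` is a neighbour
of `pᵢ` outside `N[v] ∪ N(x₁)` and outside the neighbourhoods of all earlier vertices but `pᵢ`, so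
the sets of choices at successive steps are disjoint subsets of a set of `N - m - 1` vertices, and
AM-GM bounds the number of paths by `((N - m - 1)/j)^j`. A second AM-GM gives
`(m + 1)² ((N - m - 1)/j)^j ≤ 4 (N/(j + 2))^(j + 2)`, hence `2 D_k(G,v) ≤ 4 d (N/(k - 2))^(k - 2)`.
Finally `d ↦ d (n - d)^(k - 2)` is decreasing for `d ≥ n/(k - 1)`, so `d ≥ 2n/k` gives
`D_k(G,v) ≤ 4 (n/k)^(k - 1)`, and `4 ≤ 128e/81`.
-/

open Finset

theorem pow_mul_pow_le_of_add_le {x y s : ℝ} (p q : ℕ) (hx : 0 ≤ x) (hy : 0 ≤ y)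
    (hs : p * x + q * y ≤ s) : x ^ p * y ^ q ≤ (s / (p + q)) ^ (p + q) := by
  rcases Nat.eq_zero_or_pos (p + q) with hpq | hpq
  · obtain ⟨rfl, rfl⟩ : p = 0 ∧ q = 0 := by omega
    simp
  set N : ℝ := p + q
  have hN : 0 < N := by simp only [N]; exact_mod_cast hpq
  have hw : (p / N : ℝ) + q / N = 1 := by rw [← add_div, div_self hN.ne']
  calc x ^ p * y ^ q = (x ^ (p / N) * y ^ (q / N)) ^ (p + q) := by
        rw [mul_pow, ← Real.rpow_mul_natCast hx, ← Real.rpow_mul_natCast hy]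
        push_cast
        rw [div_mul_cancel₀ _ hN.ne', div_mul_cancel₀ _ hN.ne', Real.rpow_natCast,
          Real.rpow_natCast]
    _ ≤ (p / N * x + q / N * y) ^ (p + q) :=
        pow_le_pow_left₀ (by positivity)
          (Real.geom_mean_le_arith_mean2_weighted (by positivity) (by positivity) hx hy hw) _
    _ ≤ (s / N) ^ (p + q) := by
        rw [div_mul_eq_mul_div, div_mul_eq_mul_div, ← add_div]
        gcongr

theorem pow_mul_sub_div_pow_le {x s : ℝ} (p q : ℕ) (hx : 0 ≤ x) (hxs : p * x ≤ s) :
    x ^ p * ((s - p * x) / q) ^ q ≤ (s / (p + q)) ^ (p + q) := by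
  refine pow_mul_pow_le_of_add_le p q hx (div_nonneg (by linarith) q.cast_nonneg) ?_
  rcases eq_or_ne (q : ℝ) 0 with hq | hq
  · simpa [hq] using hxs
  · rw [mul_div_cancel₀ _ hq]; linarith

theorem mul_sub_pow_le_of_le {a b N : ℝ} (m : ℕ) (ha : 0 < a) (hab : a ≤ b) (hbN : b ≤ N)
    (hN : N ≤ m * a) : b * (N - b) ^ m ≤ a * (N - a) ^ m := by
  have hm : m ≠ 0 := by rintro rfl; simp at hN; linarith
  rcases hbN.eq_or_lt with rfl | hbN
  · rw [sub_self, zero_pow hm, mul_zero]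
    exact mul_nonneg ha.le (pow_nonneg (by linarith) m)
  have hNb : 0 < N - b := by linarith
  set t := (b - a) / (N - b)
  have ht : 0 ≤ t := div_nonneg (by linarith) hNb.le
  have hNa : N - a = (N - b) * (1 + t) := by simp only [t]; field_simp; ring
  have hamt : b ≤ a * (1 + m * t) := by
    have : b - a ≤ a * m * t := by
      rw [mul_div_assoc', le_div_iff₀ hNb]
      nlinarith
    linarith
  calc b * (N - b) ^ m ≤ a * (1 + m * t) * (N - b) ^ m := by gcongr
    _ ≤ a * (1 + t) ^ m * (N - b) ^ m := by
        gcongr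
        exact one_add_mul_le_pow (by linarith) m
    _ = a * (N - a) ^ m := by rw [hNa, mul_pow]; ring

theorem two_mul_mul_sub_div_pow_le {n d : ℝ} (j : ℕ) (hn : 0 < n) (hd : 2 * n / (j + 4) ≤ d)
    (hdn : d ≤ n) : 2 * d * ((n - d) / (j + 2)) ^ (j + 2) ≤ 4 * (n / (j + 4)) ^ (j + 3) := by
  set a := 2 * n / (j + 4)
  have hN : n ≤ ((j + 2 : ℕ) : ℝ) * a := by
    simp only [a]; push_cast
    rw [mul_div_assoc', le_div_iff₀ (by positivity)]
    nlinarith [(j.cast_nonneg : (0 : ℝ) ≤ j)]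
  have hna : n - a = (j + 2) * (n / (j + 4)) := by simp only [a]; field_simp; ring
  calc 2 * d * ((n - d) / (j + 2)) ^ (j + 2)
      = 2 * (d * (n - d) ^ (j + 2)) / (j + 2) ^ (j + 2) := by rw [div_pow]; ring
    _ ≤ 2 * (a * (n - a) ^ (j + 2)) / (j + 2) ^ (j + 2) := by
        have := mul_sub_pow_le_of_le (j + 2) (by positivity) hd hdn hN
        gcongr ?_ / _
        linarith
    _ = 4 * (n / (j + 4)) ^ (j + 3) := by
        rw [hna, show a = 2 * (n / (j + 4)) by ring, mul_pow]
        generalize n / (j + 4) = x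
        field_simp
        ring

theorem Finset.cast_card_biUnion_le_card_mul {ι β : Type*} [DecidableEq β] (s : Finset ι)
    (f : ι → Finset β) {c : ℝ} (h : ∀ i ∈ s, (#(f i) : ℝ) ≤ c) :
    (#(s.biUnion f) : ℝ) ≤ #s * c := by
  calc (#(s.biUnion f) : ℝ) ≤ ∑ i ∈ s, (#(f i) : ℝ) := by exact_mod_cast card_biUnion_le
    _ ≤ #s • c := sum_le_card_nsmul s _ c h
    _ = #s * c := nsmul_eq_mul _ _

namespace SimpleGraph

open Fin.NatCast

theorem cycleGraph_adj_natCast {n a b : ℕ} (ha : a < n + 2) (hb : b < n + 2) :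
    (cycleGraph (n + 2)).Adj a b ↔
      a = b + 1 ∨ b = a + 1 ∨ a = 0 ∧ b = n + 1 ∨ b = 0 ∧ a = n + 1 := by
  rw [cycleGraph_adj, sub_eq_iff_eq_add', sub_eq_iff_eq_add', Fin.ext_iff, Fin.ext_iff,
    Fin.val_add_one, Fin.val_add_one]
  simp only [Fin.ext_iff, Fin.val_last, Fin.val_natCast, Nat.mod_eq_of_lt ha, Nat.mod_eq_of_lt hb]
  split_ifs <;> omega

def cycleGraphAddRight {k : ℕ} [NeZero k] (p : Fin k) : cycleGraph k ≃g cycleGraph k :=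
  { Equiv.addRight p with
    map_rel_iff' := by simp [cycleGraph_adj', add_sub_add_right_eq_sub] }

def cycleGraphNeg (k : ℕ) [NeZero k] : cycleGraph k ≃g cycleGraph k :=
  { Equiv.neg (Fin k) with
    map_rel_iff' := by simp [cycleGraph_adj', or_comm, neg_add_eq_sub] }

theorem Embedding.image_univ_comp {U W X : Type*} [Fintype W] [Fintype X] [DecidableEq U]
    {G : SimpleGraph U} {H : SimpleGraph W} {H' : SimpleGraph X} (f : H ↪g G) (σ : H' ≃g H) :
    univ.image (f.comp σ.toEmbedding) = univ.image f := by
  ext u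
  simp only [mem_image, mem_univ, true_and]
  exact (σ.surjective.exists (p := fun i => f i = u)).symm

variable {V : Type*} [DecidableEq V]

def cycleCode (W : ℕ → V) (j : ℕ) : V × V × List V × V :=
  (W 1, W 2, List.ofFn fun i : Fin j => W (2 + i + 1), W (j + 3))

def decodeCycle (v : V) (c : V × V × List V × V) : Finset V :=
  insert v (insert c.1 (insert c.2.1 (insert c.2.2.2 c.2.2.1.toFinset)))

theorem decodeCycle_cycleCode {G : SimpleGraph V} {v : V} {j : ℕ} (g : cycleGraph (j + 4) ↪g G)
    (hg : g 0 = v) : decodeCycle v (cycleCode (fun m => g m) j) = univ.image g := by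
  ext u
  simp only [decodeCycle, cycleCode, mem_insert, List.mem_toFinset, List.mem_ofFn, mem_image,
    mem_univ, true_and]
  constructor
  · rintro (rfl | rfl | rfl | rfl | ⟨i, rfl⟩)
    exacts [⟨0, hg⟩, ⟨_, rfl⟩, ⟨_, rfl⟩, ⟨_, rfl⟩, ⟨_, rfl⟩]
  · rintro ⟨i, rfl⟩
    rw [← Fin.cast_val_eq_self i, ← hg]
    obtain h | h | h | h | h : i.val = 0 ∨ i.val = 1 ∨ i.val = 2 ∨ i.val = j + 3 ∨
        3 ≤ i.val ∧ i.val ≤ j + 2 := by omega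
    · simp [h]
    · simp [h]
    · simp [h]
    · simp [h]
    · refine .inr (.inr (.inr (.inr ⟨⟨i.val - 3, by omega⟩, ?_⟩)))
      congr 2
      simp only
      omega

variable [Fintype V] (G : SimpleGraph V) [DecidableRel G.Adj]

/-- Candidates `[y₁, …, yⱼ]` for the continuation of an induced path ending at `x`: each `yᵢ₊₁`
is a neighbour of `yᵢ` (with `y₀ = x`) lying outside `A` and outside the neighbourhoods of
`y₀, …, yᵢ₋₁`. -/
def inducedExtensions : ℕ → V → Finset V → Finset (List V)
  | 0, _, _ => {[]}
  | j + 1, x, A => (G.neighborFinset x \ A).biUnion fun y =>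
      (inducedExtensions j y (A ∪ G.neighborFinset x)).image (y :: ·)

theorem card_inducedExtensions_le (j : ℕ) (x : V) (A : Finset V) :
    (#(G.inducedExtensions j x A) : ℝ) ≤ ((Fintype.card V - #A) / j) ^ j := by
  induction j generalizing x A with
  | zero => simp [inducedExtensions]
  | succ j ih =>
    set b := #(G.neighborFinset x \ A)
    have hcard : #(A ∪ G.neighborFinset x) = #A + b := by
      rw [union_comm, ← card_sdiff_add_card, add_comm]
    have hle : (#A : ℝ) + b ≤ Fintype.card V := by
      exact_mod_cast hcard ▸ card_le_univ (A ∪ G.neighborFinset x)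
    calc (#(G.inducedExtensions (j + 1) x A) : ℝ)
        ≤ b * ((Fintype.card V - #(A ∪ G.neighborFinset x)) / j) ^ j :=
          cast_card_biUnion_le_card_mul _ _ fun y _ =>
            (Nat.cast_le.mpr card_image_le).trans (ih y _)
      _ = (b : ℝ) ^ 1 * ((Fintype.card V - #A - (1 : ℕ) * b) / j) ^ j := by
          rw [hcard, pow_one]; push_cast; ring_nf
      _ ≤ ((Fintype.card V - #A) / ((1 : ℕ) + j)) ^ (1 + j) :=
          pow_mul_sub_div_pow_le 1 j b.cast_nonneg (by push_cast; linarith)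
      _ = _ := by push_cast; rw [add_comm 1 j, add_comm (1 : ℝ)]

theorem ofFn_mem_inducedExtensions (W : ℕ → V) (j s : ℕ) (A : Finset V)
    (hW : ∀ i < j, G.Adj (W (s + i)) (W (s + i + 1)) ∧ W (s + i + 1) ∉ A ∧
      ∀ t < i, ¬G.Adj (W (s + t)) (W (s + i + 1))) :
    List.ofFn (fun i : Fin j => W (s + i + 1)) ∈ G.inducedExtensions j (W s) A := by
  induction j generalizing s A with
  | zero => simp [inducedExtensions]
  | succ j ih =>
    obtain ⟨hadj, hA, -⟩ := hW 0 j.succ_pos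
    rw [add_zero] at hadj hA
    have hrest := ih (s + 1) (A ∪ G.neighborFinset (W s)) fun i hi => by
      obtain ⟨hadj, hA, hnadj⟩ := hW (i + 1) (by omega)
      rw [← add_assoc] at hadj hA hnadj
      simp only [Nat.add_right_comm s 1, Finset.mem_union, mem_neighborFinset, not_or]
      refine ⟨hadj, ⟨hA, by simpa using hnadj 0 (by omega)⟩, fun t ht => ?_⟩
      simpa [← add_assoc] using hnadj (t + 1) (by omega)
    simp only [inducedExtensions, List.ofFn_succ, mem_biUnion, mem_image, mem_sdiff,
      mem_neighborFinset]
    refine ⟨W (s + 1), ⟨hadj, hA⟩, _, hrest, ?_⟩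
    simp only [Fin.val_zero, Fin.val_succ, add_zero, add_assoc, add_comm 1]

theorem card_neighborFinset_sdiff_le {v x : V} (h : G.degree v ≤ G.degree x) :
    #(G.neighborFinset v \ G.neighborFinset x) ≤
      #(G.neighborFinset x \ insert v (G.neighborFinset v)) + 1 := by
  calc #(G.neighborFinset v \ G.neighborFinset x)
      ≤ #(G.neighborFinset x \ G.neighborFinset v) := by
        have hv := card_sdiff_add_card_inter (G.neighborFinset v) (G.neighborFinset x)
        have hx := card_sdiff_add_card_inter (G.neighborFinset x) (G.neighborFinset v)
        rw [inter_comm, card_neighborFinset_eq_degree] at hx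
        rw [card_neighborFinset_eq_degree] at hv
        omega
    _ ≤ #(insert v (G.neighborFinset x \ insert v (G.neighborFinset v))) := by
        refine card_le_card fun y hy => ?_
        rw [mem_insert, mem_sdiff, mem_insert]
        rw [mem_sdiff] at hy
        tauto
    _ ≤ _ := card_insert_le _ _

/-- A superset of the codes of the induced `(j + 4)`-cycles `v x₁ x₂ … y` with second vertex
`x₁`. -/
def cycleCodesVia (v x₁ : V) (j : ℕ) : Finset (V × V × List V × V) :=
  (G.neighborFinset x₁ \ insert v (G.neighborFinset v)).biUnion fun x₂ =>
    (G.inducedExtensions j x₂ (insert v (G.neighborFinset v) ∪ G.neighborFinset x₁)).biUnion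
      fun p => (G.neighborFinset v \ G.neighborFinset x₁).image fun y => (x₁, x₂, p, y)

def cycleCodes (v : V) (j : ℕ) : Finset (V × V × List V × V) :=
  (G.neighborFinset v).biUnion fun x₁ => G.cycleCodesVia v x₁ j

theorem card_cycleCodesVia_le {v x₁ : V} (j : ℕ) (hdeg : G.degree v ≤ G.degree x₁) :
    (#(G.cycleCodesVia v x₁ j) : ℝ) ≤
      4 * ((Fintype.card V - G.degree v) / (j + 2)) ^ (j + 2) := by
  set m := #(G.neighborFinset x₁ \ insert v (G.neighborFinset v))
  set A := insert v (G.neighborFinset v) ∪ G.neighborFinset x₁ with hA_def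
  set P : ℝ := ((Fintype.card V - #A) / j) ^ j
  have hA : #A = G.degree v + 1 + m := by
    rw [hA_def, union_comm, ← card_sdiff_add_card,
      card_insert_of_notMem (G.notMem_neighborFinset_self v), card_neighborFinset_eq_degree]
    omega
  have hAV : (G.degree v : ℝ) + 1 + m ≤ Fintype.card V := by
    exact_mod_cast hA ▸ card_le_univ A
  have hP : 0 ≤ P := pow_nonneg (div_nonneg (by rw [hA]; push_cast; linarith) j.cast_nonneg) _
  have hlast : (#(G.neighborFinset v \ G.neighborFinset x₁) : ℝ) ≤ m + 1 := by
    exact_mod_cast G.card_neighborFinset_sdiff_le hdeg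
  calc (#(G.cycleCodesVia v x₁ j) : ℝ) ≤ m * (P * (m + 1)) :=
        cast_card_biUnion_le_card_mul _ _ fun x₂ _ =>
          (cast_card_biUnion_le_card_mul _ _ fun p _ =>
            (Nat.cast_le.mpr card_image_le).trans hlast).trans
          (mul_le_mul_of_nonneg_right (G.card_inducedExtensions_le j x₂ A) (by positivity))
    _ ≤ 4 * (((m + 1) / 2) ^ 2 *
          ((Fintype.card V - G.degree v - (2 : ℕ) * ((m + 1) / 2)) / j) ^ j) := by
        have hPeq : P = ((Fintype.card V - G.degree v - (2 : ℕ) * ((m + 1) / 2)) / j) ^ j := by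
          simp only [P, hA]; push_cast; ring_nf
        rw [← hPeq]
        nlinarith [m.cast_nonneg (α := ℝ)]
    _ ≤ 4 * ((Fintype.card V - G.degree v) / ((2 : ℕ) + j)) ^ (2 + j) := by
        gcongr
        exact pow_mul_sub_div_pow_le 2 j (by positivity) (by push_cast; linarith)
    _ = _ := by push_cast; rw [add_comm 2 j, add_comm (2 : ℝ)]

theorem card_cycleCodes_le (v : V) (j : ℕ) (hdeg : ∀ x, G.degree v ≤ G.degree x) :
    (#(G.cycleCodes v j) : ℝ) ≤
      G.degree v * (4 * ((Fintype.card V - G.degree v) / (j + 2)) ^ (j + 2)) := by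
  rw [← card_neighborFinset_eq_degree G v]
  exact cast_card_biUnion_le_card_mul _ _ fun x₁ _ => by
    simpa only [card_neighborFinset_eq_degree] using G.card_cycleCodesVia_le j (hdeg x₁)

theorem cycleCode_mem_cycleCodes {v : V} {j : ℕ} (g : cycleGraph (j + 4) ↪g G) (hg : g 0 = v) :
    cycleCode (fun m => g m) j ∈ G.cycleCodes v j := by
  set W : ℕ → V := fun m => g m
  have hW0 : W 0 = v := by simp [W, hg]
  have hadj : ∀ a < j + 4, ∀ b < j + 4, G.Adj (W a) (W b) ↔
      a = b + 1 ∨ b = a + 1 ∨ a = 0 ∧ b = j + 3 ∨ b = 0 ∧ a = j + 3 := fun a ha b hb =>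
    g.map_adj_iff.trans (cycleGraph_adj_natCast (n := j + 2) ha hb)
  have hne : ∀ a < j + 4, ∀ b < j + 4, W a = W b → a = b := fun a ha b hb h => by
    simpa [Fin.ext_iff, Nat.mod_eq_of_lt ha, Nat.mod_eq_of_lt hb] using g.injective h
  simp only [cycleCode, cycleCodes, cycleCodesVia, mem_biUnion, mem_image, mem_sdiff,
    mem_insert, mem_neighborFinset, not_or, ← hW0]
  refine ⟨W 1, ?_, W 2, ⟨?_, ?_, ?_⟩, _, G.ofFn_mem_inducedExtensions W j 2 _ fun i hi => ?_,
    W (j + 3), ⟨?_, ?_⟩, rfl⟩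
  · rw [hadj 0 (by omega) 1 (by omega)]; omega
  · rw [hadj 1 (by omega) 2 (by omega)]; omega
  · exact fun h => absurd (hne 2 (by omega) 0 (by omega) h) (by omega)
  · rw [hadj 0 (by omega) 2 (by omega)]; omega
  · simp only [Finset.mem_union, mem_insert, mem_neighborFinset, not_or, ← hW0]
    refine ⟨by rw [hadj (2 + i) (by omega) _ (by omega)]; omega,
      ⟨⟨fun h => absurd (hne (2 + i + 1) (by omega) 0 (by omega) h) (by omega), ?_⟩, ?_⟩,
      fun t ht => ?_⟩
    · rw [hadj 0 (by omega) _ (by omega)]; omega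
    · rw [hadj 1 (by omega) _ (by omega)]; omega
    · rw [hadj (2 + t) (by omega) _ (by omega)]; omega
  · rw [hadj 0 (by omega) _ (by omega)]; omega
  · rw [hadj 1 (by omega) _ (by omega)]; omega

/-- The two orientations of an induced cycle through `v` give two distinct codes. -/
theorem exists_cycleCode_ne {v : V} {j : ℕ} {S : Finset V} (hv : v ∈ S)
    (e : G.induce (S : Set V) ≃g cycleGraph (j + 4)) :
    ∃ c₁ ∈ G.cycleCodes v j, ∃ c₂ ∈ G.cycleCodes v j,
      c₁ ≠ c₂ ∧ decodeCycle v c₁ = S ∧ decodeCycle v c₂ = S := by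
  set f := (Embedding.induce (S : Set V)).comp e.symm.toEmbedding
  have hf : univ.image f = S := by
    ext u
    simp only [mem_image, mem_univ, true_and]
    refine ⟨?_, fun hu => ⟨e ⟨u, hu⟩, by simp [f]⟩⟩
    rintro ⟨a, rfl⟩
    exact (e.symm a).2
  set g₁ := f.comp (cycleGraphAddRight (e ⟨v, hv⟩)).toEmbedding
  set g₂ := g₁.comp (cycleGraphNeg (j + 4)).toEmbedding
  have hg₁ : g₁ 0 = v := by simp [g₁, f, cycleGraphAddRight]
  have hg₂ : g₂ 0 = v := by simp [g₂, cycleGraphNeg, hg₁]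
  refine ⟨_, G.cycleCode_mem_cycleCodes g₁ hg₁, _, G.cycleCode_mem_cycleCodes g₂ hg₂, ?_, ?_, ?_⟩
  · intro h
    have h1 : g₁ 1 = g₁ (-1) := by simpa [cycleCode, g₂, cycleGraphNeg] using congrArg Prod.fst h
    simpa [Fin.ext_iff, Fin.val_neg] using g₁.injective h1
  · rw [decodeCycle_cycleCode g₁ hg₁, Embedding.image_univ_comp, hf]
  · rw [decodeCycle_cycleCode g₂ hg₂, Embedding.image_univ_comp, Embedding.image_univ_comp, hf]

theorem inducedCycleCountAt_mul_two_le (v : V) (j : ℕ) :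
    inducedCycleCountAt G (j + 4) v * 2 ≤ #(G.cycleCodes v j) := by
  classical
  rw [inducedCycleCountAt, Set.ncard_eq_toFinset_card', ← mul_one #(G.cycleCodes v j)]
  refine card_mul_le_card_mul (fun S c => decodeCycle v c = S) (fun S hS => ?_) fun c _ =>
    card_le_one.mpr fun S₁ h₁ S₂ h₂ => (mem_filter.mp h₁).2.symm.trans (mem_filter.mp h₂).2
  obtain ⟨hv, ⟨e⟩⟩ := Set.mem_toFinset.mp hS
  obtain ⟨c₁, hc₁, c₂, hc₂, hne, h₁, h₂⟩ := G.exists_cycleCode_ne hv e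
  exact one_lt_card.mpr ⟨c₁, mem_filter.mpr ⟨hc₁, h₁⟩, c₂, mem_filter.mpr ⟨hc₂, h₂⟩, hne⟩

theorem inducedCycleCountAt_le (v : V) (j : ℕ) (hdeg : ∀ x, G.degree v ≤ G.degree x) :
    (inducedCycleCountAt G (j + 4) v : ℝ) ≤
      2 * G.degree v * ((Fintype.card V - G.degree v) / (j + 2)) ^ (j + 2) := by
  have hcodes := G.card_cycleCodes_le v j hdeg
  have htwo : (inducedCycleCountAt G (j + 4) v : ℝ) * 2 ≤ #(G.cycleCodes v j) := by
    exact_mod_cast G.inducedCycleCountAt_mul_two_le v j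
  linarith

end SimpleGraph

theorem cycleCountAt_le_of_minDegree_large_general (n k : ℕ) (hk : 5 ≤ k)
    (G : SimpleGraph (Fin n)) [DecidableRel G.Adj] (v : Fin n)
    (hmin : G.degree v = G.minDegree)
    (hc : 2 ≤ (k : ℝ) * (G.degree v : ℝ) / (n : ℝ)) :
    (inducedCycleCountAt G k v : ℝ) ≤
      128 * Real.exp 1 / 81 * ((n : ℝ) / (k : ℝ)) ^ (k - 1) := by
  obtain ⟨j, rfl⟩ : ∃ j, k = j + 4 := ⟨k - 4, by omega⟩
  have hn : (0 : ℝ) < n := by exact_mod_cast v.pos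
  have hd : 2 * n / (j + 4) ≤ (G.degree v : ℝ) := by
    rw [le_div_iff₀ hn] at hc
    rw [div_le_iff₀ (by positivity)]
    push_cast at hc
    linarith
  have hdn : (G.degree v : ℝ) ≤ n := by
    exact_mod_cast (Fintype.card_fin n ▸ G.degree_lt_card_verts v).le
  calc (inducedCycleCountAt G (j + 4) v : ℝ)
      ≤ 2 * G.degree v * ((n - G.degree v) / (j + 2)) ^ (j + 2) := by
        simpa using G.inducedCycleCountAt_le v j fun x => hmin ▸ G.minDegree_le_degree x
    _ ≤ 4 * (n / (j + 4)) ^ (j + 3) := two_mul_mul_sub_div_pow_le j hn hd hdn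
    _ ≤ 128 * Real.exp 1 / 81 * (n / (j + 4 : ℕ)) ^ (j + 4 - 1) := by
        push_cast
        gcongr
        linarith [Real.exp_one_gt_d9]

/-- For `n ≥ k ≥ 5`, a graph `G` on `n` vertices and a vertex `v` of minimum degree
`d_v = δ(G)`, if `c_v = k·d_v/n ≥ 2` then `D_k(G,v) ≤ (128e/81)·(n/k)^(k-1)`. -/
theorem cycleCountAt_le_of_minDegree_large (n k : ℕ) (hk : 5 ≤ k) (hkn : k ≤ n)
    (G : SimpleGraph (Fin n)) [DecidableRel G.Adj] (v : Fin n)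
    (hmin : G.degree v = G.minDegree)
    (hc : 2 ≤ (k : ℝ) * (G.degree v : ℝ) / (n : ℝ)) :
    (inducedCycleCountAt G k v : ℝ) ≤
      128 * Real.exp 1 / 81 * ((n : ℝ) / (k : ℝ)) ^ (k - 1) :=
  cycleCountAt_le_of_minDegree_large_general n k hk G v hmin hc
end

section
/- Let n ≥ k ≥ 1 be integers and let G be a graph on n vertices satisfying n/k ≤ δ(G) < 2n/k. Let v be a vertex of minimum degree and set c = k·d_v/n. Let A_v = {(u,w) : u, w ∈ N_G(v), u ≠ w, uw ∉ E(G)}, and for vertices u, w write x̄_{uv} = k·x_{uv}/n, x̄_{vw} = k·x_{vw}/n and z̄_{uvw} = k·z_{uvw}/n. Suppose that for every (u,w) ∈ A_v we are given real numbers c_u^{uw}, c_w^{uw}, x^{uw} such that c ≤ c_u^{uw} ≤ 4, c ≤ c_w^{uw} ≤ 4, x^{uw} ≥ z̄_{uvw}, c_u^{uw} − x̄_{uv} − x^{uw} + z̄_{uvw} ≥ 0 and c_w^{uw} − x̄_{vw} − x^{uw} + z̄_{uvw} ≥ 0. Then (1/2)·e^{5−c} · Σ_{(u,w) ∈ A_v}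 (c_u^{uw} − x̄_{uv} − x^{uw} + z̄_{uvw})·(c_w^{uw} − x̄_{vw} − x^{uw} + z̄_{uvw})·e^{−(c_u^{uw} + c_w^{uw} − x̄_{uv} − x̄_{vw} − x^{uw} + z̄_{uvw})} ≤ (n²/k²)·(128e/81). -/
open Real

noncomputable def hh (L : ℝ) : ℝ := if L ≤ 1 then Real.exp (-1) else L * Real.exp (-L)

lemma epp (x y : ℝ) : Real.exp x * Real.exp y = Real.exp (x + y) := (Real.exp_add x y).symm

lemma hh_nonneg (L : ℝ) : 0 ≤ hh L := by
  unfold hh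
  split_ifs with h
  · positivity
  · push_neg at h
    have : (0:ℝ) < L := lt_trans one_pos h
    positivity

lemma factorBound (a s L : ℝ) (ha : 0 ≤ a) (hs : 0 ≤ s) (hLa : L ≤ a + s) (hL2 : L ≤ 2) :
    a * Real.exp (-(a + s)) ≤ hh L * Real.exp (-(s / 2)) := by
  unfold hh
  split_ifs with h
  · have h1 : a ≤ Real.exp (a - 1) := by
      have := Real.add_one_le_exp (a - 1); linarith
    calc a * Real.exp (-(a + s)) ≤ Real.exp (a - 1) * Real.exp (-(a + s)) := by
          apply mul_le_mul_of_nonneg_right h1 (Real.exp_nonneg _)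
      _ = Real.exp (a - 1 + -(a + s)) := epp _ _
      _ ≤ Real.exp (-1 + -(s/2)) := by apply Real.exp_le_exp.mpr; linarith
      _ = Real.exp (-1) * Real.exp (-(s/2)) := (epp _ _).symm
  · push_neg at h
    have hL0 : (0:ℝ) < L := lt_trans one_pos h
    have h2 : a ≤ L * (a + s / 2 - L + 1) := by
      nlinarith [mul_nonneg (by linarith : (0:ℝ) ≤ L - 1) (by linarith : (0:ℝ) ≤ a + s - L),
        mul_nonneg hs (by linarith : (0:ℝ) ≤ 2 - L)]
    have h3 : a + s / 2 - L + 1 ≤ Real.exp (a + s / 2 - L) := by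
      have := Real.add_one_le_exp (a + s / 2 - L); linarith
    calc a * Real.exp (-(a + s))
        ≤ (L * Real.exp (a + s / 2 - L)) * Real.exp (-(a + s)) := by
          apply mul_le_mul_of_nonneg_right _ (Real.exp_nonneg _)
          calc a ≤ L * (a + s / 2 - L + 1) := h2
            _ ≤ L * Real.exp (a + s / 2 - L) := mul_le_mul_of_nonneg_left h3 hL0.le
      _ = L * (Real.exp (a + s / 2 - L) * Real.exp (-(a + s))) := by ring
      _ = L * Real.exp (a + s / 2 - L + -(a + s)) := by rw [epp]
      _ = L * Real.exp (-L + -(s / 2)) := by rw [show a + s / 2 - L + -(a + s) = -L + -(s/2) by ring]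
      _ = L * (Real.exp (-L) * Real.exp (-(s/2))) := by rw [epp]
      _ = L * Real.exp (-L) * Real.exp (-(s/2)) := by ring

lemma pairBound (a b s L₁ L₂ : ℝ) (ha : 0 ≤ a) (hb : 0 ≤ b) (hs : 0 ≤ s)
    (h1 : L₁ ≤ a + s) (h2 : L₂ ≤ b + s) (hL1 : L₁ ≤ 2) (hL2 : L₂ ≤ 2) :
    a * b * Real.exp (-(a + b + s)) ≤ hh L₁ * hh L₂ := by
  have e1 := factorBound a s L₁ ha hs h1 hL1
  have e2 := factorBound b s L₂ hb hs h2 hL2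
  have key : (a * Real.exp (-(a+s))) * (b * Real.exp (-(b+s))) ≤
      (hh L₁ * Real.exp (-(s/2))) * (hh L₂ * Real.exp (-(s/2))) :=
    mul_le_mul e1 e2 (by positivity) (mul_nonneg (hh_nonneg _) (Real.exp_nonneg _))
  calc a * b * Real.exp (-(a + b + s))
      = a * b * Real.exp (-(a+s) + -(b+s) + s) := by
        rw [show -(a+s) + -(b+s) + s = -(a + b + s) by ring]
    _ = a * b * (Real.exp (-(a+s)) * Real.exp (-(b+s)) * Real.exp s) := by
        rw [epp, epp]
    _ = ((a * Real.exp (-(a+s))) * (b * Real.exp (-(b+s)))) * Real.exp s := by ring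
    _ ≤ ((hh L₁ * Real.exp (-(s/2))) * (hh L₂ * Real.exp (-(s/2)))) * Real.exp s :=
        mul_le_mul_of_nonneg_right key (Real.exp_nonneg _)
    _ = hh L₁ * hh L₂ * (Real.exp (-(s/2)) * Real.exp (-(s/2)) * Real.exp s) := by ring
    _ = hh L₁ * hh L₂ * Real.exp (-(s/2) + -(s/2) + s) := by rw [epp, epp]
    _ = hh L₁ * hh L₂ := by
        rw [show -(s/2) + -(s/2) + s = 0 by ring, Real.exp_zero, mul_one]

lemma scalarBound (c L : ℝ) (hc1 : 1 ≤ c) (hc2 : c ≤ 2) (hL0 : 0 ≤ L) (hLc : L ≤ c) :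
    c * (L * hh L ^ 2) ≤ 256 / 81 * Real.exp (c - 4) := by
  have hexp81 : Real.exp 1 ≤ 256 / 81 := by
    have := Real.exp_one_lt_d9; linarith
  unfold hh
  split_ifs with h
  · have h1 : c ≤ Real.exp (c - 1) := by have := Real.add_one_le_exp (c - 1); linarith
    have h2 : c * L ≤ 256 / 81 * Real.exp (c - 2) := by
      calc c * L ≤ c * 1 := mul_le_mul_of_nonneg_left h (by linarith)
        _ = c := mul_one c
        _ ≤ Real.exp (c - 1) := h1
        _ = Real.exp 1 * Real.exp (c - 2) := by rw [epp, show (1:ℝ) + (c-2) = c - 1 by ring]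
        _ ≤ 256 / 81 * Real.exp (c - 2) :=
            mul_le_mul_of_nonneg_right hexp81 (Real.exp_nonneg _)
    calc c * (L * Real.exp (-1) ^ 2) = (c * L) * (Real.exp (-1) * Real.exp (-1)) := by ring
      _ = (c * L) * Real.exp (-1 + -1) := by rw [epp]
      _ ≤ (256 / 81 * Real.exp (c - 2)) * Real.exp (-1 + -1) :=
          mul_le_mul_of_nonneg_right h2 (Real.exp_nonneg _)
      _ = 256 / 81 * (Real.exp (c - 2) * Real.exp (-1 + -1)) := by ring
      _ = 256 / 81 * Real.exp (c - 4) := by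
          rw [epp, show c - 2 + (-1 + -1) = c - 4 by ring]
  · push_neg at h
    have hL0' : (0:ℝ) < L := by linarith
    have step1 : c * Real.exp (-c) ≤ L * Real.exp (-L) := by
      have he : 1 + (c - L) ≤ Real.exp (c - L) := by
        have := Real.add_one_le_exp (c - L); linarith
      have h4 : c ≤ L * Real.exp (c - L) := by
        calc c ≤ L * (1 + (c - L)) := by
              nlinarith [mul_nonneg (by linarith : (0:ℝ) ≤ L - 1) (by linarith : (0:ℝ) ≤ c - L)]
          _ ≤ L * Real.exp (c - L) := mul_le_mul_of_nonneg_left he hL0'.le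
      calc c * Real.exp (-c) ≤ (L * Real.exp (c - L)) * Real.exp (-c) :=
            mul_le_mul_of_nonneg_right h4 (Real.exp_nonneg _)
        _ = L * Real.exp (c - L + -c) := by rw [mul_assoc, epp]
        _ = L * Real.exp (-L) := by rw [show c - L + -c = -L by ring]
    have step2 : L ^ 4 * Real.exp (-(3 * L)) ≤ 256 / 81 * Real.exp (-4) := by
      have ha : 3 * L / 4 ≤ Real.exp (3 * L / 4 - 1) := by
        have := Real.add_one_le_exp (3 * L / 4 - 1); linarith
      have hb : (3 * L / 4) ^ 4 ≤ Real.exp (3 * L / 4 - 1) ^ 4 :=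
        pow_le_pow_left₀ (by linarith) ha 4
      have hc4 : Real.exp (3 * L / 4 - 1) ^ 4 = Real.exp (3 * L - 4) := by
        rw [← Real.exp_nat_mul]; congr 1; push_cast; ring
      have hd : L ^ 4 ≤ 256 / 81 * Real.exp (3 * L - 4) := by
        rw [← hc4]; nlinarith [hb]
      calc L ^ 4 * Real.exp (-(3 * L))
          ≤ (256 / 81 * Real.exp (3 * L - 4)) * Real.exp (-(3 * L)) :=
            mul_le_mul_of_nonneg_right hd (Real.exp_nonneg _)
        _ = 256 / 81 * Real.exp (3 * L - 4 + -(3 * L)) := by rw [mul_assoc, epp]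
        _ = 256 / 81 * Real.exp (-4) := by rw [show 3*L - 4 + -(3*L) = (-4:ℝ) by ring]
    calc c * (L * (L * Real.exp (-L)) ^ 2)
        = c * (L ^ 3 * (Real.exp (-L) * Real.exp (-L))) * 1 := by ring
      _ = c * (L ^ 3 * (Real.exp (-L) * Real.exp (-L))) * (Real.exp (-c) * Real.exp c) := by
          rw [show Real.exp (-c) * Real.exp c = 1 from by rw [epp]; simp]
      _ = (c * Real.exp (-c)) * (L ^ 3 * (Real.exp (-L) * Real.exp (-L))) * Real.exp c := by
          ring
      _ ≤ (L * Real.exp (-L)) * (L ^ 3 * (Real.exp (-L) * Real.exp (-L))) * Real.exp c := by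
          apply mul_le_mul_of_nonneg_right (mul_le_mul_of_nonneg_right step1 _) (Real.exp_nonneg _)
          positivity
      _ = (L ^ 4 * (Real.exp (-L) * Real.exp (-L) * Real.exp (-L))) * Real.exp c := by ring
      _ = (L ^ 4 * Real.exp (-(3 * L))) * Real.exp c := by
          rw [epp, epp, show -L + -L + -L = -(3*L) by ring]
      _ ≤ (256 / 81 * Real.exp (-4)) * Real.exp c :=
          mul_le_mul_of_nonneg_right step2 (Real.exp_nonneg _)
      _ = 256 / 81 * Real.exp (c - 4) := by
          rw [mul_assoc, epp, show (-4:ℝ) + c = c - 4 by ring]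

set_option maxHeartbeats 1000000 in
/-- Lemma 4.1 (program 1). Let `G` be a graph on `n` vertices with `n/k ≤ δ(G) < 2n/k`, let
`v` be a vertex of minimum degree, `c = k·d_v/n`, and let `A_v` be the set of ordered pairs
of distinct non-adjacent neighbours of `v`. Given for each `(u,w) ∈ A_v` reals
`cu u w, cw u w, x u w` with `c ≤ cu u w, cw u w ≤ 4`, `x u w ≥ z̄_{uvw}`,
`cu u w − x̄_{uv} − x u w + z̄_{uvw} ≥ 0` and `cw u w − x̄_{vw} − x u w + z̄_{uvw} ≥ 0`,
the stated exponential sum is at most `(n²/k²)·(128e/81)`. -/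
theorem program1 (n k : ℕ) (hk : 1 ≤ k) (hkn : k ≤ n)
    (G : SimpleGraph (Fin n)) [DecidableRel G.Adj]
    (hδ₁ : (n : ℝ) / (k : ℝ) ≤ (G.minDegree : ℝ))
    (hδ₂ : (G.minDegree : ℝ) < 2 * (n : ℝ) / (k : ℝ))
    (v : Fin n) (hv : G.degree v = G.minDegree)
    (cu cw x : Fin n → Fin n → ℝ)
    (hdata : ∀ u w : Fin n, G.Adj v u → G.Adj v w → u ≠ w → ¬ G.Adj u w →
      ((k : ℝ) * (G.degree v : ℝ) / (n : ℝ) ≤ cu u w ∧ cu u w ≤ 4) ∧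
      ((k : ℝ) * (G.degree v : ℝ) / (n : ℝ) ≤ cw u w ∧ cw u w ≤ 4) ∧
      (k : ℝ) * ((G.neighborFinset u ∩ G.neighborFinset v ∩ G.neighborFinset w).card : ℝ) /
        (n : ℝ) ≤ x u w ∧
      0 ≤ cu u w - (k : ℝ) * ((G.neighborFinset u ∩ G.neighborFinset v).card : ℝ) / (n : ℝ) -
        x u w +
        (k : ℝ) * ((G.neighborFinset u ∩ G.neighborFinset v ∩ G.neighborFinset w).card : ℝ) /
          (n : ℝ) ∧
      0 ≤ cw u w - (k : ℝ) * ((G.neighborFinset v ∩ G.neighborFinset w).card : ℝ) / (n : ℝ) -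
        x u w +
        (k : ℝ) * ((G.neighborFinset u ∩ G.neighborFinset v ∩ G.neighborFinset w).card : ℝ) /
          (n : ℝ)) :
    1 / 2 * Real.exp (5 - (k : ℝ) * (G.degree v : ℝ) / (n : ℝ)) *
      ∑ p ∈ Finset.univ.filter (fun p : Fin n × Fin n =>
          G.Adj v p.1 ∧ G.Adj v p.2 ∧ p.1 ≠ p.2 ∧ ¬ G.Adj p.1 p.2),
        ((cu p.1 p.2 -
            (k : ℝ) * ((G.neighborFinset p.1 ∩ G.neighborFinset v).card : ℝ) / (n : ℝ) -
            x p.1 p.2 +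
            (k : ℝ) *
              ((G.neighborFinset p.1 ∩ G.neighborFinset v ∩ G.neighborFinset p.2).card : ℝ) /
              (n : ℝ)) *
          (cw p.1 p.2 -
            (k : ℝ) * ((G.neighborFinset v ∩ G.neighborFinset p.2).card : ℝ) / (n : ℝ) -
            x p.1 p.2 +
            (k : ℝ) *
              ((G.neighborFinset p.1 ∩ G.neighborFinset v ∩ G.neighborFinset p.2).card : ℝ) /
              (n : ℝ)) *
          Real.exp (-(cu p.1 p.2 + cw p.1 p.2 -
            (k : ℝ) * ((G.neighborFinset p.1 ∩ G.neighborFinset v).card : ℝ) / (n : ℝ) -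
            (k : ℝ) * ((G.neighborFinset v ∩ G.neighborFinset p.2).card : ℝ) / (n : ℝ) -
            x p.1 p.2 +
            (k : ℝ) *
              ((G.neighborFinset p.1 ∩ G.neighborFinset v ∩ G.neighborFinset p.2).card : ℝ) /
              (n : ℝ)))) ≤
      (n : ℝ) ^ 2 / (k : ℝ) ^ 2 * (128 * Real.exp 1 / 81) := by
  classical
  have hk0 : (0:ℝ) < k := by exact_mod_cast hk
  have hn0 : (0:ℝ) < n := by
    have : (k:ℝ) ≤ n := by exact_mod_cast hkn
    linarith
  set d : ℝ := (G.degree v : ℝ) with hd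
  set c : ℝ := (k:ℝ) * d / n with hcdef
  have hdeg : d = (G.minDegree : ℝ) := by rw [hd, hv]
  have hc1 : 1 ≤ c := by
    rw [hcdef, le_div_iff₀ hn0]
    have h1 : (n:ℝ)/k ≤ d := by rw [hdeg]; exact hδ₁
    rw [div_le_iff₀ hk0] at h1
    linarith
  have hc2 : c < 2 := by
    rw [hcdef, div_lt_iff₀ hn0]
    have h1 : d < 2*(n:ℝ)/k := by rw [hdeg]; exact hδ₂
    rw [lt_div_iff₀ hk0] at h1
    linarith
  have hc0 : (0:ℝ) < c := by linarith
  set X : Fin n → ℝ :=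
    fun u => (k:ℝ) * ((G.neighborFinset u ∩ G.neighborFinset v).card : ℝ) / n with hXdef
  have hX0 : ∀ u, 0 ≤ X u := fun u => by positivity
  have hXc : ∀ u, X u ≤ c := by
    intro u
    have hcard : ((G.neighborFinset u ∩ G.neighborFinset v).card : ℝ) ≤ d := by
      rw [hd, ← SimpleGraph.card_neighborFinset_eq_degree]
      exact_mod_cast Finset.card_le_card Finset.inter_subset_right
    calc X u = (k:ℝ) * ((G.neighborFinset u ∩ G.neighborFinset v).card : ℝ) / n := rfl
      _ ≤ (k:ℝ) * d / n := by gcongr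
      _ = c := hcdef.symm
  set S : Finset (Fin n × Fin n) := Finset.univ.filter (fun p : Fin n × Fin n =>
    G.Adj v p.1 ∧ G.Adj v p.2 ∧ p.1 ≠ p.2 ∧ ¬ G.Adj p.1 p.2) with hSdef
  -- Step A+B : pointwise bound
  have hterm : ∀ p ∈ S,
      ((cu p.1 p.2 -
            (k : ℝ) * ((G.neighborFinset p.1 ∩ G.neighborFinset v).card : ℝ) / (n : ℝ) -
            x p.1 p.2 +
            (k : ℝ) *
              ((G.neighborFinset p.1 ∩ G.neighborFinset v ∩ G.neighborFinset p.2).card : ℝ) /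
              (n : ℝ)) *
          (cw p.1 p.2 -
            (k : ℝ) * ((G.neighborFinset v ∩ G.neighborFinset p.2).card : ℝ) / (n : ℝ) -
            x p.1 p.2 +
            (k : ℝ) *
              ((G.neighborFinset p.1 ∩ G.neighborFinset v ∩ G.neighborFinset p.2).card : ℝ) /
              (n : ℝ)) *
          Real.exp (-(cu p.1 p.2 + cw p.1 p.2 -
            (k : ℝ) * ((G.neighborFinset p.1 ∩ G.neighborFinset v).card : ℝ) / (n : ℝ) -
            (k : ℝ) * ((G.neighborFinset v ∩ G.neighborFinset p.2).card : ℝ) / (n : ℝ) -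
            x p.1 p.2 +
            (k : ℝ) *
              ((G.neighborFinset p.1 ∩ G.neighborFinset v ∩ G.neighborFinset p.2).card : ℝ) /
              (n : ℝ)))) ≤ (hh (c - X p.1) ^ 2 + hh (c - X p.2) ^ 2) / 2 := by
    intro p hp
    rw [hSdef, Finset.mem_filter] at hp
    obtain ⟨-, h1, h2, h3, h4⟩ := hp
    obtain ⟨⟨hcu1, hcu2⟩, ⟨hcw1, hcw2⟩, hx, hA, hB⟩ := hdata p.1 p.2 h1 h2 h3 h4
    have hcomm : (G.neighborFinset v ∩ G.neighborFinset p.2) =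
        (G.neighborFinset p.2 ∩ G.neighborFinset v) := Finset.inter_comm _ _
    set Z : ℝ := (k : ℝ) *
      ((G.neighborFinset p.1 ∩ G.neighborFinset v ∩ G.neighborFinset p.2).card : ℝ) / (n : ℝ)
      with hZdef
    set a : ℝ := cu p.1 p.2 - X p.1 - x p.1 p.2 + Z with hadef
    set b : ℝ := cw p.1 p.2 - X p.2 - x p.1 p.2 + Z with hbdef
    set s : ℝ := x p.1 p.2 - Z with hsdef
    have ha : 0 ≤ a := by rw [hadef, hXdef]; exact hA
    have hb : 0 ≤ b := by rw [hbdef, hXdef]; rw [hcomm] at hB; exact hB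
    have hs : 0 ≤ s := by rw [hsdef]; linarith [hx]
    have key := pairBound a b s (c - X p.1) (c - X p.2) ha hb hs
      (by rw [hadef, hsdef]; have := hX0 p.1; linarith [hcu1])
      (by rw [hbdef, hsdef]; have := hX0 p.2; linarith [hcw1])
      (by have := hX0 p.1; linarith)
      (by have := hX0 p.2; linarith)
    have amgm : hh (c - X p.1) * hh (c - X p.2)
        ≤ (hh (c - X p.1) ^ 2 + hh (c - X p.2) ^ 2) / 2 := by
      nlinarith [sq_nonneg (hh (c - X p.1) - hh (c - X p.2))]
    have hX1 : (k : ℝ) * ((G.neighborFinset p.1 ∩ G.neighborFinset v).card : ℝ) / (n:ℝ)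
        = X p.1 := rfl
    have hX2 : (k : ℝ) * ((G.neighborFinset v ∩ G.neighborFinset p.2).card : ℝ) / (n:ℝ)
        = X p.2 := by rw [hcomm]
    rw [hX1, hX2, show -(cu p.1 p.2 + cw p.1 p.2 - X p.1 - X p.2 - x p.1 p.2 + Z)
        = -((cu p.1 p.2 - X p.1 - x p.1 p.2 + Z) + (cw p.1 p.2 - X p.2 - x p.1 p.2 + Z)
          + (x p.1 p.2 - Z)) from by ring]
    exact le_trans key amgm
  -- Step B : symmetry
  have hswap : ∑ p ∈ S, hh (c - X p.2) ^ 2 = ∑ p ∈ S, hh (c - X p.1) ^ 2 := by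
    apply Finset.sum_nbij' (i := Prod.swap) (j := Prod.swap)
    · intro p hp
      rw [hSdef, Finset.mem_filter] at hp ⊢
      obtain ⟨-, h1, h2, h3, h4⟩ := hp
      refine ⟨Finset.mem_univ _, h2, h1, h3.symm, fun hadj => h4 hadj.symm⟩
    · intro p hp
      rw [hSdef, Finset.mem_filter] at hp ⊢
      obtain ⟨-, h1, h2, h3, h4⟩ := hp
      refine ⟨Finset.mem_univ _, h2, h1, h3.symm, fun hadj => h4 hadj.symm⟩
    · intro p _; exact Prod.swap_swap p
    · intro p _; exact Prod.swap_swap p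
    · intro p _; rfl
  -- Step C : regroup over first coordinate
  have regroup : ∑ p ∈ S, hh (c - X p.1) ^ 2
      = ∑ u : Fin n, ((Finset.univ.filter
          (fun w => G.Adj v u ∧ G.Adj v w ∧ u ≠ w ∧ ¬ G.Adj u w)).card : ℝ) * hh (c - X u) ^ 2 := by
    rw [hSdef, Finset.sum_filter, Fintype.sum_prod_type]
    refine Finset.sum_congr rfl (fun u _ => ?_)
    rw [← Finset.sum_filter]
    simp only [ne_eq]
    rw [Finset.sum_const, nsmul_eq_mul]
  -- Step D : per-u bound
  have perU : ∀ u : Fin n, ((Finset.univ.filter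
        (fun w => G.Adj v u ∧ G.Adj v w ∧ u ≠ w ∧ ¬ G.Adj u w)).card : ℝ) * hh (c - X u) ^ 2
      ≤ (if G.Adj v u then (1:ℝ) else 0) * ((n/k) * (256 / 81 * Real.exp (c - 4) / c)) := by
    intro u
    by_cases hadj : G.Adj v u
    · rw [if_pos hadj, one_mul]
      have hsub : (Finset.univ.filter (fun w => G.Adj v u ∧ G.Adj v w ∧ u ≠ w ∧ ¬ G.Adj u w))
          ⊆ G.neighborFinset v \ G.neighborFinset u := by
        intro w hw
        simp only [Finset.mem_filter, Finset.mem_univ, true_and] at hw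
        rw [Finset.mem_sdiff, SimpleGraph.mem_neighborFinset, SimpleGraph.mem_neighborFinset]
        exact ⟨hw.2.1, hw.2.2.2⟩
      have hcnt : (((Finset.univ.filter
            (fun w => G.Adj v u ∧ G.Adj v w ∧ u ≠ w ∧ ¬ G.Adj u w)).card : ℕ) : ℝ)
          ≤ d - ((G.neighborFinset u ∩ G.neighborFinset v).card : ℝ) := by
        have h1 := Finset.card_le_card hsub
        have h2 := Finset.card_sdiff_add_card_inter (G.neighborFinset v) (G.neighborFinset u)
        rw [Finset.inter_comm] at h2
        have h3 : (Finset.univ.filter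
            (fun w => G.Adj v u ∧ G.Adj v w ∧ u ≠ w ∧ ¬ G.Adj u w)).card
            + (G.neighborFinset u ∩ G.neighborFinset v).card ≤ G.degree v := by
          rw [← SimpleGraph.card_neighborFinset_eq_degree, ← h2]
          omega
        rw [hd]
        have h4 : (((Finset.univ.filter
            (fun w => G.Adj v u ∧ G.Adj v w ∧ u ≠ w ∧ ¬ G.Adj u w)).card : ℝ))
            + ((G.neighborFinset u ∩ G.neighborFinset v).card : ℝ) ≤ (G.degree v : ℝ) := by
          exact_mod_cast h3
        linarith
      have hcnt2 : d - ((G.neighborFinset u ∩ G.neighborFinset v).card : ℝ)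
          = (n/k) * (c - X u) := by
        rw [hcdef, hXdef]
        field_simp
      have hscalar := scalarBound c (c - X u) hc1 hc2.le
        (by linarith [hXc u]) (by linarith [hX0 u])
      calc ((Finset.univ.filter
            (fun w => G.Adj v u ∧ G.Adj v w ∧ u ≠ w ∧ ¬ G.Adj u w)).card : ℝ) * hh (c - X u) ^ 2
          ≤ ((n/k) * (c - X u)) * hh (c - X u) ^ 2 := by
            apply mul_le_mul_of_nonneg_right _ (by positivity)
            rw [← hcnt2]; exact hcnt
        _ = ((n:ℝ)/k) * ((c - X u) * hh (c - X u) ^ 2) := by ring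
        _ ≤ ((n:ℝ)/k) * (256 / 81 * Real.exp (c - 4) / c) := by
            apply mul_le_mul_of_nonneg_left _ (by positivity)
            rw [le_div_iff₀ hc0]
            nlinarith [hscalar]
    · rw [if_neg hadj, zero_mul]
      have hemp : (Finset.univ.filter
          (fun w => G.Adj v u ∧ G.Adj v w ∧ u ≠ w ∧ ¬ G.Adj u w)) = ∅ :=
        Finset.filter_false_of_mem (fun w _ hw => hadj hw.1)
      rw [hemp]
      simp
  -- Step E : sum of indicator
  have sumU : ∑ u : Fin n, (if G.Adj v u then (1:ℝ) else 0)
      * ((n/k) * (256 / 81 * Real.exp (c - 4) / c))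
      = d * ((n/k) * (256 / 81 * Real.exp (c - 4) / c)) := by
    rw [← Finset.sum_mul]
    congr 1
    rw [Finset.sum_boole]
    have hfil : Finset.univ.filter (fun u => G.Adj v u) = G.neighborFinset v := by
      ext w; simp [SimpleGraph.mem_neighborFinset]
    rw [hfil, SimpleGraph.card_neighborFinset_eq_degree, hd]
  -- assemble
  have main : ∑ p ∈ S,
      ((cu p.1 p.2 -
            (k : ℝ) * ((G.neighborFinset p.1 ∩ G.neighborFinset v).card : ℝ) / (n : ℝ) -
            x p.1 p.2 +
            (k : ℝ) *
              ((G.neighborFinset p.1 ∩ G.neighborFinset v ∩ G.neighborFinset p.2).card : ℝ) /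
              (n : ℝ)) *
          (cw p.1 p.2 -
            (k : ℝ) * ((G.neighborFinset v ∩ G.neighborFinset p.2).card : ℝ) / (n : ℝ) -
            x p.1 p.2 +
            (k : ℝ) *
              ((G.neighborFinset p.1 ∩ G.neighborFinset v ∩ G.neighborFinset p.2).card : ℝ) /
              (n : ℝ)) *
          Real.exp (-(cu p.1 p.2 + cw p.1 p.2 -
            (k : ℝ) * ((G.neighborFinset p.1 ∩ G.neighborFinset v).card : ℝ) / (n : ℝ) -
            (k : ℝ) * ((G.neighborFinset v ∩ G.neighborFinset p.2).card : ℝ) / (n : ℝ) -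
            x p.1 p.2 +
            (k : ℝ) *
              ((G.neighborFinset p.1 ∩ G.neighborFinset v ∩ G.neighborFinset p.2).card : ℝ) /
              (n : ℝ))))
      ≤ d * ((n/k) * (256 / 81 * Real.exp (c - 4) / c)) := by
    calc _ ≤ ∑ p ∈ S, (hh (c - X p.1) ^ 2 + hh (c - X p.2) ^ 2) / 2 := Finset.sum_le_sum hterm
      _ = ∑ p ∈ S, hh (c - X p.1) ^ 2 := by
          rw [← Finset.sum_div, Finset.sum_add_distrib, hswap]
          ring
      _ = ∑ u : Fin n, ((Finset.univ.filter
          (fun w => G.Adj v u ∧ G.Adj v w ∧ u ≠ w ∧ ¬ G.Adj u w)).card : ℝ) * hh (c - X u) ^ 2 :=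
          regroup
      _ ≤ ∑ u : Fin n, (if G.Adj v u then (1:ℝ) else 0)
            * ((n/k) * (256 / 81 * Real.exp (c - 4) / c)) :=
          Finset.sum_le_sum (fun u _ => perU u)
      _ = d * ((n/k) * (256 / 81 * Real.exp (c - 4) / c)) := sumU
  have hdc : d = (n:ℝ)/k * c := by rw [hcdef]; field_simp
  refine le_trans (mul_le_mul_of_nonneg_left main (by positivity)) (le_of_eq ?_)
  calc 1 / 2 * Real.exp (5 - c) * (d * ((n/k) * (256 / 81 * Real.exp (c - 4) / c)))
      = (n:ℝ)^2/(k:ℝ)^2 * (128 * (Real.exp (5 - c) * Real.exp (c - 4)) / 81) := by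
        rw [hdc]; field_simp; ring
    _ = (n : ℝ) ^ 2 / (k : ℝ) ^ 2 * (128 * Real.exp 1 / 81) := by
        rw [epp, show (5 - c) + (c - 4) = (1:ℝ) by ring]
end

section
/- Let n ≥ k ≥ 1 be integers and let G be a graph on n vertices satisfying n/k ≤ δ(G) < 2n/k. Let v be a vertex of minimum degree and set c = k·d_v/n. Let A_v = {(u,w) : u, w ∈ N_G(v), u ≠ w, uw ∉ E(G)}, and for a neighbour u of v write x_u = k·x_{uv}/n. Suppose that for every (u,w) ∈ A_v we are given real numbers c_u^{uw}, c_w^{uw} such that max{x_u, c} ≤ c_u^{uw} ≤ 4 and max{x_w, c} ≤ c_w^{uw} ≤ 4. Then, with f(x) = x·e^{−x}, (1/2)·e^{5−c} · Σ_{(u,w) ∈ A_v} f(c_u^{uw} − x_u)·f(c_w^{uw} − x_w) ≤ (n²/k²)·(128e/81). -/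
private lemma f_le_inv (a : ℝ) : a * Real.exp (-a) ≤ Real.exp (-1) := by
  have h := Real.add_one_le_exp (a - 1)
  have ha' : a ≤ Real.exp (a - 1) := by linarith
  calc a * Real.exp (-a) ≤ Real.exp (a - 1) * Real.exp (-a) :=
        mul_le_mul_of_nonneg_right ha' (Real.exp_pos _).le
    _ = Real.exp (-1) := by rw [← Real.exp_add]; congr 1; ring

private lemma f_anti {s a : ℝ} (h1 : 1 ≤ s) (h2 : s ≤ a) :
    a * Real.exp (-a) ≤ s * Real.exp (-s) := by
  have h := Real.add_one_le_exp (a - s)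
  have hE := Real.exp_pos (a - s)
  have ha' : a ≤ s * Real.exp (a - s) := by nlinarith
  calc a * Real.exp (-a) ≤ s * Real.exp (a - s) * Real.exp (-a) :=
        mul_le_mul_of_nonneg_right ha' (Real.exp_pos _).le
    _ = s * Real.exp (-s) := by
        rw [mul_assoc, ← Real.exp_add]; congr 1; ring

private lemma quart (t : ℝ) (ht : 0 ≤ t) : t ^ 4 ≤ Real.exp (4 * (t - 1)) := by
  have h : t ≤ Real.exp (t - 1) := by have := Real.add_one_le_exp (t - 1); linarith
  calc t ^ 4 ≤ (Real.exp (t - 1)) ^ 4 := pow_le_pow_left₀ ht h 4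
    _ = Real.exp (4 * (t - 1)) := by
        rw [← Real.exp_nat_mul]; norm_num

private lemma fsq_le (x c t : ℝ) (hxc : x ≤ c) (hct : c ≤ t) :
    ((t - x) * Real.exp (-(t - x))) ^ 2 ≤
      (if c - x ≤ 1 then Real.exp (-2) else (c - x) ^ 2 * Real.exp (-(2 * (c - x)))) := by
  have ha0 : 0 ≤ t - x := by linarith
  have hfa0 : 0 ≤ (t - x) * Real.exp (-(t - x)) := by positivity
  split_ifs with h1
  · calc ((t - x) * Real.exp (-(t - x))) ^ 2 ≤ (Real.exp (-1)) ^ 2 :=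
          pow_le_pow_left₀ hfa0 (f_le_inv (t - x)) 2
      _ = Real.exp (-2) := by rw [← Real.exp_nat_mul]; congr 1; ring
  · have hs1 : 1 ≤ c - x := le_of_lt (lt_of_not_ge h1)
    have hf := f_anti hs1 (by linarith : c - x ≤ t - x)
    calc ((t - x) * Real.exp (-(t - x))) ^ 2 ≤ ((c - x) * Real.exp (-(c - x))) ^ 2 :=
          pow_le_pow_left₀ hfa0 hf 2
      _ = (c - x) ^ 2 * Real.exp (-(2 * (c - x))) := by
          rw [mul_pow, ← Real.exp_nat_mul]; congr 2; ring

private lemma core (c s : ℝ) (hc1 : 1 ≤ c) (hs0 : 0 ≤ s) (hsc : s ≤ c) :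
    c * (s * (if s ≤ 1 then Real.exp (-2) else s ^ 2 * Real.exp (-(2 * s)))) ≤
      256 / 81 * Real.exp (c - 4) := by
  have he : Real.exp 1 ≤ 256 / 81 := by
    have := Real.exp_one_lt_d9; linarith
  split_ifs with hs1
  · have hc' : c ≤ Real.exp (c - 1) := by have := Real.add_one_le_exp (c - 1); linarith
    have h2 : Real.exp (c - 1) = Real.exp 1 * Real.exp (c - 2) := by
      rw [← Real.exp_add]; congr 1; ring
    have h3 : Real.exp 1 * Real.exp (c - 2) ≤ 256 / 81 * Real.exp (c - 2) :=
      mul_le_mul_of_nonneg_right he (Real.exp_pos _).le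
    have h1 : c * s ≤ 256 / 81 * Real.exp (c - 2) := by nlinarith [hc'.trans (h2.le.trans h3)]
    have h5 : Real.exp (c - 2) * Real.exp (-2) = Real.exp (c - 4) := by
      rw [← Real.exp_add]; congr 1; ring
    calc c * (s * Real.exp (-2)) = (c * s) * Real.exp (-2) := by ring
      _ ≤ (256 / 81 * Real.exp (c - 2)) * Real.exp (-2) :=
          mul_le_mul_of_nonneg_right h1 (Real.exp_pos _).le
      _ = 256 / 81 * Real.exp (c - 4) := by rw [mul_assoc, h5]
  · have hs1' : (1 : ℝ) ≤ s := le_of_lt (lt_of_not_ge hs1)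
    have hf := f_anti hs1' hsc
    have hq : s ^ 4 ≤ 256 / 81 * Real.exp (3 * s - 4) := by
      have h := quart (3 * s / 4) (by linarith)
      have h4 : (4 : ℝ) * (3 * s / 4 - 1) = 3 * s - 4 := by ring
      calc s ^ 4 = 256 / 81 * (3 * s / 4) ^ 4 := by ring
        _ ≤ 256 / 81 * Real.exp (4 * (3 * s / 4 - 1)) := by
            exact mul_le_mul_of_nonneg_left h (by norm_num)
        _ = 256 / 81 * Real.exp (3 * s - 4) := by rw [h4]
    have hpos3 : (0 : ℝ) ≤ s ^ 3 * Real.exp (-(2 * s)) * Real.exp c := by positivity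
    have key1 := mul_le_mul_of_nonneg_right hf hpos3
    have e1 : Real.exp (-c) * Real.exp c = 1 := by rw [← Real.exp_add]; simp
    calc c * (s * (s ^ 2 * Real.exp (-(2 * s))))
        = c * Real.exp (-c) * (s ^ 3 * Real.exp (-(2 * s)) * Real.exp c) := by
          rw [show c * Real.exp (-c) * (s ^ 3 * Real.exp (-(2 * s)) * Real.exp c)
              = (Real.exp (-c) * Real.exp c) * (c * (s ^ 3 * Real.exp (-(2 * s)))) from by ring,
            e1]; ring
      _ ≤ s * Real.exp (-s) * (s ^ 3 * Real.exp (-(2 * s)) * Real.exp c) := key1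
      _ = s ^ 4 * (Real.exp (-s) * Real.exp (-(2 * s))) * Real.exp c := by ring
      _ = s ^ 4 * Real.exp (-(3 * s)) * Real.exp c := by
          rw [← Real.exp_add]; congr 2; ring
      _ ≤ 256 / 81 * Real.exp (3 * s - 4) * Real.exp (-(3 * s)) * Real.exp c := by
          have := mul_le_mul_of_nonneg_right hq (Real.exp_pos (-(3*s))).le
          exact mul_le_mul_of_nonneg_right this (Real.exp_pos c).le
      _ = 256 / 81 * Real.exp (c - 4) := by
          rw [mul_assoc, mul_assoc, ← Real.exp_add, ← Real.exp_add]; congr 2; ring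

/-- Lemma 4.2 (program 2). With `f(x) = x·e^{−x}`, `G` a graph on `n` vertices with
`n/k ≤ δ(G) < 2n/k`, `v` a vertex of minimum degree, `c = k·d_v/n`, `x_u = k·x_{uv}/n`, and
given reals `cu u w, cw u w` with `max{x_u, c} ≤ cu u w ≤ 4` and `max{x_w, c} ≤ cw u w ≤ 4`
for every pair `(u,w)` of distinct non-adjacent neighbours of `v`, the stated sum is at most
`(n²/k²)·(128e/81)`. -/
theorem program2 (n k : ℕ) (hk : 1 ≤ k) (hkn : k ≤ n)
    (G : SimpleGraph (Fin n)) [DecidableRel G.Adj]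
    (hδ₁ : (n : ℝ) / (k : ℝ) ≤ (G.minDegree : ℝ))
    (hδ₂ : (G.minDegree : ℝ) < 2 * (n : ℝ) / (k : ℝ))
    (v : Fin n) (hv : G.degree v = G.minDegree)
    (cu cw : Fin n → Fin n → ℝ)
    (hdata : ∀ u w : Fin n, G.Adj v u → G.Adj v w → u ≠ w → ¬ G.Adj u w →
      (max ((k : ℝ) * ((G.neighborFinset u ∩ G.neighborFinset v).card : ℝ) / (n : ℝ))
          ((k : ℝ) * (G.degree v : ℝ) / (n : ℝ)) ≤ cu u w ∧ cu u w ≤ 4) ∧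
      (max ((k : ℝ) * ((G.neighborFinset w ∩ G.neighborFinset v).card : ℝ) / (n : ℝ))
          ((k : ℝ) * (G.degree v : ℝ) / (n : ℝ)) ≤ cw u w ∧ cw u w ≤ 4)) :
    1 / 2 * Real.exp (5 - (k : ℝ) * (G.degree v : ℝ) / (n : ℝ)) *
      ∑ p ∈ Finset.univ.filter (fun p : Fin n × Fin n =>
          G.Adj v p.1 ∧ G.Adj v p.2 ∧ p.1 ≠ p.2 ∧ ¬ G.Adj p.1 p.2),
        (((cu p.1 p.2 -
            (k : ℝ) * ((G.neighborFinset p.1 ∩ G.neighborFinset v).card : ℝ) / (n : ℝ)) *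
          Real.exp (-(cu p.1 p.2 -
            (k : ℝ) * ((G.neighborFinset p.1 ∩ G.neighborFinset v).card : ℝ) / (n : ℝ)))) *
         ((cw p.1 p.2 -
            (k : ℝ) * ((G.neighborFinset p.2 ∩ G.neighborFinset v).card : ℝ) / (n : ℝ)) *
          Real.exp (-(cw p.1 p.2 -
            (k : ℝ) * ((G.neighborFinset p.2 ∩ G.neighborFinset v).card : ℝ) / (n : ℝ))))) ≤
      (n : ℝ) ^ 2 / (k : ℝ) ^ 2 * (128 * Real.exp 1 / 81) := by
  classical
  have hn : 0 < n := lt_of_lt_of_le hk hkn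
  have hkR : (0 : ℝ) < (k : ℝ) := by exact_mod_cast hk
  have hnR : (0 : ℝ) < (n : ℝ) := by exact_mod_cast hn
  set c : ℝ := (k : ℝ) * (G.degree v : ℝ) / (n : ℝ) with hc_def
  set X : Fin n → ℝ := fun u =>
    (k : ℝ) * ((G.neighborFinset u ∩ G.neighborFinset v).card : ℝ) / (n : ℝ) with hX_def
  have hdv : (n : ℝ) / (k : ℝ) ≤ (G.degree v : ℝ) := by rw [hv]; exact hδ₁
  have hc1 : 1 ≤ c := by
    rw [hc_def, le_div_iff₀ hnR]
    have := (div_le_iff₀ hkR).mp hdv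
    nlinarith
  have hc0 : (0 : ℝ) < c := lt_of_lt_of_le one_pos hc1
  have hX0 : ∀ u : Fin n, 0 ≤ X u := by
    intro u
    show 0 ≤ (k : ℝ) * ((G.neighborFinset u ∩ G.neighborFinset v).card : ℝ) / (n : ℝ)
    positivity
  have hXc : ∀ u : Fin n, X u ≤ c := by
    intro u
    have h1 : (G.neighborFinset u ∩ G.neighborFinset v).card ≤ (G.neighborFinset v).card :=
      Finset.card_le_card Finset.inter_subset_right
    rw [SimpleGraph.card_neighborFinset_eq_degree] at h1
    have h2 : ((G.neighborFinset u ∩ G.neighborFinset v).card : ℝ) ≤ (G.degree v : ℝ) := by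
      exact_mod_cast h1
    show (k : ℝ) * ((G.neighborFinset u ∩ G.neighborFinset v).card : ℝ) / (n : ℝ)
        ≤ (k : ℝ) * (G.degree v : ℝ) / (n : ℝ)
    gcongr
  set B : Fin n → ℝ := fun u =>
    if c - X u ≤ 1 then Real.exp (-2) else (c - X u) ^ 2 * Real.exp (-(2 * (c - X u)))
    with hB_def
  have hB0 : ∀ u : Fin n, 0 ≤ B u := by
    intro u
    show 0 ≤ if c - X u ≤ 1 then Real.exp (-2) else (c - X u) ^ 2 * Real.exp (-(2 * (c - X u)))
    split_ifs <;> positivity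
  set P : Fin n × Fin n → Prop := fun p =>
    G.Adj v p.1 ∧ G.Adj v p.2 ∧ p.1 ≠ p.2 ∧ ¬ G.Adj p.1 p.2 with hP_def
  set A : Finset (Fin n × Fin n) := Finset.univ.filter P with hA_def
  -- Step A : pointwise bound
  have stepA : ∀ p ∈ A,
      ((cu p.1 p.2 - X p.1) * Real.exp (-(cu p.1 p.2 - X p.1))) *
      ((cw p.1 p.2 - X p.2) * Real.exp (-(cw p.1 p.2 - X p.2))) ≤ (B p.1 + B p.2) / 2 := by
    rintro ⟨u, w⟩ hp
    rw [hA_def, Finset.mem_filter] at hp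
    have hp2 : G.Adj v u ∧ G.Adj v w ∧ u ≠ w ∧ ¬ G.Adj u w := hp.2
    obtain ⟨huv, hwv, hne, hnadj⟩ := hp2
    obtain ⟨⟨hcu1, hcu2⟩, ⟨hcw1, hcw2⟩⟩ := hdata u w huv hwv hne hnadj
    have hcuc : c ≤ cu u w := le_trans (le_max_right _ _) hcu1
    have hcwc : c ≤ cw u w := le_trans (le_max_right _ _) hcw1
    have h1 : ((cu u w - X u) * Real.exp (-(cu u w - X u))) ^ 2 ≤ B u :=
      fsq_le (X u) c (cu u w) (hXc u) hcuc
    have h2 : ((cw u w - X w) * Real.exp (-(cw u w - X w))) ^ 2 ≤ B w :=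
      fsq_le (X w) c (cw u w) (hXc w) hcwc
    show ((cu u w - X u) * Real.exp (-(cu u w - X u))) *
      ((cw u w - X w) * Real.exp (-(cw u w - X w))) ≤ (B u + B w) / 2
    nlinarith [sq_nonneg ((cu u w - X u) * Real.exp (-(cu u w - X u)) -
      (cw u w - X w) * Real.exp (-(cw u w - X w)))]
  -- symmetry of P
  have hPsymm : ∀ p : Fin n × Fin n, P p.swap ↔ P p := by
    rintro ⟨u, w⟩
    show (G.Adj v w ∧ G.Adj v u ∧ w ≠ u ∧ ¬ G.Adj w u) ↔
      (G.Adj v u ∧ G.Adj v w ∧ u ≠ w ∧ ¬ G.Adj u w)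
    constructor <;> rintro ⟨h1, h2, h3, h4⟩ <;>
      exact ⟨h2, h1, h3.symm, fun h => h4 h.symm⟩
  have hswap : ∑ p ∈ A, B p.2 = ∑ p ∈ A, B p.1 := by
    rw [hA_def, Finset.sum_filter, Finset.sum_filter]
    exact Fintype.sum_equiv (Equiv.prodComm (Fin n) (Fin n))
      (fun p => if P p then B p.2 else 0) (fun p => if P p then B p.1 else 0)
      (fun p => if_congr (hPsymm p).symm rfl rfl)
  set T : ℝ := (n : ℝ) / (k : ℝ) * (256 / 81 * Real.exp (c - 4) / c) with hT_def
  have hT0 : 0 ≤ T := by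
    rw [hT_def]; positivity
  -- counting bound
  have stepC : ∑ p ∈ A, B p.1 ≤ (G.degree v : ℝ) * T := by
    rw [hA_def, Finset.sum_filter, Fintype.sum_prod_type]
    have inner : ∀ u : Fin n,
        (∑ w : Fin n, if P (u, w) then B u else 0) ≤ if G.Adj v u then T else 0 := by
      intro u
      by_cases hadj : G.Adj v u
      · rw [if_pos hadj]
        have heq : (∑ w : Fin n, if P (u, w) then B u else 0)
            = ((Finset.univ.filter (fun w => P (u, w))).card : ℝ) * B u := by
          rw [← Finset.sum_filter, Finset.sum_const, nsmul_eq_mul]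
        rw [heq]
        have hcard : (Finset.univ.filter (fun w => P (u, w))).card
            + (G.neighborFinset u ∩ G.neighborFinset v).card ≤ G.degree v := by
          rw [← SimpleGraph.card_neighborFinset_eq_degree]
          have hdisj : Disjoint (Finset.univ.filter (fun w => P (u, w)))
              (G.neighborFinset u ∩ G.neighborFinset v) := by
            rw [Finset.disjoint_left]
            intro w hw hw2
            have hw' : G.Adj v u ∧ G.Adj v w ∧ u ≠ w ∧ ¬ G.Adj u w :=
              (Finset.mem_filter.mp hw).2
            rw [Finset.mem_inter, SimpleGraph.mem_neighborFinset] at hw2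
            exact hw'.2.2.2 hw2.1
          rw [← Finset.card_union_of_disjoint hdisj]
          apply Finset.card_le_card
          intro w hw
          rw [Finset.mem_union] at hw
          rcases hw with hw | hw
          · have hw' : G.Adj v u ∧ G.Adj v w ∧ u ≠ w ∧ ¬ G.Adj u w :=
              (Finset.mem_filter.mp hw).2
            rw [SimpleGraph.mem_neighborFinset]
            exact hw'.2.1
          · exact (Finset.mem_inter.mp hw).2
        have hcardR : ((Finset.univ.filter (fun w => P (u, w))).card : ℝ)
            ≤ (G.degree v : ℝ) - ((G.neighborFinset u ∩ G.neighborFinset v).card : ℝ) := by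
          have hh : ((Finset.univ.filter (fun w => P (u, w))).card : ℝ)
              + ((G.neighborFinset u ∩ G.neighborFinset v).card : ℝ) ≤ (G.degree v : ℝ) := by
            exact_mod_cast hcard
          linarith
        have hrw : (G.degree v : ℝ) - ((G.neighborFinset u ∩ G.neighborFinset v).card : ℝ)
            = (n : ℝ) / (k : ℝ) * (c - X u) := by
          show (G.degree v : ℝ) - ((G.neighborFinset u ∩ G.neighborFinset v).card : ℝ)
            = (n : ℝ) / (k : ℝ) * ((k : ℝ) * (G.degree v : ℝ) / (n : ℝ)
              - (k : ℝ) * ((G.neighborFinset u ∩ G.neighborFinset v).card : ℝ) / (n : ℝ))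
          field_simp
        have hkey : ((G.degree v : ℝ) - ((G.neighborFinset u ∩ G.neighborFinset v).card : ℝ))
            * B u ≤ T := by
          rw [hrw, hT_def, mul_assoc]
          apply mul_le_mul_of_nonneg_left _ (by positivity)
          have hcore := core c (c - X u) hc1 (by linarith [hXc u]) (by linarith [hX0 u])
          rw [le_div_iff₀ hc0]
          calc (c - X u) * B u * c = c * ((c - X u) * B u) := by ring
            _ ≤ 256 / 81 * Real.exp (c - 4) := hcore
        calc ((Finset.univ.filter (fun w => P (u, w))).card : ℝ) * B u
            ≤ ((G.degree v : ℝ) - ((G.neighborFinset u ∩ G.neighborFinset v).card : ℝ))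
              * B u := mul_le_mul_of_nonneg_right hcardR (hB0 u)
          _ ≤ T := hkey
      · rw [if_neg hadj]
        have hz : ∀ w : Fin n, (if P (u, w) then B u else 0) = 0 := by
          intro w
          rw [if_neg]
          intro h
          have h' : G.Adj v u ∧ G.Adj v w ∧ u ≠ w ∧ ¬ G.Adj u w := h
          exact hadj h'.1
        simp only [hz, Finset.sum_const_zero, le_refl]
    calc (∑ u : Fin n, ∑ w : Fin n, if P (u, w) then B (u, w).1 else 0)
        ≤ ∑ u : Fin n, (if G.Adj v u then T else 0) := Finset.sum_le_sum (fun u _ => inner u)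
      _ = ∑ u ∈ G.neighborFinset v, T := by
          rw [SimpleGraph.neighborFinset_eq_filter, Finset.sum_filter]
      _ = (G.degree v : ℝ) * T := by
          rw [Finset.sum_const, nsmul_eq_mul, SimpleGraph.card_neighborFinset_eq_degree]
  -- combine
  have hsum : (∑ p ∈ A,
      ((cu p.1 p.2 - X p.1) * Real.exp (-(cu p.1 p.2 - X p.1))) *
      ((cw p.1 p.2 - X p.2) * Real.exp (-(cw p.1 p.2 - X p.2)))) ≤ (G.degree v : ℝ) * T := by
    calc (∑ p ∈ A, ((cu p.1 p.2 - X p.1) * Real.exp (-(cu p.1 p.2 - X p.1))) *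
        ((cw p.1 p.2 - X p.2) * Real.exp (-(cw p.1 p.2 - X p.2))))
        ≤ ∑ p ∈ A, (B p.1 + B p.2) / 2 := Finset.sum_le_sum stepA
      _ = ((∑ p ∈ A, B p.1) + (∑ p ∈ A, B p.2)) / 2 := by
          rw [← Finset.sum_add_distrib, ← Finset.sum_div]
      _ = ∑ p ∈ A, B p.1 := by rw [hswap]; ring
      _ ≤ (G.degree v : ℝ) * T := stepC
  have hpre : (0 : ℝ) ≤ 1 / 2 * Real.exp (5 - c) := by positivity
  have hdv_eq : (G.degree v : ℝ) = c * ((n : ℝ) / (k : ℝ)) := by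
    rw [hc_def]; field_simp
  have hdvT : (G.degree v : ℝ) * T
      = ((n : ℝ) / (k : ℝ)) ^ 2 * (256 / 81) * Real.exp (c - 4) := by
    rw [hdv_eq, hT_def]
    rw [show c * ((n : ℝ) / (k : ℝ)) * ((n : ℝ) / (k : ℝ) * (256 / 81 * Real.exp (c - 4) / c))
        = ((n : ℝ) / (k : ℝ)) ^ 2 * (256 / 81) * Real.exp (c - 4) * (c * c⁻¹) from by ring]
    rw [mul_inv_cancel₀ (ne_of_gt hc0), mul_one]
  have hexp : Real.exp (5 - c) * Real.exp (c - 4) = Real.exp 1 := by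
    rw [← Real.exp_add]; congr 1; ring
  have hfinal : 1 / 2 * Real.exp (5 - c) * ((G.degree v : ℝ) * T)
      = (n : ℝ) ^ 2 / (k : ℝ) ^ 2 * (128 * Real.exp 1 / 81) := by
    rw [hdvT,
      show 1 / 2 * Real.exp (5 - c) * (((n : ℝ) / (k : ℝ)) ^ 2 * (256 / 81) * Real.exp (c - 4))
        = ((n : ℝ) / (k : ℝ)) ^ 2 * (128 * (Real.exp (5 - c) * Real.exp (c - 4)) / 81)
        from by ring,
      hexp, div_pow]
  show 1 / 2 * Real.exp (5 - c) * (∑ p ∈ A,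
      ((cu p.1 p.2 - X p.1) * Real.exp (-(cu p.1 p.2 - X p.1))) *
      ((cw p.1 p.2 - X p.2) * Real.exp (-(cw p.1 p.2 - X p.2)))) ≤
      (n : ℝ) ^ 2 / (k : ℝ) ^ 2 * (128 * Real.exp 1 / 81)
  calc 1 / 2 * Real.exp (5 - c) * (∑ p ∈ A,
      ((cu p.1 p.2 - X p.1) * Real.exp (-(cu p.1 p.2 - X p.1))) *
      ((cw p.1 p.2 - X p.2) * Real.exp (-(cw p.1 p.2 - X p.2))))
      ≤ 1 / 2 * Real.exp (5 - c) * ((G.degree v : ℝ) * T) :=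
        mul_le_mul_of_nonneg_left hsum hpre
    _ = (n : ℝ) ^ 2 / (k : ℝ) ^ 2 * (128 * Real.exp 1 / 81) := hfinal
end

section
/- Let n ≥ k ≥ 1 be integers and let G be a graph on n vertices satisfying n/k ≤ δ(G) < 2n/k. Let v be a vertex of minimum degree, set c = k·d_v/n, and for a neighbour u of v write x_u = k·x_{uv}/n. Suppose that c − x_u ≥ 1 holds for every u ∈ N_G(v). Then, with f(x) = x·e^{−x} and A_v = {(u,w) : u, w ∈ N_G(v), u ≠ w, uw ∉ E(G)}, (1/2)·e^{5−c} · Σ_{(u,w) ∈ A_v} f(c − x_u)·f(c − x_w) ≤ (n²/k²)·(128e/81). -/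
/-!
Write `m = n/k` and `t_u = c - x_u`, so that `m t_u = |N(v) \ N(u)|` and `m c = |N(v)|`. The pairs
of `A_v` with first coordinate `u` have their second coordinate in `N(v) \ N(u)`, and `A_v` is
symmetric, so by AM–GM the sum is at most `Σ_{(u,w) ∈ A_v} f(t_u)² ≤ m Σ_{u ∈ N(v)} t_u f(t_u)²`.
It remains to bound `e^{5-c} c t f(t)² / 2` for `1 ≤ t ≤ c`: since `f` decreases on `[1, ∞)`,
`c e^{-c} ≤ t e^{-t}`, leaving `e⁵ t⁴ e^{-3t} / 2 ≤ e⁵ (4/3)⁴ e^{-4} / 2 = 128e/81`.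
-/

open Finset Real

lemma mul_exp_neg_antitoneOn : AntitoneOn (fun x : ℝ => x * exp (-x)) (Set.Ici 1) := by
  intro t (ht : 1 ≤ t) c _ htc
  have hc : c ≤ t * exp (c - t) := by nlinarith [add_one_le_exp (c - t)]
  calc c * exp (-c) ≤ t * exp (c - t) * exp (-c) := by gcongr
    _ = t * exp (-t) := by rw [mul_assoc, ← exp_add]; ring_nf

lemma pow_mul_exp_neg_mul_le {n : ℕ} (hn : n ≠ 0) {a t : ℝ} (ha : 0 < a) (ht : 0 ≤ t) :
    t ^ n * exp (-(a * t)) ≤ (n / a) ^ n * exp (-n) := by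
  have key := pow_le_pow_left₀ (by positivity) (mul_exp_neg_le_exp_neg_one (a * t / n)) n
  rw [mul_pow, ← exp_nat_mul, ← exp_nat_mul, div_pow, mul_neg_one, mul_neg,
    mul_div_cancel₀ _ (by positivity)] at key
  calc t ^ n * exp (-(a * t)) = (n / a) ^ n * ((a * t) ^ n / n ^ n * exp (-(a * t))) := by
        rw [mul_pow, div_pow]; field_simp
    _ ≤ (n / a) ^ n * exp (-n) := by gcongr

lemma exp_mul_mul_mul_exp_neg_sq_le {t c : ℝ} (ht : 1 ≤ t) (htc : t ≤ c) :
    exp (5 - c) * (c * (t * (t * exp (-t)) ^ 2)) / 2 ≤ 128 * exp 1 / 81 := by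
  have hf : c * exp (-c) ≤ t * exp (-t) := mul_exp_neg_antitoneOn ht (ht.trans htc) htc
  have h4 := pow_mul_exp_neg_mul_le (n := 4) (a := 3) (by norm_num) (by norm_num)
    (by linarith : 0 ≤ t)
  calc exp (5 - c) * (c * (t * (t * exp (-t)) ^ 2)) / 2
      = exp 5 * (c * exp (-c)) * (t ^ 3 * exp (-(2 * t))) / 2 := by
        rw [sub_eq_add_neg, exp_add, mul_pow, ← exp_nat_mul]; push_cast; ring_nf
    _ ≤ exp 5 * (t * exp (-t)) * (t ^ 3 * exp (-(2 * t))) / 2 := by gcongr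
    _ = exp 5 * (t ^ 4 * exp (-(3 * t))) / 2 := by
        rw [mul_assoc (exp 5), mul_mul_mul_comm, ← exp_add]; ring_nf
    _ ≤ exp 5 * ((4 / 3) ^ 4 * exp (-4)) / 2 := by push_cast at h4; gcongr
    _ = 128 * exp 1 / 81 := by
        rw [show exp 5 = exp 1 * exp 4 by rw [← exp_add]; norm_num, exp_neg]
        field_simp; norm_num

section Pairs

variable {α : Type*}

lemma sum_mul_le_sum_sq_fst {A : Finset (α × α)} (hA : ∀ p ∈ A, p.swap ∈ A) (F : α → ℝ) :
    ∑ p ∈ A, F p.1 * F p.2 ≤ ∑ p ∈ A, F p.1 ^ 2 := by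
  have hswap : ∑ p ∈ A, F p.2 ^ 2 = ∑ p ∈ A, F p.1 ^ 2 :=
    sum_equiv (Equiv.prodComm α α) (fun p => ⟨hA p, fun hp => by simpa using hA _ hp⟩)
      (fun _ _ => rfl)
  calc ∑ p ∈ A, F p.1 * F p.2 ≤ ∑ p ∈ A, (F p.1 ^ 2 + F p.2 ^ 2) / 2 :=
        sum_le_sum fun p _ => by nlinarith [sq_nonneg (F p.1 - F p.2)]
    _ = ∑ p ∈ A, F p.1 ^ 2 := by rw [← sum_div, sum_add_distrib, hswap]; ring

lemma sum_fst_le_sum_mul [DecidableEq α] {A : Finset (α × α)} {S : Finset α}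
    (hA : ∀ p ∈ A, p.1 ∈ S) {g b : α → ℝ} (hg : ∀ u ∈ S, 0 ≤ g u)
    (hb : ∀ u ∈ S, (#{p ∈ A | p.1 = u} : ℝ) ≤ b u) :
    ∑ p ∈ A, g p.1 ≤ ∑ u ∈ S, b u * g u := by
  rw [← sum_fiberwise_of_maps_to hA]
  refine sum_le_sum fun u hu => ?_
  rw [sum_congr rfl fun p hp => by rw [(mem_filter.1 hp).2], sum_const, nsmul_eq_mul]
  exact mul_le_mul_of_nonneg_right (hb u hu) (hg u hu)

lemma half_exp_mul_sum_pairs_le [DecidableEq α] {A : Finset (α × α)} {S : Finset α}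
    {t : α → ℝ} {c m : ℝ} (hA : ∀ p ∈ A, p.1 ∈ S) (hswap : ∀ p ∈ A, p.swap ∈ A)
    (ht : ∀ u ∈ S, 1 ≤ t u) (htc : ∀ u ∈ S, t u ≤ c) (hm : 0 ≤ m)
    (hfiber : ∀ u ∈ S, (#{p ∈ A | p.1 = u} : ℝ) ≤ m * t u) (hS : (#S : ℝ) ≤ m * c) :
    1 / 2 * exp (5 - c) * ∑ p ∈ A, (t p.1 * exp (-t p.1)) * (t p.2 * exp (-t p.2)) ≤
      m ^ 2 * (128 * exp 1 / 81) := by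
  obtain rfl | ⟨u₀, hu₀⟩ := S.eq_empty_or_nonempty
  · rw [show A = ∅ from eq_empty_of_forall_notMem fun p hp => by simpa using hA p hp]
    simp only [sum_empty, mul_zero]
    positivity
  have hc : 0 < c := by linarith [ht u₀ hu₀, htc u₀ hu₀]
  set F := fun u => t u * exp (-t u)
  have hterm : ∀ u ∈ S, exp (5 - c) * (t u * F u ^ 2) / 2 ≤ 128 * exp 1 / 81 / c := by
    intro u hu
    rw [le_div_iff₀ hc]
    linarith [exp_mul_mul_mul_exp_neg_sq_le (ht u hu) (htc u hu)]
  calc 1 / 2 * exp (5 - c) * ∑ p ∈ A, F p.1 * F p.2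
      ≤ 1 / 2 * exp (5 - c) * ∑ u ∈ S, m * t u * F u ^ 2 := by
        gcongr
        exact (sum_mul_le_sum_sq_fst hswap F).trans
          (sum_fst_le_sum_mul hA (fun _ _ => sq_nonneg _) hfiber)
    _ = m * ∑ u ∈ S, exp (5 - c) * (t u * F u ^ 2) / 2 := by
        rw [mul_sum, mul_sum]; congr 1 with u; ring
    _ ≤ m * (#S * (128 * exp 1 / 81 / c)) := by
        gcongr
        simpa using sum_le_sum hterm
    _ ≤ m * (m * c * (128 * exp 1 / 81 / c)) := by gcongr
    _ = m ^ 2 * (128 * exp 1 / 81) := by field_simp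

end Pairs

namespace SimpleGraph

variable {V : Type*} [Fintype V] [DecidableEq V] (G : SimpleGraph V) [DecidableRel G.Adj]

def nonadjNeighborPairs (v : V) : Finset (V × V) :=
  univ.filter fun p => G.Adj v p.1 ∧ G.Adj v p.2 ∧ p.1 ≠ p.2 ∧ ¬ G.Adj p.1 p.2

variable {G}

lemma mem_nonadjNeighborPairs {v : V} {p : V × V} :
    p ∈ G.nonadjNeighborPairs v ↔ G.Adj v p.1 ∧ G.Adj v p.2 ∧ p.1 ≠ p.2 ∧ ¬ G.Adj p.1 p.2 := by
  simp [nonadjNeighborPairs]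

lemma swap_mem_nonadjNeighborPairs {v : V} {p : V × V} (hp : p ∈ G.nonadjNeighborPairs v) :
    p.swap ∈ G.nonadjNeighborPairs v := by
  obtain ⟨h₁, h₂, hne, hnadj⟩ := mem_nonadjNeighborPairs.1 hp
  exact mem_nonadjNeighborPairs.2 ⟨h₂, h₁, hne.symm, fun h => hnadj h.symm⟩

lemma card_filter_fst_nonadjNeighborPairs_add_card_inter_le (v u : V) :
    #{p ∈ G.nonadjNeighborPairs v | p.1 = u} + #(G.neighborFinset u ∩ G.neighborFinset v) ≤
      G.degree v := by
  have hfiber : #{p ∈ G.nonadjNeighborPairs v | p.1 = u} ≤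
      #(G.neighborFinset v \ G.neighborFinset u) := by
    refine card_le_card_of_injOn Prod.snd (fun p hp => ?_) fun p hp q hq hpq => ?_
    · obtain ⟨hpA, rfl⟩ := mem_filter.1 (mem_coe.1 hp)
      obtain ⟨-, h₂, -, hnadj⟩ := mem_nonadjNeighborPairs.1 hpA
      simpa [mem_sdiff] using ⟨h₂, hnadj⟩
    · exact Prod.ext ((mem_filter.1 hp).2.trans (mem_filter.1 hq).2.symm) hpq
  have := card_sdiff_add_card_inter (G.neighborFinset v) (G.neighborFinset u)
  rw [inter_comm, card_neighborFinset_eq_degree] at this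
  omega

end SimpleGraph

theorem program3_general (n k : ℕ) (hk : 1 ≤ k)
    (G : SimpleGraph (Fin n)) [DecidableRel G.Adj]
    (v : Fin n)
    (hx : ∀ u : Fin n, G.Adj v u →
      1 ≤ (k : ℝ) * (G.degree v : ℝ) / (n : ℝ) -
        (k : ℝ) * ((G.neighborFinset u ∩ G.neighborFinset v).card : ℝ) / (n : ℝ)) :
    1 / 2 * Real.exp (5 - (k : ℝ) * (G.degree v : ℝ) / (n : ℝ)) *
      ∑ p ∈ Finset.univ.filter (fun p : Fin n × Fin n =>
          G.Adj v p.1 ∧ G.Adj v p.2 ∧ p.1 ≠ p.2 ∧ ¬ G.Adj p.1 p.2),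
        ((((k : ℝ) * (G.degree v : ℝ) / (n : ℝ) -
            (k : ℝ) * ((G.neighborFinset p.1 ∩ G.neighborFinset v).card : ℝ) / (n : ℝ)) *
          Real.exp (-((k : ℝ) * (G.degree v : ℝ) / (n : ℝ) -
            (k : ℝ) * ((G.neighborFinset p.1 ∩ G.neighborFinset v).card : ℝ) / (n : ℝ)))) *
         (((k : ℝ) * (G.degree v : ℝ) / (n : ℝ) -
            (k : ℝ) * ((G.neighborFinset p.2 ∩ G.neighborFinset v).card : ℝ) / (n : ℝ)) *
          Real.exp (-((k : ℝ) * (G.degree v : ℝ) / (n : ℝ) -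
            (k : ℝ) * ((G.neighborFinset p.2 ∩ G.neighborFinset v).card : ℝ) / (n : ℝ))))) ≤
      (n : ℝ) ^ 2 / (k : ℝ) ^ 2 * (128 * Real.exp 1 / 81) := by
  have hn₀ : (0 : ℝ) < n := by exact_mod_cast v.pos
  have hk₀ : (0 : ℝ) < k := by exact_mod_cast hk
  have hscale (x : ℝ) : n / k * (k * x / n) = x := by field_simp
  rw [← div_pow]
  refine half_exp_mul_sum_pairs_le (S := G.neighborFinset v) (A := G.nonadjNeighborPairs v)
    (fun p hp => (G.mem_neighborFinset v p.1).2 (SimpleGraph.mem_nonadjNeighborPairs.1 hp).1)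
    (fun _ => SimpleGraph.swap_mem_nonadjNeighborPairs)
    (fun u hu => hx u ((G.mem_neighborFinset v u).1 hu)) (fun u _ => ?_) (by positivity)
    (fun u _ => ?_) (by rw [G.card_neighborFinset_eq_degree, hscale])
  · rw [sub_le_self_iff]
    positivity
  · rw [mul_sub, hscale, hscale, le_sub_iff_add_le]
    exact_mod_cast G.card_filter_fst_nonadjNeighborPairs_add_card_inter_le v u

/-- Lemma 4.3 (program 3). With `f(x) = x·e^{−x}`, `G` a graph on `n` vertices with
`n/k ≤ δ(G) < 2n/k`, `v` a vertex of minimum degree, `c = k·d_v/n` and `x_u = k·x_{uv}/n`,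
if `c − x_u ≥ 1` for every neighbour `u` of `v`, then
`(1/2)·e^{5−c}·Σ_{(u,w) ∈ A_v} f(c − x_u)·f(c − x_w) ≤ (n²/k²)·(128e/81)`. -/
theorem program3 (n k : ℕ) (hk : 1 ≤ k) (hkn : k ≤ n)
    (G : SimpleGraph (Fin n)) [DecidableRel G.Adj]
    (hδ₁ : (n : ℝ) / (k : ℝ) ≤ (G.minDegree : ℝ))
    (hδ₂ : (G.minDegree : ℝ) < 2 * (n : ℝ) / (k : ℝ))
    (v : Fin n) (hv : G.degree v = G.minDegree)
    (hx : ∀ u : Fin n, G.Adj v u →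
      1 ≤ (k : ℝ) * (G.degree v : ℝ) / (n : ℝ) -
        (k : ℝ) * ((G.neighborFinset u ∩ G.neighborFinset v).card : ℝ) / (n : ℝ)) :
    1 / 2 * Real.exp (5 - (k : ℝ) * (G.degree v : ℝ) / (n : ℝ)) *
      ∑ p ∈ Finset.univ.filter (fun p : Fin n × Fin n =>
          G.Adj v p.1 ∧ G.Adj v p.2 ∧ p.1 ≠ p.2 ∧ ¬ G.Adj p.1 p.2),
        ((((k : ℝ) * (G.degree v : ℝ) / (n : ℝ) -
            (k : ℝ) * ((G.neighborFinset p.1 ∩ G.neighborFinset v).card : ℝ) / (n : ℝ)) *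
          Real.exp (-((k : ℝ) * (G.degree v : ℝ) / (n : ℝ) -
            (k : ℝ) * ((G.neighborFinset p.1 ∩ G.neighborFinset v).card : ℝ) / (n : ℝ)))) *
         (((k : ℝ) * (G.degree v : ℝ) / (n : ℝ) -
            (k : ℝ) * ((G.neighborFinset p.2 ∩ G.neighborFinset v).card : ℝ) / (n : ℝ)) *
          Real.exp (-((k : ℝ) * (G.degree v : ℝ) / (n : ℝ) -
            (k : ℝ) * ((G.neighborFinset p.2 ∩ G.neighborFinset v).card : ℝ) / (n : ℝ))))) ≤
      (n : ℝ) ^ 2 / (k : ℝ) ^ 2 * (128 * Real.exp 1 / 81) :=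
  program3_general n k hk G v hx
end

section
/- Let m be a positive integer and let c be a real number with 1 ≤ c ≤ 2. Let y_1,…,y_m, z_1,…,z_m be real numbers with 1 ≤ y_i ≤ c and 1 ≤ z_i ≤ c for every 1 ≤ i ≤ m, and with Σ_{i=1}^m z_i² = Σ_{i=1}^m y_i·z_i. Set z* = min{c, 3/2}. Then Σ_{i=1}^m z_i²·y_i·e^{−z_i−y_i} ≤ m·(z*)³·e^{−2z*}. In other words, setting y_i = z_i = min{c, 3/2} for every i is a solution of the optimisation problem of maximising Σ_{i=1}^m z_i²·y_i·e^{−z_i−y_i} subject to these constraints. -/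
set_option maxHeartbeats 4000000
set_option maxRecDepth 100000

lemma auxCase1 (u v d : ℝ) (hu0 : 0 ≤ u) (hv0 : 0 ≤ v) (hud : u ≤ d)
    (hvd : v ≤ d) (hd : d ≤ 1/2) :
    (1+d-v)^2*(1+d-u)*(1+(u+v)+(u+v)^2/2+(u+v)^3/6+(u+v)^4*(5/96))
      ≤ (1+d)^3+(1+d)*d*((1+d-v)^2-(1+d-u)*(1+d-v)) := by
  have h0 : (0:ℝ) ≤ (v*v) := (mul_nonneg hv0 hv0)
  have h1 : (0:ℝ) ≤ (((u*v)*(d-u))*(1/2-d)) := (mul_nonneg (mul_nonneg (mul_nonneg hu0 hv0) (sub_nonneg.2 hud)) (by linarith : (0:ℝ) ≤ 1/2-d))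
  have h2 : (0:ℝ) ≤ ((v*(d-u))*(1/2-d)) := (mul_nonneg (mul_nonneg hv0 (sub_nonneg.2 hud)) (by linarith : (0:ℝ) ≤ 1/2-d))
  have h3 : (0:ℝ) ≤ ((u*u)*((u-v)^2)) := (mul_nonneg (mul_nonneg hu0 hu0) (sq_nonneg (u-v)))
  have h4 : (0:ℝ) ≤ ((u*v)*v) := (mul_nonneg (mul_nonneg hu0 hv0) hv0)
  have h5 : (0:ℝ) ≤ ((d-u)*((u-v)^2)) := (mul_nonneg (sub_nonneg.2 hud) (sq_nonneg (u-v)))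
  have h6 : (0:ℝ) ≤ (v*(1/2-d)) := (mul_nonneg hv0 (by linarith : (0:ℝ) ≤ 1/2-d))
  have h7 : (0:ℝ) ≤ ((((((u*u)*u)*u)*u)*(d-u))*(1/2-d)) := (mul_nonneg (mul_nonneg (mul_nonneg (mul_nonneg (mul_nonneg (mul_nonneg hu0 hu0) hu0) hu0) hu0) (sub_nonneg.2 hud)) (by linarith : (0:ℝ) ≤ 1/2-d))
  have h8 : (0:ℝ) ≤ (((1/2-d)*(1/2-d))*((u-v)^2)) := (mul_nonneg (mul_nonneg (by linarith : (0:ℝ) ≤ 1/2-d) (by linarith : (0:ℝ) ≤ 1/2-d)) (sq_nonneg (u-v)))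
  have h9 : (0:ℝ) ≤ (((u-v)^2)*((u-v)^2)) := (mul_nonneg (sq_nonneg (u-v)) (sq_nonneg (u-v)))
  have h10 : (0:ℝ) ≤ (((((u*u)*u)*v)*(1/2-d))*((u-v)^2)) := (mul_nonneg (mul_nonneg (mul_nonneg (mul_nonneg (mul_nonneg hu0 hu0) hu0) hv0) (by linarith : (0:ℝ) ≤ 1/2-d)) (sq_nonneg (u-v)))
  have h11 : (0:ℝ) ≤ (((((u*u)*u)*(d-u))*(d-u))*(d-u)) := (mul_nonneg (mul_nonneg (mul_nonneg (mul_nonneg (mul_nonneg hu0 hu0) hu0) (sub_nonneg.2 hud)) (sub_nonneg.2 hud)) (sub_nonneg.2 hud))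
  have h12 : (0:ℝ) ≤ ((((u*u)*u)*u)*(1/2-d)) := (mul_nonneg (mul_nonneg (mul_nonneg (mul_nonneg hu0 hu0) hu0) hu0) (by linarith : (0:ℝ) ≤ 1/2-d))
  have h13 : (0:ℝ) ≤ ((((v*(d-u))*(d-u))*((u-v)^2))*((u-v)^2)) := (mul_nonneg (mul_nonneg (mul_nonneg (mul_nonneg hv0 (sub_nonneg.2 hud)) (sub_nonneg.2 hud)) (sq_nonneg (u-v))) (sq_nonneg (u-v)))
  have h14 : (0:ℝ) ≤ (((((u*u)*u)*u)*v)*(d-u)) := (mul_nonneg (mul_nonneg (mul_nonneg (mul_nonneg (mul_nonneg hu0 hu0) hu0) hu0) hv0) (sub_nonneg.2 hud))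
  have h15 : (0:ℝ) ≤ (((((u*u)*v)*(d-u))*(d-u))*((u-v)^2)) := (mul_nonneg (mul_nonneg (mul_nonneg (mul_nonneg (mul_nonneg hu0 hu0) hv0) (sub_nonneg.2 hud)) (sub_nonneg.2 hud)) (sq_nonneg (u-v)))
  have h16 : (0:ℝ) ≤ ((((u*v)*(d-u))*(d-u))*((u-v)^2)) := (mul_nonneg (mul_nonneg (mul_nonneg (mul_nonneg hu0 hv0) (sub_nonneg.2 hud)) (sub_nonneg.2 hud)) (sq_nonneg (u-v)))
  have h17 : (0:ℝ) ≤ ((u*v)*(1/2-d)) := (mul_nonneg (mul_nonneg hu0 hv0) (by linarith : (0:ℝ) ≤ 1/2-d))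
  have h18 : (0:ℝ) ≤ ((((u*u)*u)*(d-u))*(1/2-d)) := (mul_nonneg (mul_nonneg (mul_nonneg (mul_nonneg hu0 hu0) hu0) (sub_nonneg.2 hud)) (by linarith : (0:ℝ) ≤ 1/2-d))
  have h19 : (0:ℝ) ≤ (((v*(d-v))*((u-v)^2))*((u-v)^2)) := (mul_nonneg (mul_nonneg (mul_nonneg hv0 (sub_nonneg.2 hvd)) (sq_nonneg (u-v))) (sq_nonneg (u-v)))
  have h20 : (0:ℝ) ≤ (((((u*u)*u)*u)*(d-u))*((u-v)^2)) := (mul_nonneg (mul_nonneg (mul_nonneg (mul_nonneg (mul_nonneg hu0 hu0) hu0) hu0) (sub_nonneg.2 hud)) (sq_nonneg (u-v)))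
  have h21 : (0:ℝ) ≤ ((((u*v)*(d-u))*(d-u))*(1/2-d)) := (mul_nonneg (mul_nonneg (mul_nonneg (mul_nonneg hu0 hv0) (sub_nonneg.2 hud)) (sub_nonneg.2 hud)) (by linarith : (0:ℝ) ≤ 1/2-d))
  have h22 : (0:ℝ) ≤ (((u*u)*(d-u))*((u-v)^2)) := (mul_nonneg (mul_nonneg (mul_nonneg hu0 hu0) (sub_nonneg.2 hud)) (sq_nonneg (u-v)))
  have h23 : (0:ℝ) ≤ ((u*u)*(d-u)) := (mul_nonneg (mul_nonneg hu0 hu0) (sub_nonneg.2 hud))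
  have h24 : (0:ℝ) ≤ ((((d-u)*(d-u))*(1/2-d))*((u-v)^2)) := (mul_nonneg (mul_nonneg (mul_nonneg (sub_nonneg.2 hud) (sub_nonneg.2 hud)) (by linarith : (0:ℝ) ≤ 1/2-d)) (sq_nonneg (u-v)))
  have h25 : (0:ℝ) ≤ (((((u*u)*v)*(d-u))*(d-u))*(1/2-d)) := (mul_nonneg (mul_nonneg (mul_nonneg (mul_nonneg (mul_nonneg hu0 hu0) hv0) (sub_nonneg.2 hud)) (sub_nonneg.2 hud)) (by linarith : (0:ℝ) ≤ 1/2-d))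
  have h26 : (0:ℝ) ≤ ((v*v)*(d-v)) := (mul_nonneg (mul_nonneg hv0 hv0) (sub_nonneg.2 hvd))
  have h27 : (0:ℝ) ≤ (((v*(d-u))*(d-u))*((u-v)^2)) := (mul_nonneg (mul_nonneg (mul_nonneg hv0 (sub_nonneg.2 hud)) (sub_nonneg.2 hud)) (sq_nonneg (u-v)))
  have h28 : (0:ℝ) ≤ ((((v*(d-u))*(d-u))*(1/2-d))*((u-v)^2)) := (mul_nonneg (mul_nonneg (mul_nonneg (mul_nonneg hv0 (sub_nonneg.2 hud)) (sub_nonneg.2 hud)) (by linarith : (0:ℝ) ≤ 1/2-d)) (sq_nonneg (u-v)))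
  have h29 : (0:ℝ) ≤ ((((u*u)*(d-u))*(1/2-d))*((u-v)^2)) := (mul_nonneg (mul_nonneg (mul_nonneg (mul_nonneg hu0 hu0) (sub_nonneg.2 hud)) (by linarith : (0:ℝ) ≤ 1/2-d)) (sq_nonneg (u-v)))
  have h30 : (0:ℝ) ≤ (((u*u)*u)*((u-v)^2)) := (mul_nonneg (mul_nonneg (mul_nonneg hu0 hu0) hu0) (sq_nonneg (u-v)))
  have h31 : (0:ℝ) ≤ ((((u*u)*u)*(d-u))*((u-v)^2)) := (mul_nonneg (mul_nonneg (mul_nonneg (mul_nonneg hu0 hu0) hu0) (sub_nonneg.2 hud)) (sq_nonneg (u-v)))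
  have h32 : (0:ℝ) ≤ ((((u*u)*u)*v)*((u-v)^2)) := (mul_nonneg (mul_nonneg (mul_nonneg (mul_nonneg hu0 hu0) hu0) hv0) (sq_nonneg (u-v)))
  have h33 : (0:ℝ) ≤ ((((u*(d-u))*(d-u))*((u-v)^2))*((u-v)^2)) := (mul_nonneg (mul_nonneg (mul_nonneg (mul_nonneg hu0 (sub_nonneg.2 hud)) (sub_nonneg.2 hud)) (sq_nonneg (u-v))) (sq_nonneg (u-v)))
  have h34 : (0:ℝ) ≤ (((d-v)*((u-v)^2))*((u-v)^2)) := (mul_nonneg (mul_nonneg (sub_nonneg.2 hvd) (sq_nonneg (u-v))) (sq_nonneg (u-v)))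
  have h35 : (0:ℝ) ≤ (((u*((u-v)^2))*((u-v)^2))*((u-v)^2)) := (mul_nonneg (mul_nonneg (mul_nonneg hu0 (sq_nonneg (u-v))) (sq_nonneg (u-v))) (sq_nonneg (u-v)))
  have h36 : (0:ℝ) ≤ (((((d-u)*(d-u))*(1/2-d))*((u-v)^2))*((u-v)^2)) := (mul_nonneg (mul_nonneg (mul_nonneg (mul_nonneg (sub_nonneg.2 hud) (sub_nonneg.2 hud)) (by linarith : (0:ℝ) ≤ 1/2-d)) (sq_nonneg (u-v))) (sq_nonneg (u-v)))
  have h37 : (0:ℝ) ≤ ((((u*u)*v)*(d-v))*((u-v)^2)) := (mul_nonneg (mul_nonneg (mul_nonneg (mul_nonneg hu0 hu0) hv0) (sub_nonneg.2 hvd)) (sq_nonneg (u-v)))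
  have h38 : (0:ℝ) ≤ (((u*u)*(d-u))*(1/2-d)) := (mul_nonneg (mul_nonneg (mul_nonneg hu0 hu0) (sub_nonneg.2 hud)) (by linarith : (0:ℝ) ≤ 1/2-d))
  have h39 : (0:ℝ) ≤ (((v*(d-u))*(d-u))*(1/2-d)) := (mul_nonneg (mul_nonneg (mul_nonneg hv0 (sub_nonneg.2 hud)) (sub_nonneg.2 hud)) (by linarith : (0:ℝ) ≤ 1/2-d))
  have h40 : (0:ℝ) ≤ ((u*(d-u))*((u-v)^2)) := (mul_nonneg (mul_nonneg hu0 (sub_nonneg.2 hud)) (sq_nonneg (u-v)))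
  have h41 : (0:ℝ) ≤ ((((u*u)*u)*v)*(d-u)) := (mul_nonneg (mul_nonneg (mul_nonneg (mul_nonneg hu0 hu0) hu0) hv0) (sub_nonneg.2 hud))
  have h42 : (0:ℝ) ≤ ((((u*u)*v)*(d-u))*(1/2-d)) := (mul_nonneg (mul_nonneg (mul_nonneg (mul_nonneg hu0 hu0) hv0) (sub_nonneg.2 hud)) (by linarith : (0:ℝ) ≤ 1/2-d))
  have h43 : (0:ℝ) ≤ (((u*u)*u)*(1/2-d)) := (mul_nonneg (mul_nonneg (mul_nonneg hu0 hu0) hu0) (by linarith : (0:ℝ) ≤ 1/2-d))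
  have h44 : (0:ℝ) ≤ (((((u*u)*u)*v)*(d-u))*(1/2-d)) := (mul_nonneg (mul_nonneg (mul_nonneg (mul_nonneg (mul_nonneg hu0 hu0) hu0) hv0) (sub_nonneg.2 hud)) (by linarith : (0:ℝ) ≤ 1/2-d))
  have h45 : (0:ℝ) ≤ (u*v) := (mul_nonneg hu0 hv0)
  have h46 : (0:ℝ) ≤ (((((u*u)*(d-u))*(d-u))*(1/2-d))*((u-v)^2)) := (mul_nonneg (mul_nonneg (mul_nonneg (mul_nonneg (mul_nonneg hu0 hu0) (sub_nonneg.2 hud)) (sub_nonneg.2 hud)) (by linarith : (0:ℝ) ≤ 1/2-d)) (sq_nonneg (u-v)))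
  have h47 : (0:ℝ) ≤ (((u*v)*(d-u))*((u-v)^2)) := (mul_nonneg (mul_nonneg (mul_nonneg hu0 hv0) (sub_nonneg.2 hud)) (sq_nonneg (u-v)))
  have h48 : (0:ℝ) ≤ ((((((u*u)*u)*u)*v)*(d-u))*(d-u)) := (mul_nonneg (mul_nonneg (mul_nonneg (mul_nonneg (mul_nonneg (mul_nonneg hu0 hu0) hu0) hu0) hv0) (sub_nonneg.2 hud)) (sub_nonneg.2 hud))
  have h49 : (0:ℝ) ≤ (((v*v)*v)*(d-v)) := (mul_nonneg (mul_nonneg (mul_nonneg hv0 hv0) hv0) (sub_nonneg.2 hvd))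
  have h50 : (0:ℝ) ≤ (((((u*u)*u)*u)*u)*u) := (mul_nonneg (mul_nonneg (mul_nonneg (mul_nonneg (mul_nonneg hu0 hu0) hu0) hu0) hu0) hu0)
  have h51 : (0:ℝ) ≤ ((((((u*u)*u)*u)*u)*u)*(d-u)) := (mul_nonneg (mul_nonneg (mul_nonneg (mul_nonneg (mul_nonneg (mul_nonneg hu0 hu0) hu0) hu0) hu0) hu0) (sub_nonneg.2 hud))
  have h52 : (0:ℝ) ≤ (((((u*u)*u)*u)*v)*((u-v)^2)) := (mul_nonneg (mul_nonneg (mul_nonneg (mul_nonneg (mul_nonneg hu0 hu0) hu0) hu0) hv0) (sq_nonneg (u-v)))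
  have h53 : (0:ℝ) ≤ ((v*v)*(d-u)) := (mul_nonneg (mul_nonneg hv0 hv0) (sub_nonneg.2 hud))
  have h54 : (0:ℝ) ≤ (((u*u)*v)*v) := (mul_nonneg (mul_nonneg (mul_nonneg hu0 hu0) hv0) hv0)
  have h55 : (0:ℝ) ≤ (((u*(d-u))*(d-u))*((u-v)^2)) := (mul_nonneg (mul_nonneg (mul_nonneg hu0 (sub_nonneg.2 hud)) (sub_nonneg.2 hud)) (sq_nonneg (u-v)))
  have h56 : (0:ℝ) ≤ ((((u*(d-u))*(d-u))*(1/2-d))*((u-v)^2)) := (mul_nonneg (mul_nonneg (mul_nonneg (mul_nonneg hu0 (sub_nonneg.2 hud)) (sub_nonneg.2 hud)) (by linarith : (0:ℝ) ≤ 1/2-d)) (sq_nonneg (u-v)))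
  have h57 : (0:ℝ) ≤ (((u*u)*v)*(d-u)) := (mul_nonneg (mul_nonneg (mul_nonneg hu0 hu0) hv0) (sub_nonneg.2 hud))
  have h58 : (0:ℝ) ≤ (((1/2-d)*((u-v)^2))*((u-v)^2)) := (mul_nonneg (mul_nonneg (by linarith : (0:ℝ) ≤ 1/2-d) (sq_nonneg (u-v))) (sq_nonneg (u-v)))
  have h59 : (0:ℝ) ≤ ((((u*v)*(1/2-d))*((u-v)^2))*((u-v)^2)) := (mul_nonneg (mul_nonneg (mul_nonneg (mul_nonneg hu0 hv0) (by linarith : (0:ℝ) ≤ 1/2-d)) (sq_nonneg (u-v))) (sq_nonneg (u-v)))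
  have h60 : (0:ℝ) ≤ ((((((u*u)*u)*v)*(d-u))*(d-u))*(1/2-d)) := (mul_nonneg (mul_nonneg (mul_nonneg (mul_nonneg (mul_nonneg (mul_nonneg hu0 hu0) hu0) hv0) (sub_nonneg.2 hud)) (sub_nonneg.2 hud)) (by linarith : (0:ℝ) ≤ 1/2-d))
  have h61 : (0:ℝ) ≤ ((v*(d-v))*((u-v)^2)) := (mul_nonneg (mul_nonneg hv0 (sub_nonneg.2 hvd)) (sq_nonneg (u-v)))
  have h62 : (0:ℝ) ≤ (((v*(1/2-d))*((u-v)^2))*((u-v)^2)) := (mul_nonneg (mul_nonneg (mul_nonneg hv0 (by linarith : (0:ℝ) ≤ 1/2-d)) (sq_nonneg (u-v))) (sq_nonneg (u-v)))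
  have h63 : (0:ℝ) ≤ (((u*u)*((u-v)^2))*((u-v)^2)) := (mul_nonneg (mul_nonneg (mul_nonneg hu0 hu0) (sq_nonneg (u-v))) (sq_nonneg (u-v)))
  have h64 : (0:ℝ) ≤ (((((u*u)*u)*u)*u)*(1/2-d)) := (mul_nonneg (mul_nonneg (mul_nonneg (mul_nonneg (mul_nonneg hu0 hu0) hu0) hu0) hu0) (by linarith : (0:ℝ) ≤ 1/2-d))
  have h65 : (0:ℝ) ≤ (((d-u)*((u-v)^2))*((u-v)^2)) := (mul_nonneg (mul_nonneg (sub_nonneg.2 hud) (sq_nonneg (u-v))) (sq_nonneg (u-v)))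
  have h66 : (0:ℝ) ≤ ((((u*u)*u)*u)*(d-u)) := (mul_nonneg (mul_nonneg (mul_nonneg (mul_nonneg hu0 hu0) hu0) hu0) (sub_nonneg.2 hud))
  have h67 : (0:ℝ) ≤ ((((u-v)^2)*((u-v)^2))*((u-v)^2)) := (mul_nonneg (mul_nonneg (sq_nonneg (u-v)) (sq_nonneg (u-v))) (sq_nonneg (u-v)))
  have h68 : (0:ℝ) ≤ ((((u*u)*(1/2-d))*((u-v)^2))*((u-v)^2)) := (mul_nonneg (mul_nonneg (mul_nonneg (mul_nonneg hu0 hu0) (by linarith : (0:ℝ) ≤ 1/2-d)) (sq_nonneg (u-v))) (sq_nonneg (u-v)))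
  have h69 : (0:ℝ) ≤ ((((u*u)*u)*(1/2-d))*((u-v)^2)) := (mul_nonneg (mul_nonneg (mul_nonneg (mul_nonneg hu0 hu0) hu0) (by linarith : (0:ℝ) ≤ 1/2-d)) (sq_nonneg (u-v)))
  have h70 : (0:ℝ) ≤ (u*((u-v)^2)) := (mul_nonneg hu0 (sq_nonneg (u-v)))
  have h71 : (0:ℝ) ≤ (((((u*u)*u)*u)*(d-u))*(1/2-d)) := (mul_nonneg (mul_nonneg (mul_nonneg (mul_nonneg (mul_nonneg hu0 hu0) hu0) hu0) (sub_nonneg.2 hud)) (by linarith : (0:ℝ) ≤ 1/2-d))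
  have h72 : (0:ℝ) ≤ (((((u*u)*u)*(d-u))*(d-u))*((u-v)^2)) := (mul_nonneg (mul_nonneg (mul_nonneg (mul_nonneg (mul_nonneg hu0 hu0) hu0) (sub_nonneg.2 hud)) (sub_nonneg.2 hud)) (sq_nonneg (u-v)))
  have h73 : (0:ℝ) ≤ (((u*u)*v)*((u-v)^2)) := (mul_nonneg (mul_nonneg (mul_nonneg hu0 hu0) hv0) (sq_nonneg (u-v)))
  have h74 : (0:ℝ) ≤ ((((u*u)*u)*u)*v) := (mul_nonneg (mul_nonneg (mul_nonneg (mul_nonneg hu0 hu0) hu0) hu0) hv0)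
  have h75 : (0:ℝ) ≤ (((((u*v)*(d-u))*(d-u))*(1/2-d))*((u-v)^2)) := (mul_nonneg (mul_nonneg (mul_nonneg (mul_nonneg (mul_nonneg hu0 hv0) (sub_nonneg.2 hud)) (sub_nonneg.2 hud)) (by linarith : (0:ℝ) ≤ 1/2-d)) (sq_nonneg (u-v)))
  have h76 : (0:ℝ) ≤ ((u*v)*((u-v)^2)) := (mul_nonneg (mul_nonneg hu0 hv0) (sq_nonneg (u-v)))
  have h77 : (0:ℝ) ≤ (u*u) := (mul_nonneg hu0 hu0)
  have h78 : (0:ℝ) ≤ (((u*(d-u))*((u-v)^2))*((u-v)^2)) := (mul_nonneg (mul_nonneg (mul_nonneg hu0 (sub_nonneg.2 hud)) (sq_nonneg (u-v))) (sq_nonneg (u-v)))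
  have h79 : (0:ℝ) ≤ ((((u*u)*u)*((u-v)^2))*((u-v)^2)) := (mul_nonneg (mul_nonneg (mul_nonneg (mul_nonneg hu0 hu0) hu0) (sq_nonneg (u-v))) (sq_nonneg (u-v)))
  have h80 : (0:ℝ) ≤ ((((d-u)*(d-u))*((u-v)^2))*((u-v)^2)) := (mul_nonneg (mul_nonneg (mul_nonneg (sub_nonneg.2 hud) (sub_nonneg.2 hud)) (sq_nonneg (u-v))) (sq_nonneg (u-v)))
  have h81 : (0:ℝ) ≤ ((((u*u)*v)*((u-v)^2))*((u-v)^2)) := (mul_nonneg (mul_nonneg (mul_nonneg (mul_nonneg hu0 hu0) hv0) (sq_nonneg (u-v))) (sq_nonneg (u-v)))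
  have h82 : (0:ℝ) ≤ ((((1/2-d)*((u-v)^2))*((u-v)^2))*((u-v)^2)) := (mul_nonneg (mul_nonneg (mul_nonneg (by linarith : (0:ℝ) ≤ 1/2-d) (sq_nonneg (u-v))) (sq_nonneg (u-v))) (sq_nonneg (u-v)))
  have h83 : (0:ℝ) ≤ ((((((u*u)*u)*u)*(d-u))*(d-u))*(d-u)) := (mul_nonneg (mul_nonneg (mul_nonneg (mul_nonneg (mul_nonneg (mul_nonneg hu0 hu0) hu0) hu0) (sub_nonneg.2 hud)) (sub_nonneg.2 hud)) (sub_nonneg.2 hud))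
  linarith [h0, h1, h2, h3, h4, h5, h6, h7, h8, h9, h10, h11, h12, h13, h14, h15, h16, h17, h18, h19, h20, h21, h22, h23, h24, h25, h26, h27, h28, h29, h30, h31, h32, h33, h34, h35, h36, h37, h38, h39, h40, h41, h42, h43, h44, h45, h46, h47, h48, h49, h50, h51, h52, h53, h54, h55, h56, h57, h58, h59, h60, h61, h62, h63, h64, h65, h66, h67, h68, h69, h70, h71, h72, h73, h74, h75, h76, h77, h78, h79, h80, h81, h82, h83]

lemma auxCase2 (y z : ℝ) (hy1 : 1 ≤ y) (hy2 : y ≤ 2) (hz1 : 1 ≤ z) (hz2 : z ≤ 2) :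
    z^2*y ≤ (27/8+(3/4)*(z^2-y*z))*(1+(y+z-3)+(y+z-3)^2/2+(y+z-3)^3/6) := by
  have h0 : (0:ℝ) ≤ ((z-3/2)^2) := (sq_nonneg (z-3/2))
  have h1 : (0:ℝ) ≤ ((z-1)*((z-3/2)^2)) := (mul_nonneg (sub_nonneg.2 hz1) (sq_nonneg (z-3/2)))
  have h2 : (0:ℝ) ≤ ((2-y)*((y-z)^2)) := (mul_nonneg (sub_nonneg.2 hy2) (sq_nonneg (y-z)))
  have h3 : (0:ℝ) ≤ (((y-1)*(z-1))*((y+z-3)^2)) := (mul_nonneg (mul_nonneg (sub_nonneg.2 hy1) (sub_nonneg.2 hz1)) (sq_nonneg (y+z-3)))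
  have h4 : (0:ℝ) ≤ (((y-1)*(2-y))*((y+z-3)^2)) := (mul_nonneg (mul_nonneg (sub_nonneg.2 hy1) (sub_nonneg.2 hy2)) (sq_nonneg (y+z-3)))
  have h5 : (0:ℝ) ≤ (((y-1)*(2-z))*((y+z-3)^2)) := (mul_nonneg (mul_nonneg (sub_nonneg.2 hy1) (sub_nonneg.2 hz2)) (sq_nonneg (y+z-3)))
  have h6 : (0:ℝ) ≤ (((y-1)*((y+z-3)^2))*((3*y-z-3)^2)) := (mul_nonneg (mul_nonneg (sub_nonneg.2 hy1) (sq_nonneg (y+z-3))) (sq_nonneg (3*y-z-3)))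
  have h7 : (0:ℝ) ≤ (((z-1)*((3*y-z-3)^2))*((3*y-z-3)^2)) := (mul_nonneg (mul_nonneg (sub_nonneg.2 hz1) (sq_nonneg (3*y-z-3))) (sq_nonneg (3*y-z-3)))
  have h8 : (0:ℝ) ≤ (((2-z)*((y-z)^2))*((3*y-z-3)^2)) := (mul_nonneg (mul_nonneg (sub_nonneg.2 hz2) (sq_nonneg (y-z))) (sq_nonneg (3*y-z-3)))
  have h9 : (0:ℝ) ≤ ((((y-1)*(y-1))*(2-y))*((3*y-z-3)^2)) := (mul_nonneg (mul_nonneg (mul_nonneg (sub_nonneg.2 hy1) (sub_nonneg.2 hy1)) (sub_nonneg.2 hy2)) (sq_nonneg (3*y-z-3)))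
  have h10 : (0:ℝ) ≤ ((((y-1)*(z-1))*(2-y))*((y+z-3)^2)) := (mul_nonneg (mul_nonneg (mul_nonneg (sub_nonneg.2 hy1) (sub_nonneg.2 hz1)) (sub_nonneg.2 hy2)) (sq_nonneg (y+z-3)))
  have h11 : (0:ℝ) ≤ ((((y-1)*(2-y))*(2-y))*((3*y-z-3)^2)) := (mul_nonneg (mul_nonneg (mul_nonneg (sub_nonneg.2 hy1) (sub_nonneg.2 hy2)) (sub_nonneg.2 hy2)) (sq_nonneg (3*y-z-3)))
  have h12 : (0:ℝ) ≤ ((((z-1)*(z-1))*(z-1))*((y+z-3)^2)) := (mul_nonneg (mul_nonneg (mul_nonneg (sub_nonneg.2 hz1) (sub_nonneg.2 hz1)) (sub_nonneg.2 hz1)) (sq_nonneg (y+z-3)))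
  have h13 : (0:ℝ) ≤ ((((z-1)*(z-1))*(2-y))*((y+z-3)^2)) := (mul_nonneg (mul_nonneg (mul_nonneg (sub_nonneg.2 hz1) (sub_nonneg.2 hz1)) (sub_nonneg.2 hy2)) (sq_nonneg (y+z-3)))
  have h14 : (0:ℝ) ≤ ((((z-1)*(z-1))*(2-z))*((y-z)^2)) := (mul_nonneg (mul_nonneg (mul_nonneg (sub_nonneg.2 hz1) (sub_nonneg.2 hz1)) (sub_nonneg.2 hz2)) (sq_nonneg (y-z)))
  have h15 : (0:ℝ) ≤ ((((z-1)*(2-z))*(2-z))*((y-z)^2)) := (mul_nonneg (mul_nonneg (mul_nonneg (sub_nonneg.2 hz1) (sub_nonneg.2 hz2)) (sub_nonneg.2 hz2)) (sq_nonneg (y-z)))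
  have h16 : (0:ℝ) ≤ ((((2-z)*(2-z))*(2-z))*((y-z)^2)) := (mul_nonneg (mul_nonneg (mul_nonneg (sub_nonneg.2 hz2) (sub_nonneg.2 hz2)) (sub_nonneg.2 hz2)) (sq_nonneg (y-z)))
  have h17 : (0:ℝ) ≤ ((((2-z)*(2-z))*(2-z))*((z-3/2)^2)) := (mul_nonneg (mul_nonneg (mul_nonneg (sub_nonneg.2 hz2) (sub_nonneg.2 hz2)) (sub_nonneg.2 hz2)) (sq_nonneg (z-3/2)))
  linarith [h0, h1, h2, h3, h4, h5, h6, h7, h8, h9, h10, h11, h12, h13, h14, h15, h16, h17]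

lemma expU_le {s : ℝ} (hs0 : 0 ≤ s) (hs1 : s ≤ 1) :
    Real.exp s ≤ 1 + s + s ^ 2 / 2 + s ^ 3 / 6 + s ^ 4 * (5 / 96) := by
  have habs : |s| ≤ 1 := by rw [abs_of_nonneg hs0]; exact hs1
  have hb := Real.exp_bound habs (by norm_num : 0 < 4)
  rw [abs_of_nonneg hs0] at hb
  simp [Finset.sum_range_succ, Nat.factorial] at hb
  rw [abs_le] at hb
  norm_num at hb
  nlinarith [hb.2]

lemma cubic_le_exp {t : ℝ} (ht : -1 ≤ t) :
    1 + t + t ^ 2 / 2 + t ^ 3 / 6 ≤ Real.exp t := by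
  rcases le_or_gt 0 t with h0 | h0
  · have h := Real.sum_le_exp_of_nonneg h0 4
    simp [Finset.sum_range_succ, Nat.factorial] at h
    nlinarith [h]
  · have key : ∀ s : ℝ, 0 < s → s ≤ 1 →
        1 - s + s ^ 2 / 2 - s ^ 3 / 6 ≤ Real.exp (-s) := by
      intro s hs0 hs1
      have hU := expU_le hs0.le hs1
      have h1 : (1 - s + s ^ 2 / 2 - s ^ 3 / 6) * Real.exp s ≤ 1 := by
        have hCpos : (0:ℝ) ≤ 1 - s + s ^ 2 / 2 - s ^ 3 / 6 := by nlinarith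
        calc (1 - s + s ^ 2 / 2 - s ^ 3 / 6) * Real.exp s
            ≤ (1 - s + s ^ 2 / 2 - s ^ 3 / 6) * (1 + s + s ^ 2 / 2 + s ^ 3 / 6 + s ^ 4 * (5 / 96)) :=
              mul_le_mul_of_nonneg_left hU hCpos
          _ ≤ 1 := by nlinarith [pow_nonneg hs0.le 4, pow_nonneg hs0.le 5, pow_nonneg hs0.le 6,
              pow_nonneg hs0.le 7]
      rw [Real.exp_neg, inv_eq_one_div, le_div_iff₀ (Real.exp_pos s)]
      exact h1
    have h := key (-t) (by linarith) (by linarith)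
    rw [neg_neg] at h
    nlinarith [h]

lemma keyIneq (c y z : ℝ) (hc1 : 1 ≤ c) (hc2 : c ≤ 2) (hy1 : 1 ≤ y) (hy2 : y ≤ c)
    (hz1 : 1 ≤ z) (hz2 : z ≤ c) :
    z ^ 2 * y * Real.exp (-z - y) ≤
      (min c (3/2)) ^ 3 * Real.exp (-2 * min c (3/2)) +
        (min c (3/2)) * ((min c (3/2)) - 1) * Real.exp (-2 * min c (3/2)) * (z ^ 2 - y * z) := by
  have hzy : (0:ℝ) ≤ z ^ 2 * y := by positivity
  rcases le_total c (3/2) with hc | hc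
  · rw [min_eq_left hc]
    have hs0 : (0:ℝ) ≤ 2*c - y - z := by linarith
    have hs1 : 2*c - y - z ≤ 1 := by linarith
    have hU := expU_le hs0 hs1
    have h1 := auxCase1 (c - y) (c - z) (c - 1) (by linarith) (by linarith) (by linarith)
      (by linarith) (by linarith)
    have h2 : z ^ 2 * y * Real.exp (2*c - y - z) ≤ c ^ 3 + c * (c - 1) * (z ^ 2 - y * z) := by
      calc z ^ 2 * y * Real.exp (2*c - y - z)
          ≤ z ^ 2 * y * (1 + (2*c-y-z) + (2*c-y-z) ^ 2 / 2 + (2*c-y-z) ^ 3 / 6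
              + (2*c-y-z) ^ 4 * (5/96)) := mul_le_mul_of_nonneg_left hU hzy
        _ ≤ c ^ 3 + c * (c - 1) * (z ^ 2 - y * z) := by nlinarith [h1]
    have hE : Real.exp (-z - y) = Real.exp (2*c - y - z) * Real.exp (-2 * c) := by
      rw [← Real.exp_add]; ring_nf
    rw [hE]
    calc z ^ 2 * y * (Real.exp (2*c - y - z) * Real.exp (-2 * c))
        = (z ^ 2 * y * Real.exp (2*c - y - z)) * Real.exp (-2 * c) := by ring
      _ ≤ (c ^ 3 + c * (c - 1) * (z ^ 2 - y * z)) * Real.exp (-2 * c) :=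
          mul_le_mul_of_nonneg_right h2 (Real.exp_nonneg _)
      _ = c ^ 3 * Real.exp (-2 * c) + c * (c - 1) * Real.exp (-2 * c) * (z ^ 2 - y * z) := by
          ring
  · rw [min_eq_right hc]
    have hy2' : y ≤ 2 := le_trans hy2 hc2
    have hz2' : z ≤ 2 := le_trans hz2 hc2
    have hL := cubic_le_exp (t := y + z - 3) (by linarith)
    have hB2 : (0:ℝ) ≤ 27/8 + (3/4) * (z ^ 2 - y * z) := by nlinarith
    have h1 := auxCase2 y z hy1 hy2' hz1 hz2'
    have h2 : z ^ 2 * y ≤ (27/8 + (3/4) * (z ^ 2 - y * z)) * Real.exp (y + z - 3) :=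
      h1.trans (mul_le_mul_of_nonneg_left hL hB2)
    have h3 : z ^ 2 * y * Real.exp (-(y + z - 3)) ≤ 27/8 + (3/4) * (z ^ 2 - y * z) := by
      rw [Real.exp_neg, ← div_eq_mul_inv, div_le_iff₀ (Real.exp_pos _)]
      linarith [h2]
    have hE : Real.exp (-z - y) = Real.exp (-(y + z - 3)) * Real.exp (-2 * (3/2 : ℝ)) := by
      rw [← Real.exp_add]; ring_nf
    rw [hE]
    calc z ^ 2 * y * (Real.exp (-(y + z - 3)) * Real.exp (-2 * (3/2 : ℝ)))
        = (z ^ 2 * y * Real.exp (-(y + z - 3))) * Real.exp (-2 * (3/2 : ℝ)) := by ring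
      _ ≤ (27/8 + (3/4) * (z ^ 2 - y * z)) * Real.exp (-2 * (3/2 : ℝ)) :=
          mul_le_mul_of_nonneg_right h3 (Real.exp_nonneg _)
      _ = (3/2 : ℝ) ^ 3 * Real.exp (-2 * (3/2 : ℝ))
          + (3/2 : ℝ) * ((3/2 : ℝ) - 1) * Real.exp (-2 * (3/2 : ℝ)) * (z ^ 2 - y * z) := by
          ring

/-- Claim A. Let `m ≥ 1`, `1 ≤ c ≤ 2`, and let `y_i, z_i ∈ [1,c]` satisfy
`Σ z_i² = Σ y_i·z_i`. Then, with `z* = min{c, 3/2}`,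
`Σ z_i²·y_i·e^{−z_i−y_i} ≤ m·(z*)³·e^{−2z*}`; i.e. the constant point
`y_i = z_i = min{c, 3/2}` solves the optimisation problem `A(c,m)`. -/
theorem programA (m : ℕ) (hm : 0 < m) (c : ℝ) (hc1 : 1 ≤ c) (hc2 : c ≤ 2)
    (y z : Fin m → ℝ)
    (hy : ∀ i, 1 ≤ y i ∧ y i ≤ c) (hz : ∀ i, 1 ≤ z i ∧ z i ≤ c)
    (hsum : ∑ i, (z i) ^ 2 = ∑ i, y i * z i) :
    ∑ i, (z i) ^ 2 * y i * Real.exp (-(z i) - y i) ≤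
      (m : ℝ) * (min c (3 / 2)) ^ 3 * Real.exp (-2 * min c (3 / 2)) := by
  set w : ℝ := min c (3/2) with hw
  have key : ∀ i : Fin m, (z i) ^ 2 * y i * Real.exp (-(z i) - y i) ≤
      w ^ 3 * Real.exp (-2 * w) + w * (w - 1) * Real.exp (-2 * w) * ((z i) ^ 2 - y i * z i) :=
    fun i => keyIneq c (y i) (z i) hc1 hc2 (hy i).1 (hy i).2 (hz i).1 (hz i).2
  calc ∑ i, (z i) ^ 2 * y i * Real.exp (-(z i) - y i)
      ≤ ∑ i, (w ^ 3 * Real.exp (-2 * w)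
          + w * (w - 1) * Real.exp (-2 * w) * ((z i) ^ 2 - y i * z i)) :=
        Finset.sum_le_sum (fun i _ => key i)
    _ = (m : ℝ) * (w ^ 3 * Real.exp (-2 * w))
        + w * (w - 1) * Real.exp (-2 * w) * (∑ i, ((z i) ^ 2 - y i * z i)) := by
        rw [Finset.sum_add_distrib, Finset.sum_const, Finset.card_univ, Fintype.card_fin,
          ← Finset.mul_sum, nsmul_eq_mul]
    _ = (m : ℝ) * w ^ 3 * Real.exp (-2 * w) := by
        have h0 : ∑ i, ((z i) ^ 2 - y i * z i) = 0 := by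
          rw [Finset.sum_sub_distrib, hsum, sub_self]
        rw [h0, mul_zero, add_zero]; ring
end

section
/- Let m be a positive integer and let F ⊆ ℝ^{2m} be the set of tuples (y_1,…,y_m, z_1,…,z_m) with 1 ≤ y_i ≤ 2 and 1 ≤ z_i ≤ 2 for every i and Σ_{i=1}^m z_i² = Σ_{i=1}^m y_i·z_i. Suppose (y_1,…,y_m, z_1,…,z_m) ∈ F attains the maximum of Σ_{i=1}^m z_i²·y_i·e^{−z_i−y_i} over F. Then for every 1 ≤ i ≤ m, exactly one of the following holds: y_i = z_i = 3/2, or y_i < 3/2 < z_i, or z_i ≤ 3/2 < y_i. -/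
/-!
Fix a coordinate `i` of a maximiser and move `(y_i, z_i)` along the curve `z² - y z = c`
through it: this changes no other coordinate and preserves the constraint. On that curve
`y = z - c / z`, so the `i`-th term of the objective becomes a function of `z` alone, whose
derivative at `z_i` is `z_i e^{-z_i-y_i} ((3/2 - z_i)(3 y_i - 2) + (3/2 - y_i)(2 - y_i))`.
If `y_i, z_i ≤ 3/2` but not both equal `3/2`, this is positive and `z_i` can be increased;
if `3/2 ≤ y_i` and `3/2 < z_i`, it is negative and `z_i` can be decreased. Small such moves
stay in `[1, 2]²` and increase the objective, contradicting maximality.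
-/

open Real Set Filter Topology

theorem HasDerivAt.eventually_nhdsGT_lt {f : ℝ → ℝ} {f' a : ℝ} (hf : HasDerivAt f f' a)
    (hf' : 0 < f') : ∀ᶠ x in 𝓝[>] a, f a < f x := by
  filter_upwards [(hasDerivAt_iff_tendsto_slope_left_right.1 hf).2.eventually (lt_mem_nhds hf'),
    self_mem_nhdsWithin] with x hslope hx
  rw [slope_def_field] at hslope
  exact sub_pos.1 ((div_pos_iff_of_pos_right (sub_pos.2 hx)).1 hslope)

theorem HasDerivAt.eventually_nhdsLT_lt {f : ℝ → ℝ} {f' a : ℝ} (hf : HasDerivAt f f' a)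
    (hf' : f' < 0) : ∀ᶠ x in 𝓝[<] a, f a < f x := by
  filter_upwards [(hasDerivAt_iff_tendsto_slope_left_right.1 hf).1.eventually (gt_mem_nhds hf'),
    self_mem_nhdsWithin] with x hslope hx
  rw [slope_comm, slope_def_field] at hslope
  exact sub_neg.1 (by_contra fun h => hslope.not_ge (div_nonneg (not_lt.1 h) (sub_pos.2 hx).le))

theorem Fintype.sum_apply_update₂ {ι α β M : Type*} [Fintype ι] [DecidableEq ι]
    [AddCommGroup M] (g : α → β → M) (y : ι → α) (z : ι → β) (i : ι) (a : α) (b : β) :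
    ∑ j, g (Function.update y i a j) (Function.update z i b j) =
      ∑ j, g (y j) (z j) - g (y i) (z i) + g a b := by
  simp_rw [Function.apply_update₂ (fun _ => g)]
  rw [Finset.sum_update_of_mem (Finset.mem_univ i),
    ← Finset.add_sum_erase _ _ (Finset.mem_univ i), Finset.sdiff_singleton_eq_erase]
  abel

namespace ProgramA

noncomputable def summand (y z : ℝ) : ℝ := z ^ 2 * y * exp (-z - y)

noncomputable def levelCurve (c t : ℝ) : ℝ := t - c / t

noncomputable def levelDerivFactor (y z : ℝ) : ℝ :=
  (3 / 2 - z) * (3 * y - 2) + (3 / 2 - y) * (2 - y)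

theorem levelCurve_spec (c : ℝ) {t : ℝ} (ht : t ≠ 0) : t ^ 2 - levelCurve c t * t = c := by
  unfold levelCurve
  field_simp
  ring

theorem levelCurve_sub (y z : ℝ) {t : ℝ} (ht : t ≠ 0) :
    levelCurve (z ^ 2 - y * z) t - y = (t - z) * (t + z - y) / t := by
  unfold levelCurve
  field_simp
  ring

theorem levelCurve_self (y : ℝ) {z : ℝ} (hz : z ≠ 0) : levelCurve (z ^ 2 - y * z) z = y := by
  simpa [sub_eq_zero] using levelCurve_sub y z hz

theorem le_levelCurve {y z t : ℝ} (ht : 0 < t) (hzt : z ≤ t) (hy : y ≤ t + z) :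
    y ≤ levelCurve (z ^ 2 - y * z) t := by
  have hsub := levelCurve_sub y z ht.ne'
  have : 0 ≤ (t - z) * (t + z - y) / t := by
    apply div_nonneg (mul_nonneg _ _) ht.le <;> linarith
  linarith

theorem levelCurve_le {y z t : ℝ} (ht : 0 < t) (htz : t ≤ z) (hy : y ≤ t + z) :
    levelCurve (z ^ 2 - y * z) t ≤ y := by
  have hsub := levelCurve_sub y z ht.ne'
  have : (t - z) * (t + z - y) / t ≤ 0 := by
    apply div_nonpos_of_nonpos_of_nonneg (mul_nonpos_of_nonpos_of_nonneg _ _) ht.le <;> linarith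
  linarith

theorem hasDerivAt_levelCurve (c : ℝ) {t : ℝ} (ht : t ≠ 0) :
    HasDerivAt (levelCurve c) (1 + c / t ^ 2) t := by
  have h : HasDerivAt (fun s => s - c * s⁻¹) (1 - c * -(t ^ 2)⁻¹) t :=
    (hasDerivAt_id' t).sub ((hasDerivAt_inv ht).const_mul c)
  convert h using 1
  · funext s
    rw [levelCurve, div_eq_mul_inv]
  · ring

theorem hasDerivAt_summand_levelCurve (c : ℝ) {t : ℝ} (ht : t ≠ 0) :
    HasDerivAt (fun s => summand (levelCurve c s) s)
      (t * levelDerivFactor (levelCurve c t) t * exp (-t - levelCurve c t)) t := by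
  have hw := hasDerivAt_levelCurve c ht
  have h : HasDerivAt (fun s => s ^ 2 * levelCurve c s * exp (-s - levelCurve c s))
      ((2 * t * levelCurve c t + t ^ 2 * (1 + c / t ^ 2)) * exp (-t - levelCurve c t) +
        t ^ 2 * levelCurve c t * (exp (-t - levelCurve c t) * (-1 - (1 + c / t ^ 2)))) t := by
    simpa using ((hasDerivAt_pow 2 t).fun_mul hw).fun_mul ((hasDerivAt_neg t).sub hw).exp
  show HasDerivAt (fun s => s ^ 2 * levelCurve c s * exp (-s - levelCurve c s)) _ t
  convert h using 1
  unfold levelDerivFactor levelCurve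
  field_simp
  ring

theorem levelDerivFactor_pos {y z : ℝ} (hy : 1 ≤ y) (hy' : y ≤ 3 / 2) (hz : z ≤ 3 / 2)
    (hne : ¬(y = 3 / 2 ∧ z = 3 / 2)) : 0 < levelDerivFactor y z := by
  unfold levelDerivFactor
  rcases hy'.lt_or_eq with hy' | rfl
  · nlinarith [mul_nonneg (sub_nonneg.2 hz) (by linarith : (0 : ℝ) ≤ 3 * y - 2)]
  · have : z < 3 / 2 := hz.lt_of_ne fun h => hne ⟨rfl, h⟩
    nlinarith

theorem levelDerivFactor_neg {y z : ℝ} (hy : 3 / 2 ≤ y) (hy' : y ≤ 2) (hz : 3 / 2 < z) :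
    levelDerivFactor y z < 0 := by
  unfold levelDerivFactor
  nlinarith [mul_nonneg (sub_nonneg.2 hy) (sub_nonneg.2 hy')]

variable {ι : Type*} [Fintype ι]

def Feasible (y z : ι → ℝ) : Prop :=
  (∀ i, 1 ≤ y i ∧ y i ≤ 2) ∧ (∀ i, 1 ≤ z i ∧ z i ≤ 2) ∧ ∑ i, z i ^ 2 = ∑ i, y i * z i

noncomputable def objective (y z : ι → ℝ) : ℝ := ∑ i, summand (y i) (z i)

variable {y z : ι → ℝ}

theorem summand_le_of_isMax (hyz : Feasible y z)
    (hmax : ∀ y' z' : ι → ℝ, Feasible y' z' → objective y' z' ≤ objective y z) (i : ι)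
    {a b : ℝ} (ha : a ∈ Icc 1 2) (hb : b ∈ Icc 1 2) (hab : b ^ 2 - a * b = z i ^ 2 - y i * z i) :
    summand a b ≤ summand (y i) (z i) := by
  classical
  obtain ⟨hy, hz, hsum⟩ := hyz
  have hfeas : Feasible (Function.update y i a) (Function.update z i b) := by
    refine ⟨fun j => ?_, fun j => ?_, ?_⟩
    · rcases eq_or_ne j i with rfl | hj
      · simpa using ha
      · simpa [hj] using hy j
    · rcases eq_or_ne j i with rfl | hj
      · simpa using hb
      · simpa [hj] using hz j
    · have hsq := Fintype.sum_apply_update₂ (fun (_ z : ℝ) => z ^ 2) y z i a b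
      have hmul := Fintype.sum_apply_update₂ (fun y z : ℝ => y * z) y z i a b
      linarith
  have h := hmax _ _ hfeas
  rw [objective, objective, Fintype.sum_apply_update₂ summand] at h
  linarith

theorem isMaxOn_summand_levelCurve (hyz : Feasible y z)
    (hmax : ∀ y' z' : ι → ℝ, Feasible y' z' → objective y' z' ≤ objective y z) (i : ι) :
    IsMaxOn (fun t => summand (levelCurve (z i ^ 2 - y i * z i) t) t)
      {t | t ∈ Icc 1 2 ∧ levelCurve (z i ^ 2 - y i * z i) t ∈ Icc 1 2} (z i) := by
  rintro t ⟨ht, hw⟩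
  have hz0 : z i ≠ 0 := by linarith [(hyz.2.1 i).1]
  show summand _ t ≤ summand _ (z i)
  rw [levelCurve_self _ hz0]
  exact summand_le_of_isMax hyz hmax i hw ht (levelCurve_spec _ (by linarith [ht.1]))

theorem eq_three_halves_of_le_three_halves (hyz : Feasible y z)
    (hmax : ∀ y' z' : ι → ℝ, Feasible y' z' → objective y' z' ≤ objective y z) (i : ι)
    (hy : y i ≤ 3 / 2) (hz : z i ≤ 3 / 2) : y i = 3 / 2 ∧ z i = 3 / 2 := by
  by_contra hne
  have hy1 := (hyz.1 i).1
  have hz1 := (hyz.2.1 i).1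
  have hz0 : 0 < z i := by linarith
  have hself := levelCurve_self (y i) hz0.ne'
  have hf' : 0 < z i * levelDerivFactor (levelCurve (z i ^ 2 - y i * z i) (z i)) (z i) *
      exp (-z i - levelCurve (z i ^ 2 - y i * z i) (z i)) := by
    rw [hself]
    exact mul_pos (mul_pos hz0 (levelDerivFactor_pos hy1 hy hz hne)) (exp_pos _)
  have hw := (hasDerivAt_levelCurve (z i ^ 2 - y i * z i) hz0.ne').continuousAt
  obtain ⟨t, hgt, hzt : z i < t, ht2, hw2⟩ :=
    ((hasDerivAt_summand_levelCurve _ hz0.ne').eventually_nhdsGT_lt hf' |>.and <|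
      eventually_mem_nhdsWithin.and <|
      ((eventually_lt_nhds (by linarith : z i < 2)).filter_mono nhdsWithin_le_nhds).and <|
      (hw.eventually (eventually_lt_nhds (by linarith : _ < (2 : ℝ)))).filter_mono
        nhdsWithin_le_nhds).exists
  have hw1 : y i ≤ levelCurve (z i ^ 2 - y i * z i) t :=
    le_levelCurve (hz0.trans hzt) hzt.le (by linarith)
  exact hgt.not_ge (isMaxOn_summand_levelCurve hyz hmax i
    ⟨⟨by linarith, ht2.le⟩, ⟨by linarith, hw2.le⟩⟩)

theorem le_three_halves_of_three_halves_le (hyz : Feasible y z)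
    (hmax : ∀ y' z' : ι → ℝ, Feasible y' z' → objective y' z' ≤ objective y z) (i : ι)
    (hy : 3 / 2 ≤ y i) : z i ≤ 3 / 2 := by
  by_contra! hz
  have hy2 := (hyz.1 i).2
  have hz0 : 0 < z i := by linarith
  have hself := levelCurve_self (y i) hz0.ne'
  have hf' : z i * levelDerivFactor (levelCurve (z i ^ 2 - y i * z i) (z i)) (z i) *
      exp (-z i - levelCurve (z i ^ 2 - y i * z i) (z i)) < 0 := by
    rw [hself]
    exact mul_neg_of_neg_of_pos (mul_neg_of_pos_of_neg hz0 (levelDerivFactor_neg hy hy2 hz))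
      (exp_pos _)
  have hw := (hasDerivAt_levelCurve (z i ^ 2 - y i * z i) hz0.ne').continuousAt
  obtain ⟨t, hgt, htz : t < z i, ht1, hw1⟩ :=
    ((hasDerivAt_summand_levelCurve _ hz0.ne').eventually_nhdsLT_lt hf' |>.and <|
      eventually_mem_nhdsWithin.and <|
      ((eventually_gt_nhds (by linarith : 1 < z i)).filter_mono nhdsWithin_le_nhds).and <|
      (hw.eventually (eventually_gt_nhds (by linarith : (1 : ℝ) < _))).filter_mono
        nhdsWithin_le_nhds).exists
  have hw2 : levelCurve (z i ^ 2 - y i * z i) t ≤ y i :=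
    levelCurve_le (by linarith) htz.le (by linarith)
  exact hgt.not_ge (isMaxOn_summand_levelCurve hyz hmax i
    ⟨⟨ht1.le, by linarith [(hyz.2.1 i).2]⟩, ⟨hw1.le, by linarith⟩⟩)

end ProgramA

theorem programA_case1_general (m : ℕ) (y z : Fin m → ℝ)
    (hy : ∀ i, 1 ≤ y i ∧ y i ≤ 2) (hz : ∀ i, 1 ≤ z i ∧ z i ≤ 2)
    (hsum : ∑ i, (z i) ^ 2 = ∑ i, y i * z i)
    (hmax : ∀ y' z' : Fin m → ℝ, (∀ i, 1 ≤ y' i ∧ y' i ≤ 2) → (∀ i, 1 ≤ z' i ∧ z' i ≤ 2) →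
      (∑ i, (z' i) ^ 2 = ∑ i, y' i * z' i) →
      ∑ i, (z' i) ^ 2 * y' i * Real.exp (-(z' i) - y' i) ≤
        ∑ i, (z i) ^ 2 * y i * Real.exp (-(z i) - y i)) :
    ∀ i, (y i = 3 / 2 ∧ z i = 3 / 2) ∨ (y i < 3 / 2 ∧ 3 / 2 < z i) ∨
      (z i ≤ 3 / 2 ∧ 3 / 2 < y i) := by
  have hyz : ProgramA.Feasible y z := ⟨hy, hz, hsum⟩
  have hmax' : ∀ y' z', ProgramA.Feasible y' z' →
      ProgramA.objective y' z' ≤ ProgramA.objective y z :=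
    fun y' z' ⟨hy', hz', hsum'⟩ => hmax y' z' hy' hz' hsum'
  intro i
  have hlow := ProgramA.eq_three_halves_of_le_three_halves hyz hmax' i
  have hhigh := ProgramA.le_three_halves_of_three_halves_le hyz hmax' i
  rcases lt_or_ge (3 / 2) (y i) with hy | hy
  · exact Or.inr (Or.inr ⟨hhigh hy.le, hy⟩)
  rcases le_or_gt (z i) (3 / 2) with hz | hz
  · exact Or.inl (hlow hy hz)
  · exact Or.inr (Or.inl ⟨hy.lt_of_ne fun h => hz.not_ge (hhigh h.ge), hz⟩)

/-- Claim (case 1 of Claim A). If `(y, z)` maximises `Σ z_i²·y_i·e^{−z_i−y_i}` over all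
tuples with `1 ≤ y_i, z_i ≤ 2` and `Σ z_i² = Σ y_i·z_i`, then for every `i` either
`y_i = z_i = 3/2`, or `y_i < 3/2 < z_i`, or `z_i ≤ 3/2 < y_i`. -/
theorem programA_case1 (m : ℕ) (hm : 0 < m) (y z : Fin m → ℝ)
    (hy : ∀ i, 1 ≤ y i ∧ y i ≤ 2) (hz : ∀ i, 1 ≤ z i ∧ z i ≤ 2)
    (hsum : ∑ i, (z i) ^ 2 = ∑ i, y i * z i)
    (hmax : ∀ y' z' : Fin m → ℝ, (∀ i, 1 ≤ y' i ∧ y' i ≤ 2) → (∀ i, 1 ≤ z' i ∧ z' i ≤ 2) →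
      (∑ i, (z' i) ^ 2 = ∑ i, y' i * z' i) →
      ∑ i, (z' i) ^ 2 * y' i * Real.exp (-(z' i) - y' i) ≤
        ∑ i, (z i) ^ 2 * y i * Real.exp (-(z i) - y i)) :
    ∀ i, (y i = 3 / 2 ∧ z i = 3 / 2) ∨ (y i < 3 / 2 ∧ 3 / 2 < z i) ∨
      (z i ≤ 3 / 2 ∧ 3 / 2 < y i) :=
  programA_case1_general m y z hy hz hsum hmax
end

section
/- For all real numbers c, x, w satisfying 2 ≤ c ≤ 4, 0 ≤ x ≤ c and c ≤ w ≤ 4, one has (1/2)·e^{4−c}·c·(c − x)·(w − x)·e^{−(w−x)} ≤ 4. In particular, this quantity is at most 128e/81. -/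
/-- For reals `2 ≤ c ≤ 4`, `0 ≤ x ≤ c`, `c ≤ w ≤ 4`:
`(1/2)·e^{4−c}·c·(c−x)·(w−x)·e^{−(w−x)} ≤ 4`, and in particular it is at most `128e/81`. -/
theorem g_bound (c x w : ℝ) (hc2 : 2 ≤ c) (hc4 : c ≤ 4) (hx0 : 0 ≤ x) (hxc : x ≤ c)
    (hwc : c ≤ w) (hw4 : w ≤ 4) :
    1 / 2 * Real.exp (4 - c) * c * (c - x) * (w - x) * Real.exp (-(w - x)) ≤ 4 ∧
    1 / 2 * Real.exp (4 - c) * c * (c - x) * (w - x) * Real.exp (-(w - x)) ≤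
      128 * Real.exp 1 / 81 := by
  have hu0 : 0 ≤ c - x := by linarith
  have hut : c - x ≤ w - x := by linarith
  have ht0 : 0 ≤ w - x := le_trans hu0 hut
  set t := w - x with htdef
  -- t/2 ≤ exp((t-2)/2)
  have e1 : t / 2 ≤ Real.exp ((t - 2) / 2) := by
    have := Real.add_one_le_exp ((t - 2) / 2); linarith
  -- t^2 ≤ 4 * exp (t-2)
  have e2 : t ^ 2 ≤ 4 * Real.exp (t - 2) := by
    have h := mul_le_mul e1 e1 (by linarith) (Real.exp_nonneg _)
    rw [← Real.exp_add] at h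
    have : (t - 2) / 2 + (t - 2) / 2 = t - 2 := by ring
    rw [this] at h
    nlinarith [h]
  -- c ≤ 2 * exp (c-2)
  have e3 : c ≤ 2 * Real.exp (c - 2) := by
    have := Real.add_one_le_exp (c - 2); linarith
  have hA : (0:ℝ) < Real.exp (4 - c) := Real.exp_pos _
  have hB : (0:ℝ) < Real.exp (-t) := Real.exp_pos _
  have hC : (0:ℝ) < Real.exp (t - 2) := Real.exp_pos _
  have hD : (0:ℝ) < Real.exp (c - 2) := Real.exp_pos _
  have hc0 : (0:ℝ) < c := by linarith
  -- step 1: expr ≤ (1/2) * exp(4-c) * c * t^2 * exp(-t)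
  have s1 : (c - x) * t ≤ t ^ 2 := by nlinarith
  have step1 : 1 / 2 * Real.exp (4 - c) * c * (c - x) * t * Real.exp (-t)
      ≤ 1 / 2 * Real.exp (4 - c) * c * t ^ 2 * Real.exp (-t) := by
    have hpos : 0 ≤ 1 / 2 * Real.exp (4 - c) * c * Real.exp (-t) := by positivity
    nlinarith [mul_le_mul_of_nonneg_left s1 hpos]
  -- step 2: ≤ 2 * c * exp(2-c)
  have key2 : Real.exp (4 - c) * Real.exp (t - 2) * Real.exp (-t) = Real.exp (2 - c) := by
    rw [← Real.exp_add, ← Real.exp_add]; ring_nf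
  have hE : (0:ℝ) < Real.exp (2 - c) := Real.exp_pos _
  have step2 : 1 / 2 * Real.exp (4 - c) * c * t ^ 2 * Real.exp (-t)
      ≤ 2 * c * Real.exp (2 - c) := by
    have hpos : 0 ≤ 1 / 2 * Real.exp (4 - c) * c * Real.exp (-t) := by positivity
    have := mul_le_mul_of_nonneg_left e2 hpos
    nlinarith [key2, this]
  -- step 3: ≤ 4
  have key3 : Real.exp (c - 2) * Real.exp (2 - c) = 1 := by
    rw [← Real.exp_add]; norm_num
  have step3 : 2 * c * Real.exp (2 - c) ≤ 4 := by
    nlinarith [mul_le_mul_of_nonneg_right e3 hE.le, key3]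
  have main : 1 / 2 * Real.exp (4 - c) * c * (c - x) * t * Real.exp (-t) ≤ 4 :=
    le_trans (le_trans step1 step2) step3
  refine ⟨main, le_trans main ?_⟩
  have he : (2.7182818283:ℝ) < Real.exp 1 := Real.exp_one_gt_d9
  nlinarith [he]
end

section
/- For every graph H on k ≥ 1 vertices, the inducibility of H satisfies ind(H) ≥ k!/k^k. -/
open Filter

lemma blowup_bound (k N : ℕ) (H : SimpleGraph (Fin k)) :
    N ^ k ≤ maxInducedCount H (k * N) := by
  classical
  set π : Fin (k*N) → Fin k := fun x => (finProdFinEquiv.symm x).1 with hπ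
  set G' : SimpleGraph (Fin (k*N)) := H.comap π with hG'
  set ι : (Fin k → Fin N) → Fin k → Fin (k*N) := fun f a => finProdFinEquiv (a, f a) with hι
  have hπι : ∀ f a, π (ι f a) = a := fun f a => by simp only [hπ, hι, Equiv.symm_apply_apply]
  set φ : (Fin k → Fin N) → Finset (Fin (k*N)) := fun f => Finset.image (ι f) Finset.univ with hφ
  have hmem : ∀ f a, ι f a ∈ φ f := fun f a => Finset.mem_image_of_mem _ (Finset.mem_univ a)
  have hiso : ∀ f, Nonempty (G'.induce ((φ f : Finset _) : Set (Fin (k*N))) ≃g H) := by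
    intro f
    refine ⟨⟨⟨fun x => π x.1, fun a => ⟨ι f a, hmem f a⟩, ?_, fun a => hπι f a⟩, ?_⟩⟩
    · rintro ⟨x, hx⟩
      obtain ⟨a, -, ha⟩ := Finset.mem_image.1 (Finset.mem_coe.1 hx)
      apply Subtype.ext
      show ι f (π x) = x
      subst ha
      rw [hπι]
    · intro a b
      exact Iff.rfl
  have hinj : Function.Injective
      (fun f : Fin k → Fin N => (⟨φ f, hiso f⟩ :
        {S : Finset (Fin (k*N)) // Nonempty (G'.induce (S : Set (Fin (k*N))) ≃g H)})) := by
    intro f g h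
    have hfg : φ f = φ g := congrArg Subtype.val h
    funext a
    have h1 : ι f a ∈ φ g := hfg ▸ hmem f a
    obtain ⟨b, -, hb⟩ := Finset.mem_image.1 h1
    have hba : b = a := by
      have := congrArg π hb
      rwa [hπι, hπι] at this
    subst hba
    have := finProdFinEquiv.injective hb
    exact (Prod.mk.injEq _ _ _ _ ▸ this).2.symm
  have hcard : N ^ k ≤ inducedCount G' H := by
    calc N ^ k = Nat.card (Fin k → Fin N) := by
          simp [Nat.card_eq_fintype_card]
      _ ≤ Nat.card {S : Finset (Fin (k*N)) // Nonempty (G'.induce (S : Set (Fin (k*N))) ≃g H)} :=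
          Nat.card_le_card_of_injective _ hinj
      _ = inducedCount G' H := rfl
  have hbdd : BddAbove (Set.range fun G : SimpleGraph (Fin (k*N)) => inducedCount G H) := by
    refine ⟨Nat.card (Finset (Fin (k*N))), ?_⟩
    rintro x ⟨G, rfl⟩
    exact le_trans (Set.ncard_le_ncard (Set.subset_univ _) Set.finite_univ)
      (le_of_eq (Set.ncard_univ _))
  exact hcard.trans (le_ciSup hbdd G')

lemma limit_lemma (k : ℕ) (hk : 1 ≤ k) :
    Tendsto (fun N : ℕ => ((N : ℝ) ^ k) / (((k * N).choose k : ℕ) : ℝ)) atTop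
      (nhds ((Nat.factorial k : ℝ) / (k : ℝ) ^ k)) := by
  have hk0 : (k : ℝ) ≠ 0 := Nat.cast_ne_zero.2 (by omega)
  have heq : ∀ᶠ N : ℕ in atTop, ((N:ℝ)^k) / (((k*N).choose k : ℕ) : ℝ) =
      (Nat.factorial k : ℝ) * ∏ i ∈ Finset.range k, (N:ℝ)/((k:ℝ)*N - i) := by
    filter_upwards [eventually_ge_atTop 1] with N hN
    have hle : ∀ i ∈ Finset.range k, i ≤ k * N := fun i hi => by
      have h := Finset.mem_range.1 hi
      calc i ≤ k := Nat.le_of_lt h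
        _ ≤ k * N := Nat.le_mul_of_pos_right k (by omega)
    have hdesc : (((k*N).descFactorial k : ℕ) : ℝ) = ∏ i ∈ Finset.range k, ((k:ℝ)*N - i) := by
      rw [Nat.descFactorial_eq_prod_range, Nat.cast_prod]
      refine Finset.prod_congr rfl fun i hi => ?_
      rw [Nat.cast_sub (hle i hi)]
      push_cast
      ring
    have h2 : (Nat.factorial k : ℝ) * (((k*N).choose k : ℕ) : ℝ)
        = ∏ i ∈ Finset.range k, ((k:ℝ)*N - i) := by
      rw [← hdesc]
      exact_mod_cast (Nat.descFactorial_eq_factorial_mul_choose (k*N) k).symm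
    have hch : (((k*N).choose k : ℕ):ℝ)
        = (∏ i ∈ Finset.range k, ((k:ℝ)*N - i)) / (Nat.factorial k) := by
      rw [eq_div_iff (by exact_mod_cast (Nat.factorial_pos k).ne'), mul_comm]
      exact h2
    rw [hch, Finset.prod_div_distrib, Finset.prod_const, Finset.card_range,
      div_div_eq_mul_div]
    ring
  have hprod : Tendsto (fun N : ℕ => ∏ i ∈ Finset.range k, (N:ℝ)/((k:ℝ)*N - i)) atTop
      (nhds (∏ _i ∈ Finset.range k, (1:ℝ)/k)) := by
    refine tendsto_finset_prod _ fun i _hi => ?_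
    have h0 : Tendsto (fun N : ℕ => (1:ℝ)/((k:ℝ) - i/N)) atTop (nhds (1/k)) := by
      refine Tendsto.div tendsto_const_nhds ?_ hk0
      simpa using tendsto_const_nhds.sub (tendsto_const_div_atTop_nhds_zero_nat (i:ℝ))
    refine Tendsto.congr' ?_ h0
    filter_upwards [eventually_ge_atTop (i+1)] with N hN
    have hN0 : (0:ℝ) < N := by
      have : 0 < N := by omega
      exact_mod_cast this
    have hrw : (k:ℝ) - i/N = ((k:ℝ)*N - i)/N := by field_simp
    rw [hrw, one_div_div]
  have hg := hprod.const_mul ((Nat.factorial k : ℝ))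
  have hval : (Nat.factorial k:ℝ) * ∏ _i ∈ Finset.range k, (1:ℝ)/(k:ℝ)
      = (Nat.factorial k:ℝ)/(k:ℝ)^k := by
    rw [Finset.prod_const, Finset.card_range, div_pow, one_pow]
    ring
  rw [hval] at hg
  exact Tendsto.congr' (heq.mono fun N h => h.symm) hg

/-- For every graph `H` on `k ≥ 1` vertices, the inducibility of `H`, i.e. the limit of
`I_H(n)/C(n,k)`, is at least `k!/k^k`. -/
theorem inducibility_lower (k : ℕ) (hk : 1 ≤ k) (H : SimpleGraph (Fin k)) (L : ℝ)
    (hL : Tendsto (fun n : ℕ => (maxInducedCount H n : ℝ) / (n.choose k : ℝ))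
      atTop (nhds L)) :
    (Nat.factorial k : ℝ) / (k : ℝ) ^ k ≤ L := by
  have hsub : Tendsto (fun N : ℕ => k * N) atTop atTop :=
    tendsto_atTop_atTop.2 fun b =>
      ⟨b, fun n hn => le_trans hn (Nat.le_mul_of_pos_left n (by omega))⟩
  have h1 : Tendsto (fun N : ℕ => (maxInducedCount H (k*N) : ℝ) / ((k*N).choose k : ℝ))
      atTop (nhds L) := hL.comp hsub
  have h2 := limit_lemma k hk
  refine le_of_tendsto_of_tendsto h2 h1 ?_
  filter_upwards [eventually_ge_atTop 1] with N hN
  have hc : (0:ℝ) < (((k*N).choose k : ℕ) : ℝ) := by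
    have : 0 < (k*N).choose k := Nat.choose_pos (Nat.le_mul_of_pos_right k (by omega))
    exact_mod_cast this
  have hb : ((N:ℝ))^k ≤ (maxInducedCount H (k*N) : ℝ) := by
    exact_mod_cast blowup_bound k N H
  gcongr
end
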